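/- arXiv:2110.07874 — 3 statements merged into one kernel-verified Lean document; each statement's English description precedes it below -/
import Mathlib

section
/- Let g and v be positive integers and K a set of positive integers. If there exists a pairwise balanced design PBD(v,K) such that for every k ∈ K there exists a Kirkman frame of type (g;2g)^k, then there exists a Kirkman frame of type (g;2g)^v. -/
/-- A parallel class on point set `X`: a set of blocks containing each point of `X`
exactly once. -/
def IsParallelClassOn (X : Finset ℕ) (P : Finset (Finset ℕ)) : Prop :=
  (∀ b ∈ P, b ⊆ X) ∧ ∀ x ∈ X, ∃! b, b ∈ P ∧ x ∈ b

/-- A Steiner triple system on point set `V` with block set `B`: blocks are 3-element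
subsets of `V` and every pair of distinct points lies in exactly one block. -/
def IsSTS (V : Finset ℕ) (B : Finset (Finset ℕ)) : Prop :=
  (∀ b ∈ B, b ⊆ V ∧ b.card = 3) ∧
  ∀ x ∈ V, ∀ y ∈ V, x ≠ y → ∃! b, b ∈ B ∧ x ∈ b ∧ y ∈ b

/-- A resolution of the block set `B` into parallel classes on `X`:
every block lies in exactly one class. -/
def IsResolution (X : Finset ℕ) (B : Finset (Finset ℕ))
    (R : Finset (Finset (Finset ℕ))) : Prop :=
  (∀ P ∈ R, P ⊆ B ∧ IsParallelClassOn X P) ∧ ∀ b ∈ B, ∃! P, P ∈ R ∧ b ∈ P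

/-- A Kirkman triple system: a resolvable Steiner triple system. -/
def IsKTS (V : Finset ℕ) (B : Finset (Finset ℕ)) : Prop :=
  IsSTS V B ∧ ∃ R : Finset (Finset (Finset ℕ)), IsResolution V B R

/-- There exists a KTS of order `v` containing an STS of order `u` as a subdesign. -/
def ExistsKTSSubSTS (v u : ℕ) : Prop :=
  ∃ (V U : Finset ℕ) (B A : Finset (Finset ℕ)),
    IsKTS V B ∧ IsSTS U A ∧ U ⊆ V ∧ A ⊆ B ∧ V.card = v ∧ U.card = u

/-- A uniform 3-GDD of type g^u with groups `G i` and block set `B`: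
groups are disjoint of size `g`, blocks are triples meeting each group at most once,
and every pair of points from distinct groups lies in exactly one block. -/
def IsGDD (g u : ℕ) (G : Fin u → Finset ℕ) (B : Finset (Finset ℕ)) : Prop :=
  (∀ i, (G i).card = g) ∧
  (∀ i j, i ≠ j → Disjoint (G i) (G j)) ∧
  (∀ b ∈ B, b ⊆ Finset.univ.biUnion G ∧ b.card = 3 ∧ ∀ i, (b ∩ G i).card ≤ 1) ∧
  ∀ x y : ℕ, (∃ i j, i ≠ j ∧ x ∈ G i ∧ y ∈ G j) → ∃! b, b ∈ B ∧ x ∈ b ∧ y ∈ b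

/-- A Kirkman frame of type h^u: a 3-GDD of type h^u whose blocks resolve into
partial parallel classes, each a parallel class on the complement of some group. -/
def IsKirkmanFrame (h u : ℕ) (G : Fin u → Finset ℕ) (B : Finset (Finset ℕ)) : Prop :=
  IsGDD h u G B ∧
  ∃ R : Finset (Finset (Finset ℕ)),
    (∀ P ∈ R, P ⊆ B ∧ ∃ i, IsParallelClassOn (Finset.univ.biUnion G \ G i) P) ∧
    ∀ b ∈ B, ∃! P, P ∈ R ∧ b ∈ P

/-- There exists a Kirkman frame of type (g;h)^u: a Kirkman frame of type h^u with
groups `G i` containing as a subdesign a 3-GDD of type g^u with groups `W i ⊆ G i`. -/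
def ExistsFrameSubGDD (g h u : ℕ) : Prop :=
  ∃ (G W : Fin u → Finset ℕ) (B A : Finset (Finset ℕ)),
    IsKirkmanFrame h u G B ∧ IsGDD g u W A ∧ (∀ i, W i ⊆ G i) ∧ A ⊆ B

/-- There exists a resolvable transversal design RTD(3,m): a resolvable 3-GDD of
type m^3. -/
def ExistsRTD3 (m : ℕ) : Prop :=
  ∃ (G : Fin 3 → Finset ℕ) (B : Finset (Finset ℕ)),
    IsGDD m 3 G B ∧
    ∃ R : Finset (Finset (Finset ℕ)), IsResolution (Finset.univ.biUnion G) B R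

/-- A pairwise balanced design PBD(v,K) on point set `X` with block set `B`. -/
def IsPBD (v : ℕ) (K : Set ℕ) (X : Finset ℕ) (B : Finset (Finset ℕ)) : Prop :=
  X.card = v ∧ (∀ b ∈ B, b ⊆ X ∧ b.card ∈ K) ∧
  ∀ x ∈ X, ∀ y ∈ X, x ≠ y → ∃! b, b ∈ B ∧ x ∈ b ∧ y ∈ b

/-- The block set `B` has chromatic index at most `k`: it can be partitioned into at
most `k` partial parallel classes (sets of pairwise disjoint blocks). -/
def ChromIndexLE (B : Finset (Finset ℕ)) (k : ℕ) : Prop :=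
  ∃ R : Finset (Finset (Finset ℕ)), R.card ≤ k ∧
    (∀ P ∈ R, P ⊆ B ∧ ∀ b ∈ P, ∀ c ∈ P, b ≠ c → Disjoint b c) ∧
    ∀ b ∈ B, ∃ P ∈ R, b ∈ P

open scoped Classical


lemma exists_embed (g : ℕ) (W Gr : Finset ℕ) (hWG : W ⊆ Gr) (hW : W.card = g)
    (hG : Gr.card = 2 * g) :
    ∃ f : ℕ → ℕ, Set.InjOn f ↑Gr ∧ Finset.image f W = Finset.range g ∧
      Finset.image f Gr = Finset.range (2 * g) := by
  classical
  have h1 : (Gr \ W).card = (Finset.range (2*g) \ Finset.range g).card := by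
    rw [Finset.card_sdiff_of_subset hWG, Finset.card_sdiff_of_subset (Finset.range_subset_range.2 (by omega)),
      Finset.card_range, Finset.card_range, hW, hG]
  have h0 : W.card = (Finset.range g).card := by rw [hW, Finset.card_range]
  set e1 := Finset.equivOfCardEq h0 with he1
  set e2 := Finset.equivOfCardEq h1 with he2
  set f : ℕ → ℕ := fun p =>
    if hp : p ∈ W then (e1 ⟨p, hp⟩ : ℕ)
    else if hp2 : p ∈ Gr \ W then (e2 ⟨p, hp2⟩ : ℕ) else 0 with hf
  have fW : ∀ p (hp : p ∈ W), f p = (e1 ⟨p, hp⟩ : ℕ) := by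
    intro p hp; simp [hf, hp]
  have fD : ∀ p (hp : p ∈ Gr \ W), f p = (e2 ⟨p, hp⟩ : ℕ) := by
    intro p hp
    have : p ∉ W := (Finset.mem_sdiff.1 hp).2
    have hpG : p ∈ Gr := (Finset.mem_sdiff.1 hp).1
    simp only [hf, dif_neg this, dif_pos hp]
  have fWmem : ∀ p ∈ W, f p ∈ Finset.range g := by
    intro p hp; rw [fW p hp]; exact (e1 ⟨p, hp⟩).2
  have fDmem : ∀ p ∈ Gr \ W, f p ∈ Finset.range (2*g) \ Finset.range g := by
    intro p hp; rw [fD p hp]; exact (e2 ⟨p, hp⟩).2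
  have imW : Finset.image f W = Finset.range g := by
    apply Finset.Subset.antisymm
    · intro t ht
      obtain ⟨p, hp, rfl⟩ := Finset.mem_image.1 ht
      exact fWmem p hp
    · intro t ht
      refine Finset.mem_image.2 ⟨(e1.symm ⟨t, ht⟩ : ℕ), (e1.symm ⟨t, ht⟩).2, ?_⟩
      rw [fW _ (e1.symm ⟨t, ht⟩).2]
      have : e1 ⟨(e1.symm ⟨t, ht⟩ : ℕ), (e1.symm ⟨t, ht⟩).2⟩ = ⟨t, ht⟩ := by
        rw [Subtype.coe_eta]; exact e1.apply_symm_apply _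
      rw [this]
  have imD : Finset.image f (Gr \ W) = Finset.range (2*g) \ Finset.range g := by
    apply Finset.Subset.antisymm
    · intro t ht
      obtain ⟨p, hp, rfl⟩ := Finset.mem_image.1 ht
      exact fDmem p hp
    · intro t ht
      refine Finset.mem_image.2 ⟨(e2.symm ⟨t, ht⟩ : ℕ), (e2.symm ⟨t, ht⟩).2, ?_⟩
      rw [fD _ (e2.symm ⟨t, ht⟩).2]
      have : e2 ⟨(e2.symm ⟨t, ht⟩ : ℕ), (e2.symm ⟨t, ht⟩).2⟩ = ⟨t, ht⟩ := by
        rw [Subtype.coe_eta]; exact e2.apply_symm_apply _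
      rw [this]
  refine ⟨f, ?_, imW, ?_⟩
  · intro p hp q hq hpq
    have hp' : p ∈ Gr := hp
    have hq' : q ∈ Gr := hq
    by_cases hpW : p ∈ W <;> by_cases hqW : q ∈ W
    · have := (fW p hpW) ▸ (fW q hqW) ▸ hpq
      have : (e1 ⟨p, hpW⟩ : ℕ) = (e1 ⟨q, hqW⟩ : ℕ) := by
        rw [← fW p hpW, ← fW q hqW]; exact hpq
      exact congrArg Subtype.val (e1.injective (Subtype.ext this))
    · exfalso
      have h1' := fWmem p hpW
      have h2' := fDmem q (Finset.mem_sdiff.2 ⟨hq', hqW⟩)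
      rw [hpq] at h1'
      exact (Finset.mem_sdiff.1 h2').2 h1'
    · exfalso
      have h1' := fWmem q hqW
      have h2' := fDmem p (Finset.mem_sdiff.2 ⟨hp', hpW⟩)
      rw [← hpq] at h1'
      exact (Finset.mem_sdiff.1 h2').2 h1'
    · have hpD : p ∈ Gr \ W := Finset.mem_sdiff.2 ⟨hp', hpW⟩
      have hqD : q ∈ Gr \ W := Finset.mem_sdiff.2 ⟨hq', hqW⟩
      have : (e2 ⟨p, hpD⟩ : ℕ) = (e2 ⟨q, hqD⟩ : ℕ) := by
        rw [← fD p hpD, ← fD q hqD]; exact hpq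
      exact congrArg Subtype.val (e2.injective (Subtype.ext this))
  · have : Gr = W ∪ (Gr \ W) := (Finset.union_sdiff_of_subset hWG).symm
    rw [this, Finset.image_union, imW, imD,
      Finset.union_sdiff_of_subset (Finset.range_subset_range.2 (by omega))]

lemma par_index_unique {u : ℕ} {G : Fin u → Finset ℕ} {P : Finset (Finset ℕ)}
    (hne : ∀ j, (G j).Nonempty) (hdisj : ∀ i j, i ≠ j → Disjoint (G i) (G j))
    {i j : Fin u} (hij : i ≠ j)
    (hi : IsParallelClassOn (Finset.univ.biUnion G \ G i) P)
    (hj : IsParallelClassOn (Finset.univ.biUnion G \ G j) P) : False := by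
  obtain ⟨p, hp⟩ := hne i
  have hpV : p ∈ Finset.univ.biUnion G :=
    Finset.mem_biUnion.2 ⟨i, Finset.mem_univ i, hp⟩
  have hpj : p ∈ Finset.univ.biUnion G \ G j :=
    Finset.mem_sdiff.2 ⟨hpV, fun hpGj => (Finset.disjoint_left.1 (hdisj i j hij)) hp hpGj⟩
  obtain ⟨bl, ⟨hblP, hpbl⟩, -⟩ := hj.2 p hpj
  have := hi.1 bl hblP hpbl
  exact (Finset.mem_sdiff.1 this).2 hp

lemma frame_class_count (g u : ℕ) (hg : 0 < g) (hu : 2 ≤ u)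
    (G : Fin u → Finset ℕ) (B : Finset (Finset ℕ)) (R : Finset (Finset (Finset ℕ)))
    (hGDD : IsGDD (2*g) u G B)
    (hR1 : ∀ P ∈ R, P ⊆ B ∧ ∃ i, IsParallelClassOn (Finset.univ.biUnion G \ G i) P)
    (hR2 : ∀ bl ∈ B, ∃! P, P ∈ R ∧ bl ∈ P)
    (i : Fin u) :
    (R.filter (fun P => IsParallelClassOn (Finset.univ.biUnion G \ G i) P)).card = g := by
  classical
  obtain ⟨hcardG, hdisj, hblocks, hpairs⟩ := hGDD
  set V := Finset.univ.biUnion G with hV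
  have hne : ∀ j, (G j).Nonempty := fun j =>
    Finset.card_pos.1 (by rw [hcardG j]; omega)
  have hGV : ∀ j, G j ⊆ V := fun j => by
    intro p hp; exact Finset.mem_biUnion.2 ⟨j, Finset.mem_univ j, hp⟩
  have hVcard : V.card = 2 * g * u := by
    rw [hV, Finset.card_biUnion (fun a _ b _ hab => hdisj a b hab)]
    rw [Finset.sum_congr rfl (fun j _ => hcardG j), Finset.sum_const,
      Finset.card_univ, Fintype.card_fin, smul_eq_mul]
    ring
  -- the key per-group count
  have key : ∀ j : Fin u,
      (R.filter (fun P => ¬ IsParallelClassOn (V \ G j) P)).card * 2 = 2 * g * (u - 1) := by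
    intro j
    obtain ⟨p, hp⟩ := hne j
    set Bp := B.filter (fun bl => p ∈ bl) with hBp
    -- blocks through p biject with classes not missing j
    have hchoice : ∀ P ∈ R.filter (fun P => ¬ IsParallelClassOn (V \ G j) P),
        ∃ bl, (bl ∈ P ∧ p ∈ bl) ∧ ∀ bl', bl' ∈ P ∧ p ∈ bl' → bl' = bl := by
      intro P hP
      rw [Finset.mem_filter] at hP
      obtain ⟨i', hPar⟩ := (hR1 P hP.1).2
      have hij : i' ≠ j := by rintro rfl; exact hP.2 hPar
      have hpm : p ∈ V \ G i' := Finset.mem_sdiff.2 ⟨hGV j hp,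
        fun h => (Finset.disjoint_left.1 (hdisj i' j hij)) h hp⟩
      obtain ⟨bl, hbl, huniq⟩ := hPar.2 p hpm
      exact ⟨bl, hbl, huniq⟩
    choose F hF using hchoice
    have hcards : (R.filter (fun P => ¬ IsParallelClassOn (V \ G j) P)).card = Bp.card := by
      apply Finset.card_bij F
      · intro P hP
        rw [Finset.mem_filter] at hP ⊢
        exact ⟨(hR1 P hP.1).1 (hF P (by rw [Finset.mem_filter]; exact hP)).1.1,
          (hF P (by rw [Finset.mem_filter]; exact hP)).1.2⟩
      · intro P hP Q hQ hFPQ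
        have h1 := hF P hP
        have h2 := hF Q hQ
        have hPR : P ∈ R := (Finset.mem_filter.1 hP).1
        have hQR : Q ∈ R := (Finset.mem_filter.1 hQ).1
        have hblB : F P hP ∈ B := (hR1 P hPR).1 h1.1.1
        obtain ⟨P', -, hPu⟩ := hR2 _ hblB
        have e1 := hPu P ⟨hPR, h1.1.1⟩
        have e2 := hPu Q ⟨hQR, by rw [hFPQ]; exact h2.1.1⟩
        rw [e1, e2]
      · intro bl hbl
        rw [hBp, Finset.mem_filter] at hbl
        obtain ⟨P, ⟨hPR, hblP⟩, -⟩ := hR2 bl hbl.1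
        have hPmem : P ∈ R.filter (fun P => ¬ IsParallelClassOn (V \ G j) P) := by
          rw [Finset.mem_filter]
          refine ⟨hPR, fun hPar => ?_⟩
          have := hPar.1 bl hblP hbl.2
          exact (Finset.mem_sdiff.1 this).2 hp
        exact ⟨P, hPmem, ((hF P hPmem).2 bl ⟨hblP, hbl.2⟩).symm⟩
    -- blocks through p double count
    have hcover : V \ G j = Bp.biUnion (fun bl => bl.erase p) := by
      ext q
      constructor
      · intro hq
        rw [Finset.mem_sdiff] at hq
        obtain ⟨i', -, hqG⟩ := Finset.mem_biUnion.1 hq.1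
        have hij : i' ≠ j := fun h => hq.2 (h ▸ hqG)
        obtain ⟨bl, ⟨hblB, hpbl, hqbl⟩, -⟩ := hpairs p q ⟨j, i', fun h => hij h.symm, hp, hqG⟩
        refine Finset.mem_biUnion.2 ⟨bl, ?_, ?_⟩
        · rw [hBp, Finset.mem_filter]; exact ⟨hblB, hpbl⟩
        · exact Finset.mem_erase.2 ⟨fun h => hq.2 (h ▸ hp), hqbl⟩
      · intro hq
        obtain ⟨bl, hblBp, hqbl⟩ := Finset.mem_biUnion.1 hq
        rw [hBp, Finset.mem_filter] at hblBp
        rw [Finset.mem_erase] at hqbl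
        obtain ⟨hblV, -, hcap⟩ := hblocks bl hblBp.1
        refine Finset.mem_sdiff.2 ⟨hblV hqbl.2, fun hqGj => ?_⟩
        have : 1 < (bl ∩ G j).card := Finset.one_lt_card.2
          ⟨p, Finset.mem_inter.2 ⟨hblBp.2, hp⟩, q, Finset.mem_inter.2 ⟨hqbl.2, hqGj⟩, fun h => hqbl.1 h.symm⟩
        have := hcap j
        omega
    have hdisjer : ∀ bl ∈ Bp, ∀ bl' ∈ Bp, bl ≠ bl' → Disjoint (bl.erase p) (bl'.erase p) := by
      intro bl hbl bl' hbl' hne'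
      rw [Finset.disjoint_left]
      intro q hq hq'
      rw [hBp, Finset.mem_filter] at hbl hbl'
      rw [Finset.mem_erase] at hq hq'
      have hqV : q ∈ V \ G j := by
        rw [hcover]
        exact Finset.mem_biUnion.2 ⟨bl, by rw [hBp, Finset.mem_filter]; exact hbl, Finset.mem_erase.2 hq⟩
      rw [Finset.mem_sdiff] at hqV
      obtain ⟨i', -, hqG⟩ := Finset.mem_biUnion.1 hqV.1
      have hij : i' ≠ j := fun h => hqV.2 (h ▸ hqG)
      obtain ⟨c, -, hcu⟩ := hpairs p q ⟨j, i', fun h => hij h.symm, hp, hqG⟩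
      have e1 := hcu bl ⟨hbl.1, hbl.2, hq.2⟩
      have e2 := hcu bl' ⟨hbl'.1, hbl'.2, hq'.2⟩
      exact hne' (e1.trans e2.symm)
    have hercard : ∀ bl ∈ Bp, (bl.erase p).card = 2 := by
      intro bl hbl
      rw [hBp, Finset.mem_filter] at hbl
      rw [Finset.card_erase_of_mem hbl.2, (hblocks bl hbl.1).2.1]
    have hsum : (V \ G j).card = Bp.card * 2 := by
      rw [hcover, Finset.card_biUnion hdisjer, Finset.sum_congr rfl hercard,
        Finset.sum_const, smul_eq_mul]
    have hVGj : (V \ G j).card = 2 * g * u - 2 * g := by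
      rw [Finset.card_sdiff_of_subset (hGV j), hVcard, hcardG j]
    have harith : 2 * g * u - 2 * g = 2 * g * (u - 1) := by
      rw [Nat.mul_sub]; ring_nf
    rw [hcards, ← hsum, hVGj, harith]
  -- uniqueness of missing index gives fiberwise decomposition
  have hfilter_not : ∀ j : Fin u,
      (R.filter (fun P => IsParallelClassOn (V \ G j) P)).card
        + (R.filter (fun P => ¬ IsParallelClassOn (V \ G j) P)).card = R.card :=
    fun j => Finset.card_filter_add_card_filter_not _
  have hueq : ∀ j j' : Fin u,
      (R.filter (fun P => IsParallelClassOn (V \ G j) P)).card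
        = (R.filter (fun P => IsParallelClassOn (V \ G j') P)).card := by
    intro j j'
    have k1 := key j
    have k2 := key j'
    have f1 := hfilter_not j
    have f2 := hfilter_not j'
    omega
  -- sum over fibers
  set m : Finset (Finset ℕ) → Fin u := fun P =>
    if hP : ∃ i', IsParallelClassOn (V \ G i') P then hP.choose else ⟨0, by omega⟩ with hm
  have hmspec : ∀ P ∈ R, IsParallelClassOn (V \ G (m P)) P := by
    intro P hP
    obtain ⟨i', hi'⟩ := (hR1 P hP).2
    have hex : ∃ i', IsParallelClassOn (V \ G i') P := ⟨i', hi'⟩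
    rw [hm]; simp only [dif_pos hex]
    exact hex.choose_spec
  have hRsum : R.card = ∑ j : Fin u,
      (R.filter (fun P => IsParallelClassOn (V \ G j) P)).card := by
    rw [Finset.card_eq_sum_card_fiberwise (f := m) (t := Finset.univ)
      (fun P _ => Finset.mem_univ _)]
    apply Finset.sum_congr rfl
    intro j _
    congr 1
    apply Finset.filter_congr
    intro P hP
    constructor
    · intro hmj; exact hmj ▸ hmspec P hP
    · intro hPar
      by_contra hne'
      exact par_index_unique hne hdisj hne' (hmspec P hP) hPar
  have hRu : R.card = u * (R.filter (fun P => IsParallelClassOn (V \ G i) P)).card := by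
    rw [hRsum, Finset.sum_congr rfl (fun j _ => hueq j i), Finset.sum_const,
      Finset.card_univ, Fintype.card_fin, smul_eq_mul]
  -- final arithmetic
  have k := key i
  have f := hfilter_not i
  set ri := (R.filter (fun P => IsParallelClassOn (V \ G i) P)).card with hri0
  have hri : (u * ri - ri) * 2 = 2 * g * (u - 1) := by omega
  have h1 : u * ri - ri = (u - 1) * ri := (Nat.sub_one_mul u ri).symm
  rw [h1] at hri
  have h2 : (u - 1) * (ri * 2) = (u - 1) * (2 * g) := by
    calc (u - 1) * (ri * 2) = (u - 1) * ri * 2 := by ring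
    _ = 2 * g * (u - 1) := hri
    _ = (u - 1) * (2 * g) := by ring
  have h3 : ri * 2 = 2 * g := Nat.eq_of_mul_eq_mul_left (by omega) h2
  omega

lemma enc_div {g : ℕ} (hg : 0 < g) {x p : ℕ}
    (hp : p ∈ (Finset.range (2*g)).image (fun t => 2*g*x + t)) : p / (2*g) = x := by
  obtain ⟨t, ht, rfl⟩ := Finset.mem_image.1 hp
  rw [Nat.mul_add_div (by omega)]
  rw [Nat.div_eq_of_lt (Finset.mem_range.1 ht)]
  omega

lemma image_eq_of_injOn {f : ℕ → ℕ} {s : Set ℕ} {b c : Finset ℕ} (hf : Set.InjOn f s)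
    (hb : ↑b ⊆ s) (hc : ↑c ⊆ s) (h : b.image f = c.image f) : b = c := by
  ext a
  constructor
  · intro ha
    have : f a ∈ c.image f := h ▸ Finset.mem_image_of_mem f ha
    obtain ⟨a', ha', he⟩ := Finset.mem_image.1 this
    exact hf (hc ha') (hb ha) he ▸ ha'
  · intro ha
    have : f a ∈ b.image f := h.symm ▸ Finset.mem_image_of_mem f ha
    obtain ⟨a', ha', he⟩ := Finset.mem_image.1 this
    exact hf (hb ha') (hc ha) he ▸ ha'

/-- PBD-closure: if there is a PBD(v,K) and a Kirkman frame of type (g;2g)^k for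
every k ∈ K, then there is a Kirkman frame of type (g;2g)^v. -/
theorem stmt5 (g v : ℕ) (K : Set ℕ) (hg : 0 < g) (hv : 0 < v)
    (hK : ∀ k ∈ K, 0 < k)
    (hPBD : ∃ (X : Finset ℕ) (B : Finset (Finset ℕ)), IsPBD v K X B)
    (hfr : ∀ k ∈ K, ExistsFrameSubGDD g (2 * g) k) :
    ExistsFrameSubGDD g (2 * g) v := by
  classical
  obtain ⟨X, Bb, hXcard, hXblocks, hXpairs⟩ := hPBD
  by_cases hv1 : v = 1
  · subst hv1
    refine ⟨fun _ => Finset.range (2*g), fun _ => Finset.range g, ∅, ∅, ⟨?_, ∅, ?_, ?_⟩, ?_, ?_, ?_⟩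
    · exact ⟨fun _ => Finset.card_range _,
        fun i j hij => absurd (Subsingleton.elim i j) hij,
        fun b hb => absurd hb (Finset.notMem_empty b),
        fun x y ⟨i, j, hij, _⟩ => absurd (Subsingleton.elim i j) hij⟩
    · exact fun P hP => absurd hP (Finset.notMem_empty P)
    · exact fun b hb => absurd hb (Finset.notMem_empty b)
    · exact ⟨fun _ => Finset.card_range _,
        fun i j hij => absurd (Subsingleton.elim i j) hij,
        fun b hb => absurd hb (Finset.notMem_empty b),
        fun x y ⟨i, j, hij, _⟩ => absurd (Subsingleton.elim i j) hij⟩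
    · exact fun _ => Finset.range_subset_range.2 (by omega)
    · exact Finset.empty_subset _
  have hv2 : 2 ≤ v := by omega
  -- choose frames for every block
  have key : ∀ b : Finset ℕ, ∃ (Gf Wf : Fin b.card → Finset ℕ)
      (Bl A : Finset (Finset ℕ)) (R : Finset (Finset (Finset ℕ))),
      b ∈ Bb → (IsGDD (2*g) b.card Gf Bl ∧ IsGDD g b.card Wf A ∧
        (∀ i, Wf i ⊆ Gf i) ∧ A ⊆ Bl ∧
        (∀ P ∈ R, P ⊆ Bl ∧ ∃ i, IsParallelClassOn (Finset.univ.biUnion Gf \ Gf i) P) ∧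
        (∀ bl ∈ Bl, ∃! P, P ∈ R ∧ bl ∈ P)) := by
    intro b
    by_cases hb : b ∈ Bb
    · obtain ⟨G, W, B', A, ⟨hGDD, R, hR1, hR2⟩, hGDD2, hWG, hAB⟩ :=
        hfr b.card (hXblocks b hb).2
      exact ⟨G, W, B', A, R, fun _ => ⟨hGDD, hGDD2, hWG, hAB, hR1, hR2⟩⟩
    · exact ⟨fun _ => ∅, fun _ => ∅, ∅, ∅, ∅, fun h => absurd h hb⟩
  choose Gf Wf Bl Af Rf hkey using key
  -- embeddings of groups into range (2*g)
  have hemb : ∀ (b : Finset ℕ) (i : Fin b.card), ∃ f : ℕ → ℕ, b ∈ Bb →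
      (Set.InjOn f ↑(Gf b i) ∧ (Wf b i).image f = Finset.range g ∧
        (Gf b i).image f = Finset.range (2*g)) := by
    intro b i
    by_cases hb : b ∈ Bb
    · obtain ⟨f, hf⟩ := exists_embed g (Wf b i) (Gf b i)
        ((hkey b hb).2.2.1 i) ((hkey b hb).2.1.1 i) ((hkey b hb).1.1 i)
      exact ⟨f, fun _ => hf⟩
    · exact ⟨id, fun h => absurd h hb⟩
  choose ff hff using hemb
  -- enumeration of block points
  set σ : (b : Finset ℕ) → Fin b.card → ℕ := fun b i => ((b.orderIsoOfFin rfl) i : ℕ) with hσ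
  have hσmem : ∀ b (i : Fin b.card), σ b i ∈ b := fun b i => ((b.orderIsoOfFin rfl) i).2
  have hσinj : ∀ b (i j : Fin b.card), σ b i = σ b j → i = j := by
    intro b i j h
    exact (b.orderIsoOfFin rfl).injective (Subtype.ext h)
  have hσsurj : ∀ b, ∀ x ∈ b, ∃ i, σ b i = x := by
    intro b x hx
    exact ⟨(b.orderIsoOfFin rfl).symm ⟨x, hx⟩,
      congrArg Subtype.val ((b.orderIsoOfFin rfl).apply_symm_apply ⟨x, hx⟩)⟩
  -- the inflation map
  set ι : Finset ℕ → ℕ → ℕ := fun b p =>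
    if hp : ∃ i, p ∈ Gf b i then 2*g*(σ b hp.choose) + ff b hp.choose p else 0 with hι0
  have hι : ∀ b ∈ Bb, ∀ (i : Fin b.card), ∀ p ∈ Gf b i,
      ι b p = 2*g*(σ b i) + ff b i p := by
    intro b hb i p hp
    have hex : ∃ i, p ∈ Gf b i := ⟨i, hp⟩
    have : hex.choose = i := by
      by_contra hne
      exact (Finset.disjoint_left.1 ((hkey b hb).1.2.1 _ _ hne)) hex.choose_spec hp
    rw [hι0]
    simp only [dif_pos hex, this]
  -- target groups
  set T : ℕ → Finset ℕ := fun x => (Finset.range (2*g)).image (fun t => 2*g*x + t) with hT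
  set S : ℕ → Finset ℕ := fun x => (Finset.range g).image (fun t => 2*g*x + t) with hS
  have hST : ∀ x, S x ⊆ T x := by
    intro x p hp
    obtain ⟨t, ht, rfl⟩ := Finset.mem_image.1 hp
    exact Finset.mem_image.2 ⟨t, Finset.mem_range.2 (by have := Finset.mem_range.1 ht; omega), rfl⟩
  have hTloc : ∀ x y p, p ∈ T x → p ∈ T y → x = y := by
    intro x y p hx hy
    rw [← enc_div hg hx, ← enc_div hg hy]
  have hTcard : ∀ x, (T x).card = 2*g := by
    intro x
    rw [hT]
    rw [Finset.card_image_of_injective _ (fun a b h => by omega), Finset.card_range]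
  have hScard : ∀ x, (S x).card = g := by
    intro x
    rw [hS]
    rw [Finset.card_image_of_injective _ (fun a b h => by omega), Finset.card_range]
  -- images of groups
  have hιT : ∀ b ∈ Bb, ∀ i : Fin b.card, (Gf b i).image (ι b) = T (σ b i) := by
    intro b hb i
    have himg := (hff b i hb).2.2
    apply Finset.Subset.antisymm
    · intro p' hp'
      obtain ⟨p, hp, rfl⟩ := Finset.mem_image.1 hp'
      rw [hι b hb i p hp]
      refine Finset.mem_image.2 ⟨ff b i p, ?_, rfl⟩
      rw [← himg]
      exact Finset.mem_image_of_mem _ hp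
    · intro p' hp'
      obtain ⟨t, ht, rfl⟩ := Finset.mem_image.1 hp'
      rw [← himg] at ht
      obtain ⟨p, hp, rfl⟩ := Finset.mem_image.1 ht
      exact Finset.mem_image.2 ⟨p, hp, hι b hb i p hp⟩
  have hιS : ∀ b ∈ Bb, ∀ i : Fin b.card, (Wf b i).image (ι b) = S (σ b i) := by
    intro b hb i
    have himg := (hff b i hb).2.1
    have hWG := (hkey b hb).2.2.1 i
    apply Finset.Subset.antisymm
    · intro p' hp'
      obtain ⟨p, hp, rfl⟩ := Finset.mem_image.1 hp'
      rw [hι b hb i p (hWG hp)]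
      refine Finset.mem_image.2 ⟨ff b i p, ?_, rfl⟩
      rw [← himg]
      exact Finset.mem_image_of_mem _ hp
    · intro p' hp'
      obtain ⟨t, ht, rfl⟩ := Finset.mem_image.1 hp'
      rw [← himg] at ht
      obtain ⟨p, hp, rfl⟩ := Finset.mem_image.1 ht
      exact Finset.mem_image.2 ⟨p, hp, hι b hb i p (hWG hp)⟩
  -- injectivity of ι on the frame point set
  have hιinj : ∀ b ∈ Bb, Set.InjOn (ι b) ↑(Finset.univ.biUnion (Gf b)) := by
    intro b hb p hp q hq hpq
    have hp' := Finset.mem_biUnion.1 hp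
    have hq' := Finset.mem_biUnion.1 hq
    obtain ⟨i, -, hpi⟩ := hp'
    obtain ⟨j, -, hqj⟩ := hq'
    have hpT : ι b p ∈ T (σ b i) := by
      rw [← hιT b hb i]; exact Finset.mem_image_of_mem _ hpi
    have hqT : ι b q ∈ T (σ b j) := by
      rw [← hιT b hb j]; exact Finset.mem_image_of_mem _ hqj
    have : σ b i = σ b j := hTloc _ _ _ hpT (hpq ▸ hqT)
    have hij : i = j := hσinj b i j this
    subst hij
    rw [hι b hb i p hpi, hι b hb i q hqj] at hpq
    exact (hff b i hb).1 hpi hqj (by omega)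
  -- every frame block forces block size ≥ 3
  have hbl3 : ∀ b ∈ Bb, ∀ bl ∈ Bl b, 2 ≤ b.card := by
    intro b hb bl hbl
    obtain ⟨hsub, hcard3, hcap⟩ := (hkey b hb).1.2.2.1 bl hbl
    have h1 : bl ⊆ Finset.univ.biUnion (fun i => bl ∩ Gf b i) := by
      intro p hp
      obtain ⟨i, -, hpi⟩ := Finset.mem_biUnion.1 (hsub hp)
      exact Finset.mem_biUnion.2 ⟨i, Finset.mem_univ _, Finset.mem_inter.2 ⟨hp, hpi⟩⟩
    have h2 := Finset.card_le_card h1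
    have h3 := Finset.card_biUnion_le (s := (Finset.univ : Finset (Fin b.card)))
      (t := fun i => bl ∩ Gf b i)
    have h4 : ∑ i : Fin b.card, (bl ∩ Gf b i).card ≤ ∑ _i : Fin b.card, 1 :=
      Finset.sum_le_sum (fun i _ => hcap i)
    simp only [Finset.sum_const, Finset.card_univ, Fintype.card_fin, smul_eq_mul, mul_one] at h4
    omega
  -- locating image points
  have hlocate : ∀ b ∈ Bb, ∀ p ∈ Finset.univ.biUnion (Gf b),
      ∃ i, p ∈ Gf b i ∧ ι b p ∈ T (σ b i) := by
    intro b hb p hp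
    obtain ⟨i, -, hpi⟩ := Finset.mem_biUnion.1 hp
    exact ⟨i, hpi, by rw [← hιT b hb i]; exact Finset.mem_image_of_mem _ hpi⟩
  -- classes of each frame indexed by Fin g
  have keycl : ∀ (b : Finset ℕ) (i : Fin b.card), ∃ cl : ℕ → Finset (Finset ℕ),
      (∀ s, cl s ⊆ Bl b) ∧ (b ∈ Bb → 2 ≤ b.card →
        ((∀ s, s < g → cl s ∈ Rf b ∧
            IsParallelClassOn (Finset.univ.biUnion (Gf b) \ Gf b i) (cl s)) ∧
         (∀ s, s < g → ∀ s', s' < g → cl s = cl s' → s = s') ∧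
         (∀ P ∈ Rf b, IsParallelClassOn (Finset.univ.biUnion (Gf b) \ Gf b i) P →
            ∃ s, s < g ∧ cl s = P))) := by
    intro b i
    by_cases hb : b ∈ Bb ∧ 2 ≤ b.card
    · obtain ⟨hb1, hb2⟩ := hb
      obtain ⟨hGDD, -, -, -, hR1, hR2⟩ := hkey b hb1
      have hcount := frame_class_count g b.card hg hb2 (Gf b) (Bl b) (Rf b) hGDD hR1 hR2 i
      set e := Finset.equivFinOfCardEq hcount with he
      refine ⟨fun s => if hs : s < g then (e.symm ⟨s, hs⟩ : Finset (Finset ℕ)) else ∅,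
        ?_, fun _ _ => ⟨?_, ?_, ?_⟩⟩
      · intro s
        by_cases hs : s < g
        · simp only [dif_pos hs]
          have hmem := Finset.mem_filter.1 (e.symm ⟨s, hs⟩).2
          exact (hR1 _ hmem.1).1
        · simp only [dif_neg hs]
          exact Finset.empty_subset _
      · intro s hs
        simp only [dif_pos hs]
        have hmem := Finset.mem_filter.1 (e.symm ⟨s, hs⟩).2
        exact ⟨hmem.1, hmem.2⟩
      · intro s hs s' hs' hss
        simp only [dif_pos hs, dif_pos hs'] at hss
        have := e.symm.injective (Subtype.ext hss)
        exact congrArg Fin.val (by exact_mod_cast this)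
      · intro P hP hPar
        have hPF := Finset.mem_filter.2 ⟨hP, hPar⟩
        refine ⟨(e ⟨P, hPF⟩ : ℕ), (e ⟨P, hPF⟩).2, ?_⟩
        simp only [dif_pos (e ⟨P, hPF⟩).2]
        have : (⟨(e ⟨P, hPF⟩ : ℕ), (e ⟨P, hPF⟩).2⟩ : Fin g) = e ⟨P, hPF⟩ := rfl
        rw [this, e.symm_apply_apply]
    · refine ⟨fun _ => ∅, fun _ => Finset.empty_subset _, fun hb1 hb2 => absurd ⟨hb1, hb2⟩ hb⟩
  choose cl hcl using keycl
  -- enumeration of X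
  set σX : Fin v → ℕ := fun i => ((X.orderIsoOfFin hXcard) i : ℕ) with hσX
  have hσXmem : ∀ i, σX i ∈ X := fun i => ((X.orderIsoOfFin hXcard) i).2
  have hσXinj : ∀ i j, σX i = σX j → i = j := fun i j h =>
    (X.orderIsoOfFin hXcard).injective (Subtype.ext h)
  have hσXsurj : ∀ x ∈ X, ∃ i, σX i = x := fun x hx =>
    ⟨(X.orderIsoOfFin hXcard).symm ⟨x, hx⟩,
      congrArg Subtype.val ((X.orderIsoOfFin hXcard).apply_symm_apply ⟨x, hx⟩)⟩
  -- big objects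
  set Gbig : Fin v → Finset ℕ := fun i => T (σX i) with hGbig
  set Wbig : Fin v → Finset ℕ := fun i => S (σX i) with hWbig
  set Bbig := Bb.biUnion (fun b => (Bl b).image (fun bl => bl.image (ι b))) with hBbig
  set Abig := Bb.biUnion (fun b => (Af b).image (fun bl => bl.image (ι b))) with hAbig
  set bigClass : ℕ → ℕ → Finset (Finset ℕ) := fun x s =>
    (Bb.filter (fun b => x ∈ b)).biUnion (fun b =>
      (Finset.univ.filter (fun i : Fin b.card => σ b i = x)).biUnion
        (fun i => (cl b i s).image (fun bl => bl.image (ι b)))) with hbigClass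
  set Rbig := (X ×ˢ Finset.range g).image (fun q => bigClass q.1 q.2) with hRbig
  have hbigV : Finset.univ.biUnion Gbig = X.biUnion T := by
    ext p
    constructor
    · intro hp
      obtain ⟨i, -, hpi⟩ := Finset.mem_biUnion.1 hp
      exact Finset.mem_biUnion.2 ⟨σX i, hσXmem i, hpi⟩
    · intro hp
      obtain ⟨x, hx, hpx⟩ := Finset.mem_biUnion.1 hp
      obtain ⟨i, rfl⟩ := hσXsurj x hx
      exact Finset.mem_biUnion.2 ⟨i, Finset.mem_univ _, hpx⟩
  have hbuniq : ∀ x y : ℕ, x ≠ y → ∀ b ∈ Bb, ∀ b' ∈ Bb,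
      x ∈ b → y ∈ b → x ∈ b' → y ∈ b' → b = b' := by
    intro x y hxy b hb b' hb' hxb hyb hxb' hyb'
    obtain ⟨c, -, hc⟩ := hXpairs x ((hXblocks b hb).1 hxb) y ((hXblocks b hb).1 hyb) hxy
    rw [hc b ⟨hb, hxb, hyb⟩, hc b' ⟨hb', hxb', hyb'⟩]
  have hblT : ∀ b ∈ Bb, ∀ bl, bl ⊆ Finset.univ.biUnion (Gf b) → ∀ x p',
      p' ∈ bl.image (ι b) → p' ∈ T x →
      x ∈ b ∧ ∃ p, p ∈ bl ∧ ι b p = p' ∧ ∃ i, σ b i = x ∧ p ∈ Gf b i := by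
    intro b hb bl hsub x p' hp' hpT
    obtain ⟨p, hp, rfl⟩ := Finset.mem_image.1 hp'
    obtain ⟨i, hpi, hιi⟩ := hlocate b hb p (hsub hp)
    have hx : σ b i = x := hTloc _ _ _ hιi hpT
    exact ⟨hx ▸ hσmem b i, p, hp, rfl, i, hx, hpi⟩
  have hWsubV : ∀ b, ∀ i : Fin b.card, ∀ p ∈ Wf b i, ∀ hb : b ∈ Bb,
      p ∈ Gf b i := fun b i p hp hb => (hkey b hb).2.2.1 i hp
  have hSloc : ∀ x y p, p ∈ S x → p ∈ S y → x = y := fun x y p hx hy =>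
    hTloc x y p (hST x hx) (hST y hy)
  have hblS : ∀ b ∈ Bb, ∀ a ∈ Af b, ∀ x p',
      p' ∈ a.image (ι b) → p' ∈ S x →
      x ∈ b ∧ ∃ p, p ∈ a ∧ ι b p = p' ∧ ∃ i, σ b i = x ∧ p ∈ Wf b i := by
    intro b hb a ha x p' hp' hpS
    obtain ⟨p, hp, rfl⟩ := Finset.mem_image.1 hp'
    have hpW : p ∈ Finset.univ.biUnion (Wf b) := ((hkey b hb).2.1.2.2.1 a ha).1 hp
    obtain ⟨i, -, hpi⟩ := Finset.mem_biUnion.1 hpW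
    have hιi : ι b p ∈ S (σ b i) := by
      rw [← hιS b hb i]; exact Finset.mem_image_of_mem _ hpi
    have hx : σ b i = x := hSloc _ _ _ hιi hpS
    exact ⟨hx ▸ hσmem b i, p, hp, rfl, i, hx, hpi⟩
  have hmemBbig : ∀ b ∈ Bb, ∀ bl ∈ Bl b, bl.image (ι b) ∈ Bbig := by
    intro b hb bl hbl
    exact Finset.mem_biUnion.2 ⟨b, hb, Finset.mem_image_of_mem _ hbl⟩
  have hBbigelim : ∀ bl' ∈ Bbig, ∃ b, b ∈ Bb ∧ ∃ bl ∈ Bl b, bl.image (ι b) = bl' := by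
    intro bl' h
    obtain ⟨b, hb, hbl'⟩ := Finset.mem_biUnion.1 h
    obtain ⟨bl, hbl, rfl⟩ := Finset.mem_image.1 hbl'
    exact ⟨b, hb, bl, hbl, rfl⟩
  -- GDD property of the big design
  have hGDD1 : IsGDD (2*g) v Gbig Bbig := by
    refine ⟨fun i => hTcard _, ?_, ?_, ?_⟩
    · intro i j hij
      rw [Finset.disjoint_left]
      intro p hpi hpj
      exact hij (hσXinj i j (hTloc _ _ _ hpi hpj))
    · intro bl' hbl'
      obtain ⟨b, hb, bl, hbl, rfl⟩ := hBbigelim bl' hbl'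
      obtain ⟨hsubV, hcard3, hcap⟩ := (hkey b hb).1.2.2.1 bl hbl
      refine ⟨?_, ?_, ?_⟩
      · intro p' hp'
        obtain ⟨p, hp, rfl⟩ := Finset.mem_image.1 hp'
        obtain ⟨i, hpi, hιi⟩ := hlocate b hb p (hsubV hp)
        rw [hbigV]
        exact Finset.mem_biUnion.2 ⟨σ b i, (hXblocks b hb).1 (hσmem b i), hιi⟩
      · rw [Finset.card_image_of_injOn ((hιinj b hb).mono (Finset.coe_subset.2 hsubV)),
          hcard3]
      · intro i'
        refine Finset.card_le_one.2 ?_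
        intro p' hp1 q' hq1
        rw [Finset.mem_inter] at hp1 hq1
        obtain ⟨-, p, hpbl, hpe, ip, hσip, hpG⟩ :=
          hblT b hb bl hsubV (σX i') p' hp1.1 hp1.2
        obtain ⟨-, q, hqbl, hqe, iq, hσiq, hqG⟩ :=
          hblT b hb bl hsubV (σX i') q' hq1.1 hq1.2
        have : ip = iq := hσinj b ip iq (hσip.trans hσiq.symm)
        subst this
        have hpq : p = q := Finset.card_le_one.1 (hcap ip) p
          (Finset.mem_inter.2 ⟨hpbl, hpG⟩) q (Finset.mem_inter.2 ⟨hqbl, hqG⟩)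
        rw [← hpe, ← hqe, hpq]
    · rintro p' q' ⟨i, j, hij, hpi, hqj⟩
      have hxy : σX i ≠ σX j := fun h => hij (hσXinj i j h)
      obtain ⟨b, ⟨hb, hxb, hyb⟩, -⟩ := hXpairs (σX i) (hσXmem i) (σX j) (hσXmem j) hxy
      obtain ⟨ix, hσix⟩ := hσsurj b (σX i) hxb
      obtain ⟨iy, hσiy⟩ := hσsurj b (σX j) hyb
      have hpi' : p' ∈ (Gf b ix).image (ι b) := by rw [hιT b hb ix, hσix]; exact hpi
      have hqj' : q' ∈ (Gf b iy).image (ι b) := by rw [hιT b hb iy, hσiy]; exact hqj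
      obtain ⟨p, hp, rfl⟩ := Finset.mem_image.1 hpi'
      obtain ⟨q, hq, rfl⟩ := Finset.mem_image.1 hqj'
      have hixy : ix ≠ iy := fun h => hxy (hσix ▸ hσiy ▸ congrArg (σ b) h)
      obtain ⟨bl, ⟨hblB, hpbl, hqbl⟩, hbluniq⟩ :=
        (hkey b hb).1.2.2.2 p q ⟨ix, iy, hixy, hp, hq⟩
      refine ⟨bl.image (ι b), ⟨hmemBbig b hb bl hblB, Finset.mem_image_of_mem _ hpbl,
        Finset.mem_image_of_mem _ hqbl⟩, ?_⟩
      rintro c' ⟨hc'B, hpc', hqc'⟩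
      obtain ⟨b₂, hb₂, c, hc, rfl⟩ := hBbigelim c' hc'B
      have hsubc : c ⊆ Finset.univ.biUnion (Gf b₂) := ((hkey b₂ hb₂).1.2.2.1 c hc).1
      have hpT : ι b p ∈ T (σX i) := by
        rw [← hσix, ← hιT b hb ix]; exact Finset.mem_image_of_mem _ hp
      have hqT : ι b q ∈ T (σX j) := by
        rw [← hσiy, ← hιT b hb iy]; exact Finset.mem_image_of_mem _ hq
      obtain ⟨hxb₂, r, hrc, hre, -⟩ := hblT b₂ hb₂ c hsubc (σX i) _ hpc' hpT
      obtain ⟨hyb₂, r2, hr2c, hr2e, -⟩ := hblT b₂ hb₂ c hsubc (σX j) _ hqc' hqT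
      have hbeq : b₂ = b := hbuniq (σX i) (σX j) hxy b₂ hb₂ b hb hxb₂ hyb₂ hxb hyb
      subst hbeq
      have hsubV := ((hkey b₂ hb₂).1.2.2.1 bl hblB).1
      have hrp : r = p := hιinj b₂ hb₂ (hsubc hrc) (hsubV hpbl) hre
      have hrq : r2 = q := hιinj b₂ hb₂ (hsubc hr2c) (hsubV hqbl) hr2e
      rw [hbluniq c ⟨hc, hrp ▸ hrc, hrq ▸ hr2c⟩]
  -- bigClass membership
  have hbigClassElim : ∀ x s bl', bl' ∈ bigClass x s → ∃ b, b ∈ Bb ∧ x ∈ b ∧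
      ∃ i : Fin b.card, σ b i = x ∧ ∃ c ∈ cl b i s, c.image (ι b) = bl' := by
    intro x s bl' h
    rw [hbigClass] at h
    obtain ⟨b, hb, h2⟩ := Finset.mem_biUnion.1 h
    rw [Finset.mem_filter] at hb
    obtain ⟨i, hi, h3⟩ := Finset.mem_biUnion.1 h2
    rw [Finset.mem_filter] at hi
    obtain ⟨c, hc, rfl⟩ := Finset.mem_image.1 h3
    exact ⟨b, hb.1, hb.2, i, hi.2, c, hc, rfl⟩
  have hbigClassIntro : ∀ x s b, b ∈ Bb → x ∈ b → ∀ i : Fin b.card, σ b i = x →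
      ∀ c ∈ cl b i s, c.image (ι b) ∈ bigClass x s := by
    intro x s b hb hx i hσi c hc
    rw [hbigClass]
    refine Finset.mem_biUnion.2 ⟨b, Finset.mem_filter.2 ⟨hb, hx⟩, ?_⟩
    refine Finset.mem_biUnion.2 ⟨i, Finset.mem_filter.2 ⟨Finset.mem_univ _, hσi⟩, ?_⟩
    exact Finset.mem_image_of_mem _ hc
  have hbigClassSubB : ∀ x s, bigClass x s ⊆ Bbig := by
    intro x s bl' h
    obtain ⟨b, hb, -, i, -, c, hc, rfl⟩ := hbigClassElim x s bl' h
    exact hmemBbig b hb c ((hcl b i).1 s hc)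
  -- the parallel class property of big classes
  have hParB : ∀ x ∈ X, ∀ s, s < g →
      IsParallelClassOn (Finset.univ.biUnion Gbig \ T x) (bigClass x s) := by
    intro x hxX s hs
    constructor
    · intro bl' hbl'
      obtain ⟨b, hb, hxb, i, hσi, c, hc, rfl⟩ := hbigClassElim x s bl' hbl'
      have hcBl : c ∈ Bl b := (hcl b i).1 s hc
      have h2b : 2 ≤ b.card := hbl3 b hb c hcBl
      have hclp := ((hcl b i).2 hb h2b).1 s hs
      have hcsub : c ⊆ Finset.univ.biUnion (Gf b) \ Gf b i := hclp.2.1 c hc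
      intro p' hp'
      obtain ⟨p, hp, rfl⟩ := Finset.mem_image.1 hp'
      have hpV := Finset.mem_sdiff.1 (hcsub hp)
      obtain ⟨j, hpj, hιj⟩ := hlocate b hb p hpV.1
      have hji : j ≠ i := fun h => hpV.2 (h ▸ hpj)
      refine Finset.mem_sdiff.2 ⟨?_, ?_⟩
      · rw [hbigV]
        exact Finset.mem_biUnion.2 ⟨σ b j, (hXblocks b hb).1 (hσmem b j), hιj⟩
      · intro hpx
        exact hji (hσinj b j i ((hTloc _ _ _ hιj hpx).trans hσi.symm))
    · intro p' hp'
      rw [Finset.mem_sdiff, hbigV] at hp'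
      obtain ⟨y, hyX, hpy⟩ := Finset.mem_biUnion.1 hp'.1
      have hxy : x ≠ y := fun h => hp'.2 (h ▸ hpy)
      obtain ⟨b, ⟨hb, hxb, hyb⟩, hbuni⟩ := hXpairs x hxX y hyX hxy
      have h2b : 2 ≤ b.card := Finset.one_lt_card.2 ⟨x, hxb, y, hyb, hxy⟩
      obtain ⟨i, hσi⟩ := hσsurj b x hxb
      obtain ⟨jy, hσjy⟩ := hσsurj b y hyb
      have hclp := ((hcl b i).2 hb h2b).1 s hs
      have hpy' : p' ∈ (Gf b jy).image (ι b) := by rw [hιT b hb jy, hσjy]; exact hpy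
      obtain ⟨p, hp, rfl⟩ := Finset.mem_image.1 hpy'
      have hpmem : p ∈ Finset.univ.biUnion (Gf b) \ Gf b i := by
        refine Finset.mem_sdiff.2 ⟨Finset.mem_biUnion.2 ⟨jy, Finset.mem_univ _, hp⟩, ?_⟩
        intro hpi
        have : i = jy := by
          by_contra hne
          exact (Finset.disjoint_left.1 ((hkey b hb).1.2.1 i jy hne)) hpi hp
        exact hxy (hσi ▸ hσjy ▸ congrArg (σ b) this)
      obtain ⟨cb, ⟨hcb, hpcb⟩, hcbu⟩ := hclp.2.2 p hpmem
      refine ⟨cb.image (ι b), ⟨hbigClassIntro x s b hb hxb i hσi cb hcb,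
        Finset.mem_image_of_mem _ hpcb⟩, ?_⟩
      rintro c' ⟨hc'mem, hpc'⟩
      obtain ⟨b₂, hb₂, hxb₂, i₂, hσi₂, c, hc, rfl⟩ := hbigClassElim x s c' hc'mem
      have hcBl : c ∈ Bl b₂ := (hcl b₂ i₂).1 s hc
      have h2b₂ : 2 ≤ b₂.card := hbl3 b₂ hb₂ c hcBl
      have hclp₂ := ((hcl b₂ i₂).2 hb₂ h2b₂).1 s hs
      have hcsub : c ⊆ Finset.univ.biUnion (Gf b₂) \ Gf b₂ i₂ := hclp₂.2.1 c hc
      have hcsubV : c ⊆ Finset.univ.biUnion (Gf b₂) :=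
        fun q hq => (Finset.mem_sdiff.1 (hcsub hq)).1
      have hpT : ι b p ∈ T y := by
        rw [← hσjy, ← hιT b hb jy]; exact Finset.mem_image_of_mem _ hp
      obtain ⟨hyb₂, r, hrc, hre, -⟩ := hblT b₂ hb₂ c hcsubV y _ hpc' hpT
      have hbeq : b₂ = b := hbuniq x y hxy b₂ hb₂ b hb hxb₂ hyb₂ hxb hyb
      subst hbeq
      have hieq : i₂ = i := hσinj b₂ i₂ i (hσi₂.trans hσi.symm)
      subst hieq
      have hrp : r = p := hιinj b₂ hb₂ (hcsubV hrc)
        (Finset.mem_biUnion.2 ⟨jy, Finset.mem_univ _, hp⟩) hre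
      rw [hcbu c ⟨hc, hrp ▸ hrc⟩]
  -- resolution properties of Rbig
  have hGne : ∀ b ∈ Bb, ∀ j : Fin b.card, (Gf b j).Nonempty := by
    intro b hb j
    refine Finset.card_pos.1 ?_
    rw [(hkey b hb).1.1 j]; omega
  have hRbig1 : ∀ P ∈ Rbig, P ⊆ Bbig ∧
      ∃ i, IsParallelClassOn (Finset.univ.biUnion Gbig \ Gbig i) P := by
    intro P hP
    rw [hRbig] at hP
    obtain ⟨⟨x, s⟩, hq, rfl⟩ := Finset.mem_image.1 hP
    rw [Finset.mem_product] at hq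
    obtain ⟨i, hσXi⟩ := hσXsurj x hq.1
    refine ⟨hbigClassSubB x s, i, ?_⟩
    have : Gbig i = T x := by rw [hGbig]; simp only; rw [hσXi]
    rw [this]
    exact hParB x hq.1 s (Finset.mem_range.1 hq.2)
  have hRbig2 : ∀ bl' ∈ Bbig, ∃! P, P ∈ Rbig ∧ bl' ∈ P := by
    intro bl' hbl'
    obtain ⟨b, hb, bl, hbl, rfl⟩ := hBbigelim bl' hbl'
    have h2b : 2 ≤ b.card := hbl3 b hb bl hbl
    obtain ⟨P, ⟨hPR, hblP⟩, hPu⟩ := (hkey b hb).2.2.2.2.2 bl hbl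
    obtain ⟨i, hPari⟩ := ((hkey b hb).2.2.2.2.1 P hPR).2
    obtain ⟨s, hs, hcls⟩ := ((hcl b i).2 hb h2b).2.2 P hPR hPari
    have hxX : σ b i ∈ X := (hXblocks b hb).1 (hσmem b i)
    have hmemR : bigClass (σ b i) s ∈ Rbig := by
      rw [hRbig]
      exact Finset.mem_image.2 ⟨(σ b i, s),
        Finset.mem_product.2 ⟨hxX, Finset.mem_range.2 hs⟩, rfl⟩
    have hblmem : bl.image (ι b) ∈ bigClass (σ b i) s :=
      hbigClassIntro (σ b i) s b hb (hσmem b i) i rfl bl (by rw [hcls]; exact hblP)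
    refine ⟨bigClass (σ b i) s, ⟨hmemR, hblmem⟩, ?_⟩
    rintro Q ⟨hQR, hblQ⟩
    rw [hRbig] at hQR
    obtain ⟨⟨x', s'⟩, hq, rfl⟩ := Finset.mem_image.1 hQR
    rw [Finset.mem_product] at hq
    have hs' : s' < g := Finset.mem_range.1 hq.2
    obtain ⟨b₂, hb₂, hx'b₂, i₂, hσi₂, c, hc, hceq⟩ := hbigClassElim x' s' _ hblQ
    have hcBl : c ∈ Bl b₂ := (hcl b₂ i₂).1 s' hc
    have hcsubV : c ⊆ Finset.univ.biUnion (Gf b₂) := ((hkey b₂ hb₂).1.2.2.1 c hcBl).1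
    -- identify b₂ with b using two points of bl
    obtain ⟨hsubV, hcard3, hcap⟩ := (hkey b hb).1.2.2.1 bl hbl
    obtain ⟨p, hp, q, hq', hpq⟩ := Finset.one_lt_card.1 (by omega : 1 < bl.card)
    obtain ⟨ip, hpip, hιp⟩ := hlocate b hb p (hsubV hp)
    obtain ⟨iq, hqiq, hιq⟩ := hlocate b hb q (hsubV hq')
    have hipq : ip ≠ iq := by
      intro h
      subst h
      exact hpq (Finset.card_le_one.1 (hcap ip) p
        (Finset.mem_inter.2 ⟨hp, hpip⟩) q (Finset.mem_inter.2 ⟨hq', hqiq⟩))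
    have hxpq : σ b ip ≠ σ b iq := fun h => hipq (hσinj b ip iq h)
    have hpc : ι b p ∈ c.image (ι b₂) := by
      rw [hceq]; exact Finset.mem_image_of_mem _ hp
    have hqc : ι b q ∈ c.image (ι b₂) := by
      rw [hceq]; exact Finset.mem_image_of_mem _ hq'
    obtain ⟨hxpb₂, -⟩ := hblT b₂ hb₂ c hcsubV (σ b ip) _ hpc hιp
    obtain ⟨hxqb₂, -⟩ := hblT b₂ hb₂ c hcsubV (σ b iq) _ hqc hιq
    have hbeq : b₂ = b := hbuniq (σ b ip) (σ b iq) hxpq b₂ hb₂ b hb hxpb₂ hxqb₂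
      (hσmem b ip) (hσmem b iq)
    subst hbeq
    -- now identify c with bl
    have hcbl : c = bl := image_eq_of_injOn (hιinj b₂ hb₂)
      (Finset.coe_subset.2 hcsubV) (Finset.coe_subset.2 hsubV) hceq
    subst hcbl
    have h2b₂ : 2 ≤ b₂.card := h2b
    have hclP₂ := ((hcl b₂ i₂).2 hb₂ h2b₂).1 s' hs'
    have hQP : cl b₂ i₂ s' = P := hPu (cl b₂ i₂ s') ⟨hclP₂.1, hc⟩
    have hieq : i₂ = i := by
      by_contra hne
      have hP1 : IsParallelClassOn (Finset.univ.biUnion (Gf b₂) \ Gf b₂ i₂) P :=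
        hQP ▸ hclP₂.2
      have hP2 : IsParallelClassOn (Finset.univ.biUnion (Gf b₂) \ Gf b₂ i) P :=
        hcls ▸ (((hcl b₂ i).2 hb₂ h2b₂).1 s hs).2
      exact par_index_unique (hGne b₂ hb₂) ((hkey b₂ hb₂).1.2.1) hne hP1 hP2
    subst hieq
    have hseq : s' = s := ((hcl b₂ i₂).2 hb₂ h2b₂).2.1 s' hs' s hs (hQP.trans hcls.symm)
    rw [← hσi₂, hseq]
  -- the sub-GDD
  have hAbigelim : ∀ a' ∈ Abig, ∃ b, b ∈ Bb ∧ ∃ a ∈ Af b, a.image (ι b) = a' := by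
    intro a' h
    obtain ⟨b, hb, ha'⟩ := Finset.mem_biUnion.1 h
    obtain ⟨a, ha, rfl⟩ := Finset.mem_image.1 ha'
    exact ⟨b, hb, a, ha, rfl⟩
  have hWV : ∀ b ∈ Bb, Finset.univ.biUnion (Wf b) ⊆ Finset.univ.biUnion (Gf b) := by
    intro b hb p hp
    obtain ⟨j, -, hpj⟩ := Finset.mem_biUnion.1 hp
    exact Finset.mem_biUnion.2 ⟨j, Finset.mem_univ _, (hkey b hb).2.2.1 j hpj⟩
  have hGDD2 : IsGDD g v Wbig Abig := by
    refine ⟨fun i => hScard _, ?_, ?_, ?_⟩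
    · intro i j hij
      rw [Finset.disjoint_left]
      intro p hpi hpj
      exact hij (hσXinj i j (hSloc _ _ _ hpi hpj))
    · intro a' ha'
      obtain ⟨b, hb, a, ha, rfl⟩ := hAbigelim a' ha'
      obtain ⟨hsubW, hcard3, hcap⟩ := (hkey b hb).2.1.2.2.1 a ha
      have hsubV : a ⊆ Finset.univ.biUnion (Gf b) := fun p hp => hWV b hb (hsubW hp)
      refine ⟨?_, ?_, ?_⟩
      · intro p' hp'
        obtain ⟨p, hp, rfl⟩ := Finset.mem_image.1 hp'
        obtain ⟨j, -, hpj⟩ := Finset.mem_biUnion.1 (hsubW hp)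
        have : ι b p ∈ S (σ b j) := by
          rw [← hιS b hb j]; exact Finset.mem_image_of_mem _ hpj
        obtain ⟨ij, hij⟩ := hσXsurj (σ b j) ((hXblocks b hb).1 (hσmem b j))
        refine Finset.mem_biUnion.2 ⟨ij, Finset.mem_univ _, ?_⟩
        rw [hWbig]; simp only; rw [hij]
        exact this
      · rw [Finset.card_image_of_injOn ((hιinj b hb).mono (Finset.coe_subset.2 hsubV)),
          hcard3]
      · intro i'
        refine Finset.card_le_one.2 ?_
        intro p' hp1 q' hq1
        rw [Finset.mem_inter] at hp1 hq1
        obtain ⟨-, p, hpa, hpe, ip, hσip, hpW⟩ :=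
          hblS b hb a ha (σX i') p' hp1.1 hp1.2
        obtain ⟨-, q, hqa, hqe, iq, hσiq, hqW⟩ :=
          hblS b hb a ha (σX i') q' hq1.1 hq1.2
        have : ip = iq := hσinj b ip iq (hσip.trans hσiq.symm)
        subst this
        have hpq : p = q := Finset.card_le_one.1 (hcap ip) p
          (Finset.mem_inter.2 ⟨hpa, hpW⟩) q (Finset.mem_inter.2 ⟨hqa, hqW⟩)
        rw [← hpe, ← hqe, hpq]
    · rintro p' q' ⟨i, j, hij, hpi, hqj⟩
      have hxy : σX i ≠ σX j := fun h => hij (hσXinj i j h)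
      obtain ⟨b, ⟨hb, hxb, hyb⟩, -⟩ := hXpairs (σX i) (hσXmem i) (σX j) (hσXmem j) hxy
      obtain ⟨ix, hσix⟩ := hσsurj b (σX i) hxb
      obtain ⟨iy, hσiy⟩ := hσsurj b (σX j) hyb
      have hpi' : p' ∈ (Wf b ix).image (ι b) := by rw [hιS b hb ix, hσix]; exact hpi
      have hqj' : q' ∈ (Wf b iy).image (ι b) := by rw [hιS b hb iy, hσiy]; exact hqj
      obtain ⟨p, hp, rfl⟩ := Finset.mem_image.1 hpi'
      obtain ⟨q, hq, rfl⟩ := Finset.mem_image.1 hqj'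
      have hixy : ix ≠ iy := fun h => hxy (hσix ▸ hσiy ▸ congrArg (σ b) h)
      obtain ⟨a, ⟨haA, hpa, hqa⟩, hauniq⟩ :=
        (hkey b hb).2.1.2.2.2 p q ⟨ix, iy, hixy, hp, hq⟩
      refine ⟨a.image (ι b), ⟨Finset.mem_biUnion.2 ⟨b, hb, Finset.mem_image_of_mem _ haA⟩,
        Finset.mem_image_of_mem _ hpa, Finset.mem_image_of_mem _ hqa⟩, ?_⟩
      rintro c' ⟨hc'A, hpc', hqc'⟩
      obtain ⟨b₂, hb₂, c, hc, rfl⟩ := hAbigelim c' hc'A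
      have hpS : ι b p ∈ S (σX i) := by
        rw [← hσix, ← hιS b hb ix]; exact Finset.mem_image_of_mem _ hp
      have hqS : ι b q ∈ S (σX j) := by
        rw [← hσiy, ← hιS b hb iy]; exact Finset.mem_image_of_mem _ hq
      obtain ⟨hxb₂, r, hrc, hre, -⟩ := hblS b₂ hb₂ c hc (σX i) _ hpc' hpS
      obtain ⟨hyb₂, r2, hr2c, hr2e, -⟩ := hblS b₂ hb₂ c hc (σX j) _ hqc' hqS
      have hbeq : b₂ = b := hbuniq (σX i) (σX j) hxy b₂ hb₂ b hb hxb₂ hyb₂ hxb hyb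
      subst hbeq
      have hsubc : c ⊆ Finset.univ.biUnion (Gf b₂) :=
        fun z hz => hWV b₂ hb₂ (((hkey b₂ hb₂).2.1.2.2.1 c hc).1 hz)
      have hpV : p ∈ Finset.univ.biUnion (Gf b₂) :=
        Finset.mem_biUnion.2 ⟨ix, Finset.mem_univ _, (hkey b₂ hb₂).2.2.1 ix hp⟩
      have hqV : q ∈ Finset.univ.biUnion (Gf b₂) :=
        Finset.mem_biUnion.2 ⟨iy, Finset.mem_univ _, (hkey b₂ hb₂).2.2.1 iy hq⟩
      have hrp : r = p := hιinj b₂ hb₂ (hsubc hrc) hpV hre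
      have hrq : r2 = q := hιinj b₂ hb₂ (hsubc hr2c) hqV hr2e
      rw [hauniq c ⟨hc, hrp ▸ hrc, hrq ▸ hr2c⟩]
  refine ⟨Gbig, Wbig, Bbig, Abig, ⟨hGDD1, Rbig, hRbig1, hRbig2⟩, hGDD2, ?_, ?_⟩
  · intro i
    exact hST _
  · intro a' ha'
    obtain ⟨b, hb, a, ha, rfl⟩ := hAbigelim a' ha'
    exact hmemBbig b hb a ((hkey b hb).2.2.2.1 ha)
end

section
/- If there exists a Kirkman frame of type (6;12)^n, then there exists a KTS(12n+3) which contains as a subdesign an STS(6n+1). -/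
/-! ### Concrete ingredient: a resolvable incomplete KTS(15) with hole {12,13,14} -/

def d2blocks : Finset (Finset ℕ) := {{0,1,12}, {0,2,4}, {0,3,5}, {0,6,13}, {0,7,14}, {0,8,10}, {0,9,11}, {1,2,5}, {1,3,4}, {1,6,14}, {1,7,13}, {1,8,11}, {1,9,10}, {2,3,12}, {2,6,10}, {2,7,11}, {2,8,13}, {2,9,14}, {3,6,11}, {3,7,10}, {3,8,14}, {3,9,13}, {4,5,12}, {4,6,8}, {4,7,9}, {4,10,13}, {4,11,14}, {5,6,9}, {5,7,8}, {5,10,14}, {5,11,13}, {6,7,12}, {8,9,12}, {10,11,12}}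

def Hc : Finset ℕ := {12,13,14}
def S7 : Finset ℕ := {0,1,2,3,4,5,12}

def clsList : List (Finset (Finset ℕ)) :=
  [ {{0,1,12}, {2,8,13}, {3,6,11}, {4,7,9}, {5,10,14}},
    {{0,6,13}, {1,9,10}, {2,3,12}, {4,11,14}, {5,7,8}},
    {{0,7,14}, {1,8,11}, {2,6,10}, {3,9,13}, {4,5,12}},
    {{0,9,11}, {1,2,5}, {3,8,14}, {4,10,13}, {6,7,12}},
    {{0,2,4}, {1,6,14}, {3,7,10}, {5,11,13}, {8,9,12}},
    {{0,3,5}, {1,7,13}, {2,9,14}, {4,6,8}, {10,11,12}},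
    {{0,8,10}, {1,3,4}, {2,7,11}, {5,6,9}} ]

def a7 : Finset (Finset ℕ) := {{0,1,12}, {0,2,4}, {0,3,5}, {1,2,5}, {1,3,4}, {2,3,12}, {4,5,12}}

/-- decidable version of a parallel class -/
def PCdec (X : Finset ℕ) (P : Finset (Finset ℕ)) : Prop :=
  (∀ b ∈ P, b ⊆ X) ∧ ∀ x ∈ X, (P.filter (fun b => x ∈ b)).card = 1

instance (X : Finset ℕ) (P : Finset (Finset ℕ)) : Decidable (PCdec X P) := by
  unfold PCdec; infer_instance

theorem F1 : ∀ b ∈ d2blocks, b ⊆ Finset.range 15 ∧ b.card = 3 ∧ (b ∩ Hc).card ≤ 1 ∧ 2 ≤ (b ∩ Finset.range 12).card := by decide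

theorem F2 : ∀ x ∈ Finset.range 15, ∀ y ∈ Finset.range 15, x ≠ y → ¬(x ∈ Hc ∧ y ∈ Hc) →
    (d2blocks.filter (fun b => x ∈ b ∧ y ∈ b)).card = 1 := by decide

theorem F3full : ∀ k < 6, PCdec (Finset.range 15) (clsList.getD k ∅) := by decide

theorem F3pc : PCdec (Finset.range 12) (clsList.getD 6 ∅) := by decide

theorem F4 : ∀ b ∈ d2blocks, ∃ k < 7, b ∈ clsList.getD k ∅ := by decide

theorem F5sub : ∀ k < 7, clsList.getD k ∅ ⊆ d2blocks := by decide

theorem F5disj : clsList.Pairwise (fun c d => ∀ b, b ∈ c → b ∈ d → False) := by decide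

theorem F6sub : a7 ⊆ d2blocks := by decide
theorem F6blk : ∀ b ∈ a7, b ⊆ S7 ∧ b.card = 3 ∧ 2 ≤ (b ∩ Finset.range 6).card := by decide
theorem F6pair : ∀ x ∈ S7, ∀ y ∈ S7, x ≠ y → (a7.filter (fun b => x ∈ b ∧ y ∈ b)).card = 1 := by decide
theorem S7eq : S7 = insert 12 (Finset.range 6) := by decide
theorem Hnotd2 : Hc ∉ d2blocks := by decide
/-! ### Generic helpers -/

lemma euOfFilter {α} [DecidableEq α] {B : Finset α} {p : α → Prop} [DecidablePred p]
    (h : (B.filter p).card = 1) : ∃! b, b ∈ B ∧ p b := by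
  obtain ⟨a, ha⟩ := Finset.card_eq_one.1 h
  have hm : a ∈ B.filter p := ha ▸ Finset.mem_singleton_self a
  rw [Finset.mem_filter] at hm
  refine ⟨a, hm, fun b hb => ?_⟩
  have : b ∈ B.filter p := Finset.mem_filter.2 hb
  rw [ha, Finset.mem_singleton] at this; exact this

lemma filterCount_eq_one {α} [DecidableEq α] {B : Finset α} {p : α → Prop} [DecidablePred p]
    {a : α} (ha : a ∈ B) (hpa : p a) (huniq : ∀ b ∈ B, p b → b = a) :
    (B.filter p).card = 1 := by
  rw [Finset.card_eq_one]
  exact ⟨a, Finset.eq_singleton_iff_unique_mem.2 ⟨Finset.mem_filter.2 ⟨ha, hpa⟩,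
    fun b hb => by rw [Finset.mem_filter] at hb; exact huniq b hb.1 hb.2⟩⟩

lemma PCdec.toPC {X : Finset ℕ} {P : Finset (Finset ℕ)} (h : PCdec X P) :
    IsParallelClassOn X P :=
  ⟨h.1, fun x hx => euOfFilter (h.2 x hx)⟩

/-- enumeration of a finset -/
def enumOf (s : Finset ℕ) (k : ℕ) : ℕ := (s.sort (· ≤ ·)).getD k 0

lemma enumOf_mem (s : Finset ℕ) {k : ℕ} (h : k < s.card) : enumOf s k ∈ s := by
  have hl : k < (s.sort (· ≤ ·)).length := by rwa [Finset.length_sort]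
  rw [enumOf, List.getD_eq_getElem _ _ hl]
  exact (Finset.mem_sort _).1 (List.getElem_mem _)

lemma enumOf_surj (s : Finset ℕ) {x : ℕ} (h : x ∈ s) : ∃ k < s.card, enumOf s k = x := by
  have : x ∈ s.sort (· ≤ ·) := (Finset.mem_sort _).2 h
  obtain ⟨k, hk, hkx⟩ := List.mem_iff_getElem.1 this
  exact ⟨k, by rwa [Finset.length_sort] at hk, by rw [enumOf, List.getD_eq_getElem _ _ hk, hkx]⟩

lemma enumOf_inj (s : Finset ℕ) {k l : ℕ} (hk : k < s.card) (hl : l < s.card)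
    (h : enumOf s k = enumOf s l) : k = l := by
  have hk' : k < (s.sort (· ≤ ·)).length := by rwa [Finset.length_sort]
  have hl' : l < (s.sort (· ≤ ·)).length := by rwa [Finset.length_sort]
  simp only [enumOf] at h
  rw [List.getD_eq_getElem _ _ hk', List.getD_eq_getElem _ _ hl'] at h
  exact (List.Nodup.getElem_inj_iff (Finset.sort_nodup _ _)).1 h

/-! ### transport through an injective-on-T map -/

section Transport
variable {σ : ℕ → ℕ} {T : Finset ℕ} (hinj : Set.InjOn σ T)
include hinj

lemma tmem_rev {b : Finset ℕ} (hb : b ⊆ T) {x : ℕ} (hx : x ∈ T)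
    (h : σ x ∈ b.image σ) : x ∈ b := by
  obtain ⟨y, hy, hyx⟩ := Finset.mem_image.1 h
  rwa [hinj (hb hy) hx hyx] at hy

lemma timg_inj {b c : Finset ℕ} (hb : b ⊆ T) (hc : c ⊆ T)
    (h : b.image σ = c.image σ) : b = c := by
  apply Finset.ext
  intro x
  constructor
  · intro hx
    exact tmem_rev hinj hc (hb hx) (h ▸ Finset.mem_image_of_mem σ hx)
  · intro hx
    exact tmem_rev hinj hb (hc hx) (h ▸ Finset.mem_image_of_mem σ hx)

lemma tcard {b : Finset ℕ} (hb : b ⊆ T) : (b.image σ).card = b.card :=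
  Finset.card_image_of_injOn (hinj.mono (by exact_mod_cast hb))

lemma transportPair (D : Finset (Finset ℕ)) (hD : ∀ b ∈ D, b ⊆ T) {u v : ℕ}
    (hu : u ∈ T) (hv : v ∈ T)
    (h : ∃! b, b ∈ D ∧ u ∈ b ∧ v ∈ b) :
    ∃! c, c ∈ D.image (fun b => b.image σ) ∧ σ u ∈ c ∧ σ v ∈ c := by
  obtain ⟨b, ⟨hbD, hub, hvb⟩, huniq⟩ := h
  refine ⟨b.image σ, ⟨Finset.mem_image_of_mem _ hbD,
    Finset.mem_image_of_mem σ hub, Finset.mem_image_of_mem σ hvb⟩, ?_⟩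
  rintro c ⟨hc, huc, hvc⟩
  obtain ⟨b', hb'D, rfl⟩ := Finset.mem_image.1 hc
  rw [huniq b' ⟨hb'D, tmem_rev hinj (hD b' hb'D) hu huc, tmem_rev hinj (hD b' hb'D) hv hvc⟩]

lemma transportPC {P : Finset (Finset ℕ)} {S : Finset ℕ} (hS : S ⊆ T)
    (h : IsParallelClassOn S P) :
    IsParallelClassOn (S.image σ) (P.image (fun b => b.image σ)) := by
  constructor
  · intro c hc
    obtain ⟨b, hb, rfl⟩ := Finset.mem_image.1 hc
    exact Finset.image_subset_image (h.1 b hb)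
  · intro x hx
    obtain ⟨y, hy, rfl⟩ := Finset.mem_image.1 hx
    obtain ⟨b, ⟨hbP, hyb⟩, huniq⟩ := h.2 y hy
    refine ⟨b.image σ, ⟨Finset.mem_image_of_mem _ hbP, Finset.mem_image_of_mem σ hyb⟩, ?_⟩
    rintro c ⟨hcP, hyc⟩
    obtain ⟨b', hb', rfl⟩ := Finset.mem_image.1 hcP
    rw [huniq b' ⟨hb', tmem_rev hinj ((h.1 b' hb').trans hS) (hS hy) hyc⟩]

end Transport
/-! ### The case n = 1 : a concrete KTS(15) containing an STS(7) -/

def d1blocks : Finset (Finset ℕ) := insert Hc d2blocks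

def Rn1 : Finset (Finset (Finset ℕ)) :=
  {clsList.getD 0 ∅, clsList.getD 1 ∅, clsList.getD 2 ∅, clsList.getD 3 ∅,
   clsList.getD 4 ∅, clsList.getD 5 ∅, insert Hc (clsList.getD 6 ∅)}

theorem G1blk : ∀ b ∈ d1blocks, b ⊆ Finset.range 15 ∧ b.card = 3 := by decide
theorem G1pair : ∀ x ∈ Finset.range 15, ∀ y ∈ Finset.range 15, x ≠ y →
    (d1blocks.filter (fun b => x ∈ b ∧ y ∈ b)).card = 1 := by decide
theorem G1res1 : ∀ P ∈ Rn1, P ⊆ d1blocks ∧ PCdec (Finset.range 15) P := by decide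
theorem G1res2 : ∀ b ∈ d1blocks, (Rn1.filter (fun P => b ∈ P)).card = 1 := by decide
theorem G1a7 : a7 ⊆ d1blocks := by decide

theorem n1case : ExistsKTSSubSTS 15 7 := by
  refine ⟨Finset.range 15, S7, d1blocks, a7, ⟨⟨G1blk, ?_⟩, Rn1, ⟨?_, ?_⟩⟩,
    ⟨fun b hb => ⟨(F6blk b hb).1, (F6blk b hb).2.1⟩, ?_⟩, by decide, G1a7, by decide, by decide⟩
  · intro x hx y hy hxy
    exact euOfFilter (G1pair x hx y hy hxy)
  · intro P hP
    exact ⟨(G1res1 P hP).1, (G1res1 P hP).2.toPC⟩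
  · intro b hb
    exact euOfFilter (G1res2 b hb)
  · intro x hx y hy hxy
    exact euOfFilter (F6pair x hx y hy hxy)
/-! ### Counting partial parallel classes of a Kirkman frame of type 12^n -/

section Counting
variable {n : ℕ} {G : Fin n → Finset ℕ} {B : Finset (Finset ℕ)}
  {R : Finset (Finset (Finset ℕ))}

/-- the classes missing group `i` -/
noncomputable def Rset (G : Fin n → Finset ℕ) (R : Finset (Finset (Finset ℕ)))
    (i : Fin n) : Finset (Finset (Finset ℕ)) :=
  @Finset.filter _ (fun P => IsParallelClassOn (Finset.univ.biUnion G \ G i) P)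
    (Classical.decPred _) R

lemma mem_Rset {i : Fin n} {P : Finset (Finset ℕ)} :
    P ∈ Rset G R i ↔ P ∈ R ∧ IsParallelClassOn (Finset.univ.biUnion G \ G i) P := by
  unfold Rset; exact @Finset.mem_filter _ _ (Classical.decPred _) _ _

variable (hGcard : ∀ i, (G i).card = 12)
  (hGdisj : ∀ i j, i ≠ j → Disjoint (G i) (G j))

lemma group_unique (hGdisj : ∀ i j, i ≠ j → Disjoint (G i) (G j)) {x : ℕ} {i j : Fin n}
    (hi : x ∈ G i) (hj : x ∈ G j) : i = j := by
  by_contra hij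
  exact Finset.disjoint_left.1 (hGdisj i j hij) hi hj

include hGcard hGdisj

lemma cardVG : (Finset.univ.biUnion G).card = 12 * n := by
  rw [Finset.card_biUnion (fun i _ j _ hij => hGdisj i j hij)]
  simp [hGcard, Finset.sum_const, mul_comm]

variable (hBblk : ∀ b ∈ B, b ⊆ Finset.univ.biUnion G ∧ b.card = 3 ∧ ∀ i, (b ∩ G i).card ≤ 1)
  (hBpair : ∀ x y : ℕ, (∃ i j, i ≠ j ∧ x ∈ G i ∧ y ∈ G j) → ∃! b, b ∈ B ∧ x ∈ b ∧ y ∈ b)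

include hBblk

omit hGcard hGdisj in
lemma blk_not_two {b : Finset ℕ} (hb : b ∈ B) {x y : ℕ} (hx : x ∈ b) (hy : y ∈ b)
    (hxy : x ≠ y) {i : Fin n} (hxi : x ∈ G i) (hyi : y ∈ G i) : False := by
  have hsub : ({x, y} : Finset ℕ) ⊆ b ∩ G i := by
    intro z hz
    rcases Finset.mem_insert.1 hz with rfl | hz
    · exact Finset.mem_inter.2 ⟨hx, hxi⟩
    · rw [Finset.mem_singleton] at hz; subst hz; exact Finset.mem_inter.2 ⟨hy, hyi⟩
  have h2 : ({x, y} : Finset ℕ).card = 2 := Finset.card_pair hxy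
  have := Finset.card_le_card hsub
  have := (hBblk b hb).2.2 i
  omega

include hBpair

lemma frame_deg {j : Fin n} {x : ℕ} (hx : x ∈ G j) :
    (B.filter (fun b => x ∈ b)).card = 6 * (n - 1) := by
  classical
  set Bx := B.filter (fun b => x ∈ b) with hBx
  have hmem : ∀ b, b ∈ Bx ↔ b ∈ B ∧ x ∈ b := fun b => Finset.mem_filter
  have hVG : (Finset.univ.biUnion G) \ G j = Bx.biUnion (fun b => b.erase x) := by
    apply Finset.ext
    intro y
    constructor
    · intro hy
      obtain ⟨hyVG, hyGj⟩ := Finset.mem_sdiff.1 hy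
      obtain ⟨k, _, hyk⟩ := Finset.mem_biUnion.1 hyVG
      have hkj : k ≠ j := fun h => hyGj (h ▸ hyk)
      obtain ⟨b, ⟨hbB, hxb, hyb⟩, _⟩ := hBpair x y ⟨j, k, (Ne.symm hkj), hx, hyk⟩
      refine Finset.mem_biUnion.2 ⟨b, (hmem b).2 ⟨hbB, hxb⟩, Finset.mem_erase.2 ⟨?_, hyb⟩⟩
      intro h; subst h; exact (Finset.disjoint_left.1 (hGdisj k j hkj) hyk) hx
    · intro hy
      obtain ⟨b, hb, hyb⟩ := Finset.mem_biUnion.1 hy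
      obtain ⟨hbB, hxb⟩ := (hmem b).1 hb
      obtain ⟨hyx, hyb'⟩ := Finset.mem_erase.1 hyb
      refine Finset.mem_sdiff.2 ⟨(hBblk b hbB).1 hyb', ?_⟩
      intro hyGj
      exact blk_not_two hBblk hbB hyb' hxb hyx hyGj hx
  have hdisj : ∀ b ∈ Bx, ∀ c ∈ Bx, b ≠ c → Disjoint (b.erase x) (c.erase x) := by
    intro b hb c hc hbc
    rw [Finset.disjoint_left]
    intro y hyb hyc
    obtain ⟨hbB, hxb⟩ := (hmem b).1 hb
    obtain ⟨hcB, hxc⟩ := (hmem c).1 hc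
    obtain ⟨hyx, hyb'⟩ := Finset.mem_erase.1 hyb
    obtain ⟨_, hyc'⟩ := Finset.mem_erase.1 hyc
    -- y is in some group k ≠ j
    obtain ⟨k, _, hyk⟩ := Finset.mem_biUnion.1 ((hBblk b hbB).1 hyb')
    have hkj : k ≠ j := by
      intro h; subst h
      exact blk_not_two hBblk hbB hyb' hxb hyx hyk hx
    obtain ⟨b', _, huniq⟩ := hBpair x y ⟨j, k, Ne.symm hkj, hx, hyk⟩
    exact hbc ((huniq b ⟨hbB, hxb, hyb'⟩).trans (huniq c ⟨hcB, hxc, hyc'⟩).symm)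
  have hcard : ((Finset.univ.biUnion G) \ G j).card = 12 * n - 12 := by
    rw [Finset.card_sdiff_of_subset (Finset.subset_biUnion_of_mem G (Finset.mem_univ j)),
      cardVG hGcard hGdisj, hGcard]
  have hsum : ((Finset.univ.biUnion G) \ G j).card = 2 * Bx.card := by
    rw [hVG, Finset.card_biUnion hdisj]
    have h2 : ∀ b ∈ Bx, (b.erase x).card = 2 := by
      intro b hb
      obtain ⟨hbB, hxb⟩ := (hmem b).1 hb
      rw [Finset.card_erase_of_mem hxb, (hBblk b hbB).2.1]
    rw [Finset.sum_congr rfl h2, Finset.sum_const, smul_eq_mul, mul_comm]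
  have hn1 : 1 ≤ n := Nat.pos_of_ne_zero (by rintro rfl; exact absurd j.2 (by omega))
  omega

variable (hR1 : ∀ P ∈ R, P ⊆ B ∧ ∃ i, IsParallelClassOn (Finset.univ.biUnion G \ G i) P)
  (hR2 : ∀ b ∈ B, ∃! P, P ∈ R ∧ b ∈ P)

include hR1 hR2

omit hBblk hBpair hR1 hR2 in
lemma miss_unique {P : Finset (Finset ℕ)} {i j : Fin n}
    (hi : IsParallelClassOn (Finset.univ.biUnion G \ G i) P)
    (hj : IsParallelClassOn (Finset.univ.biUnion G \ G j) P) : i = j := by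
  by_contra hij
  obtain ⟨x, hx⟩ := Finset.card_pos.1 (by rw [hGcard j]; omega : 0 < (G j).card)
  have hxVG : x ∈ Finset.univ.biUnion G \ G i := by
    refine Finset.mem_sdiff.2 ⟨Finset.mem_biUnion.2 ⟨j, Finset.mem_univ j, hx⟩, ?_⟩
    intro h; exact Finset.disjoint_left.1 (hGdisj i j hij) h hx
  obtain ⟨b, ⟨hbP, hxb⟩, _⟩ := hi.2 x hxVG
  exact (Finset.mem_sdiff.1 (hj.1 b hbP hxb)).2 hx

lemma classes_card (hn2 : 2 ≤ n) (i : Fin n) : (Rset G R i).card = 6 := by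
  classical
  -- each class belongs to exactly one Rset
  have hmissE : ∀ P ∈ R, ∃ i, P ∈ Rset G R i := by
    intro P hP
    obtain ⟨i, hi⟩ := (hR1 P hP).2
    exact ⟨i, mem_Rset.2 ⟨hP, hi⟩⟩
  have hRdisj : ∀ (i j : Fin n), i ≠ j → Disjoint (Rset G R i) (Rset G R j) := by
    intro i j hij
    rw [Finset.disjoint_left]
    intro P hPi hPj
    exact hij (miss_unique hGcard hGdisj
      (mem_Rset.1 hPi).2 (mem_Rset.1 hPj).2)
  have hRcup : R = Finset.univ.biUnion (Rset G R) := by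
    apply Finset.ext; intro P
    constructor
    · intro hP
      obtain ⟨i, hi⟩ := hmissE P hP
      exact Finset.mem_biUnion.2 ⟨i, Finset.mem_univ i, hi⟩
    · intro hP
      obtain ⟨i, _, hi⟩ := Finset.mem_biUnion.1 hP
      exact (mem_Rset.1 hi).1
  have hRcard : R.card = ∑ i, (Rset G R i).card := by
    conv_lhs => rw [hRcup]
    exact Finset.card_biUnion (fun i _ j _ hij => hRdisj i j hij)
  -- for x ∈ G j, classes covering x are exactly those not missing G j
  have key : ∀ (j : Fin n) (x : ℕ), x ∈ G j → R.card = 6 * (n - 1) + (Rset G R j).card := by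
    intro j x hx
    have hcov : R.filter (fun P => ∃ b ∈ P, x ∈ b)
        = R \ Rset G R j := by
      apply Finset.ext; intro P
      rw [Finset.mem_filter, Finset.mem_sdiff]
      constructor
      · rintro ⟨hPR, b, hbP, hxb⟩
        refine ⟨hPR, fun hPj => ?_⟩
        have := (mem_Rset.1 hPj).2.1 b hbP hxb
        exact (Finset.mem_sdiff.1 this).2 hx
      · rintro ⟨hPR, hPj⟩
        refine ⟨hPR, ?_⟩
        obtain ⟨i, hi⟩ := hmissE P hPR
        have hij : i ≠ j := fun h => hPj (h ▸ hi)
        have hxVG : x ∈ Finset.univ.biUnion G \ G i := by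
          refine Finset.mem_sdiff.2 ⟨Finset.mem_biUnion.2 ⟨j, Finset.mem_univ j, hx⟩, ?_⟩
          intro h; exact Finset.disjoint_left.1 (hGdisj i j hij) h hx
        obtain ⟨b, ⟨hbP, hxb⟩, _⟩ := (mem_Rset.1 hi).2.2 x hxVG
        exact ⟨b, hbP, hxb⟩
    -- bijection between blocks through x and classes covering x
    have hbij : (B.filter (fun b => x ∈ b)).card
        = (R.filter (fun P => ∃ b ∈ P, x ∈ b)).card := by
      classical
      set cls : Finset ℕ → Finset (Finset ℕ) :=
        fun b => if h : ∃ P, P ∈ R ∧ b ∈ P then h.choose else ∅ with hclsdef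
      have hcls1 : ∀ b ∈ B, cls b ∈ R ∧ b ∈ cls b := by
        intro b hb
        have he : ∃ P, P ∈ R ∧ b ∈ P := (hR2 b hb).exists
        simp only [hclsdef, dif_pos he]
        exact he.choose_spec
      have hcls2 : ∀ b ∈ B, ∀ P ∈ R, b ∈ P → P = cls b := by
        intro b hb P hP hbP
        obtain ⟨Q, hQ, hun⟩ := hR2 b hb
        rw [hun P ⟨hP, hbP⟩, hun (cls b) ⟨(hcls1 b hb).1, (hcls1 b hb).2⟩]
      apply Finset.card_bij (fun b _ => cls b)
      · intro b hb
        rw [Finset.mem_filter] at hb ⊢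
        exact ⟨(hcls1 b hb.1).1, b, (hcls1 b hb.1).2, hb.2⟩
      · intro b1 hb1 b2 hb2 heq
        rw [Finset.mem_filter] at hb1 hb2
        set P := cls b1 with hP
        have h1 : b1 ∈ P := (hcls1 b1 hb1.1).2
        have h2 : b2 ∈ P := heq ▸ (hcls1 b2 hb2.1).2
        have hPR : P ∈ R := (hcls1 b1 hb1.1).1
        obtain ⟨k, hk⟩ := (hR1 P hPR).2
        have hxk : x ∈ Finset.univ.biUnion G \ G k := hk.1 b1 h1 hb1.2
        obtain ⟨b, _, hun⟩ := hk.2 x hxk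
        exact (hun b1 ⟨h1, hb1.2⟩).trans (hun b2 ⟨h2, hb2.2⟩).symm
      · intro P hP
        rw [Finset.mem_filter] at hP
        obtain ⟨hPR, b, hbP, hxb⟩ := hP
        have hbB : b ∈ B := (hR1 P hPR).1 hbP
        exact ⟨b, Finset.mem_filter.2 ⟨hbB, hxb⟩, (hcls2 b hbB P hPR hbP).symm⟩
    have hsub : Rset G R j ⊆ R := fun P hP => (mem_Rset.1 hP).1
    have hdeg := frame_deg hGcard hGdisj hBblk hBpair hx
    have hcard2 := Finset.card_sdiff_of_subset hsub
    have hle := Finset.card_le_card hsub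
    rw [← hcov, ← hbij, hdeg] at hcard2
    omega
  -- all the counts are equal, and they sum to R.card
  have hnonempty : ∀ j : Fin n, ∃ x, x ∈ G j := by
    intro j
    obtain ⟨x, hx⟩ := Finset.card_pos.1 (by rw [hGcard j]; omega : 0 < (G j).card)
    exact ⟨x, hx⟩
  have heq : ∀ j : Fin n, (Rset G R j).card = (Rset G R i).card := by
    intro j
    obtain ⟨x, hx⟩ := hnonempty j
    obtain ⟨y, hy⟩ := hnonempty i
    have := key j x hx
    have := key i y hy
    omega
  have hsum : R.card = n * (Rset G R i).card := by
    rw [hRcard, Finset.sum_congr rfl (fun j _ => heq j), Finset.sum_const,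
      Finset.card_univ, Fintype.card_fin, smul_eq_mul]
  obtain ⟨x, hx⟩ := hnonempty i
  have hkey := key i x hx
  set c := (Rset G R i).card
  have h1 : n * c = 6 * (n - 1) + c := by omega
  obtain ⟨m, rfl⟩ : ∃ m, n = m + 1 := ⟨n - 1, by omega⟩
  have hm : 0 < m := by omega
  have h2 : m * c = m * 6 := by
    have hexp : (m + 1) * c = c + m * c := by ring
    have h6 : 6 * (m + 1 - 1) = m * 6 := by omega
    rw [hexp, h6] at h1
    omega
  have := Nat.eq_of_mul_eq_mul_left hm h2
  omega

end Counting
/-! ### The inflation maps -/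

section Build
variable {n : ℕ}

def mM (G : Fin n → Finset ℕ) : ℕ := (Finset.univ.biUnion G).sup id + 1

def XB (G : Fin n → Finset ℕ) : Finset ℕ := {mM G, mM G + 1, mM G + 2}

/-- the map sending the concrete 15 points into the `i`-th filled group -/
def sg (G W : Fin n → Finset ℕ) (i : Fin n) (k : ℕ) : ℕ :=
  if k < 6 then enumOf (W i) k
  else if k < 12 then enumOf (G i \ W i) (k - 6)
  else mM G + (k - 12)

def tB (G W : Fin n → Finset ℕ) (i : Fin n) (D : Finset (Finset ℕ)) : Finset (Finset ℕ) :=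
  D.image (fun b => b.image (sg G W i))

variable {G W : Fin n → Finset ℕ}

lemma mM_gt {x : ℕ} (hx : x ∈ Finset.univ.biUnion G) : x < mM G :=
  lt_of_le_of_lt (Finset.le_sup (f := id) hx) (Nat.lt_succ_self _)

lemma mM_notVG : mM G ∉ Finset.univ.biUnion G := fun h => absurd (mM_gt h) (by omega)

lemma hXcard : (XB G).card = 3 := by
  rw [XB, Finset.card_insert_of_notMem (by simp), Finset.card_insert_of_notMem (by simp),
    Finset.card_singleton]

lemma X_disj_VG {x : ℕ} (hx : x ∈ Finset.univ.biUnion G) : x ∉ XB G := by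
  have := mM_gt hx
  simp only [XB, Finset.mem_insert, Finset.mem_singleton]
  omega

variable (hGcard : ∀ i, (G i).card = 12) (hWcard : ∀ i, (W i).card = 6)
  (hWG : ∀ i, W i ⊆ G i)

include hGcard hWcard hWG

lemma hGWcard (i : Fin n) : (G i \ W i).card = 6 := by
  rw [Finset.card_sdiff_of_subset (hWG i), hGcard, hWcard]

omit hGcard hWG in
lemma sg_w {i : Fin n} {k : ℕ} (hk : k < 6) : sg G W i k ∈ W i := by
  rw [sg, if_pos hk]
  exact enumOf_mem _ (by rw [hWcard]; omega)

lemma sg_gw {i : Fin n} {k : ℕ} (h6 : 6 ≤ k) (h12 : k < 12) : sg G W i k ∈ G i \ W i := by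
  rw [sg, if_neg (by omega), if_pos h12]
  exact enumOf_mem _ (by rw [hGWcard hGcard hWcard hWG]; omega)

lemma sg_g {i : Fin n} {k : ℕ} (hk : k < 12) : sg G W i k ∈ G i := by
  by_cases h6 : k < 6
  · exact hWG i (sg_w hWcard h6)
  · exact (Finset.mem_sdiff.1 (sg_gw hGcard hWcard hWG (by omega) hk)).1

omit hGcard hWcard hWG in
lemma sg_x {i : Fin n} {k : ℕ} (h12 : 12 ≤ k) : sg G W i k = mM G + (k - 12) := by
  rw [sg, if_neg (by omega), if_neg (by omega)]

lemma sg_lt {i : Fin n} {k : ℕ} (hk : k < 12) : sg G W i k < mM G :=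
  mM_gt (Finset.mem_biUnion.2 ⟨i, Finset.mem_univ i, sg_g hGcard hWcard hWG hk⟩)

lemma sg_inj (i : Fin n) : Set.InjOn (sg G W i) (Finset.range 15 : Finset ℕ) := by
  intro k hk l hl h
  simp only [Finset.coe_range, Set.mem_Iio] at hk hl
  rcases lt_or_ge k 12 with hk12 | hk12
  · rcases lt_or_ge l 12 with hl12 | hl12
    · -- both in the group
      rcases lt_or_ge k 6 with hk6 | hk6 <;> rcases lt_or_ge l 6 with hl6 | hl6
      · rw [sg, if_pos hk6, sg, if_pos hl6] at h
        exact enumOf_inj _ (by rw [hWcard]; omega) (by rw [hWcard]; omega) h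
      · exfalso
        have h1 := sg_w (G := G) hWcard hk6 (i := i)
        have h2 := sg_gw hGcard hWcard hWG hl6 hl12 (i := i)
        rw [h] at h1
        exact (Finset.mem_sdiff.1 h2).2 h1
      · exfalso
        have h1 := sg_w (G := G) hWcard hl6 (i := i)
        have h2 := sg_gw hGcard hWcard hWG hk6 hk12 (i := i)
        rw [← h] at h1
        exact (Finset.mem_sdiff.1 h2).2 h1
      · rw [sg, if_neg (by omega), if_pos hk12, sg, if_neg (by omega), if_pos hl12] at h
        have := enumOf_inj _ (by rw [hGWcard hGcard hWcard hWG]; omega)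
          (by rw [hGWcard hGcard hWcard hWG]; omega) h
        omega
    · exfalso
      have := sg_lt hGcard hWcard hWG hk12 (i := i)
      rw [h, sg_x hl12] at this
      omega
  · rcases lt_or_ge l 12 with hl12 | hl12
    · exfalso
      have := sg_lt hGcard hWcard hWG hl12 (i := i)
      rw [← h, sg_x hk12] at this
      omega
    · rw [sg_x hk12, sg_x hl12] at h
      omega

omit hGcard hWG in
lemma sg_img6 (i : Fin n) : (Finset.range 6).image (sg G W i) = W i := by
  apply Finset.ext; intro x
  constructor
  · intro hx
    obtain ⟨k, hk, rfl⟩ := Finset.mem_image.1 hx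
    exact sg_w hWcard (Finset.mem_range.1 hk)
  · intro hx
    obtain ⟨k, hk, hkx⟩ := enumOf_surj _ hx
    rw [hWcard] at hk
    exact Finset.mem_image.2 ⟨k, Finset.mem_range.2 hk, by rw [sg, if_pos hk]; exact hkx⟩

lemma sg_img12 (i : Fin n) : (Finset.range 12).image (sg G W i) = G i := by
  apply Finset.ext; intro x
  constructor
  · intro hx
    obtain ⟨k, hk, rfl⟩ := Finset.mem_image.1 hx
    exact sg_g hGcard hWcard hWG (Finset.mem_range.1 hk)
  · intro hx
    by_cases hxw : x ∈ W i
    · obtain ⟨k, hk, hkx⟩ := enumOf_surj _ hxw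
      rw [hWcard] at hk
      exact Finset.mem_image.2 ⟨k, Finset.mem_range.2 (by omega),
        by rw [sg, if_pos hk]; exact hkx⟩
    · obtain ⟨k, hk, hkx⟩ := enumOf_surj _ (Finset.mem_sdiff.2 ⟨hx, hxw⟩)
      rw [hGWcard hGcard hWcard hWG] at hk
      refine Finset.mem_image.2 ⟨k + 6, Finset.mem_range.2 (by omega), ?_⟩
      rw [sg, if_neg (by omega), if_pos (by omega)]
      simpa using hkx

omit hGcard hWcard hWG in
lemma sg_imgH (i : Fin n) : Hc.image (sg G W i) = XB G := by
  have h12 : sg G W i 12 = mM G := by rw [sg_x (by norm_num)]; norm_num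
  have h13 : sg G W i 13 = mM G + 1 := by rw [sg_x (by norm_num)]
  have h14 : sg G W i 14 = mM G + 2 := by rw [sg_x (by norm_num)]
  rw [show Hc = {12, 13, 14} from rfl]
  rw [Finset.image_insert, Finset.image_insert, Finset.image_singleton, h12, h13, h14]
  rfl

lemma sg_img15 (i : Fin n) : (Finset.range 15).image (sg G W i) = G i ∪ XB G := by
  have : (Finset.range 15) = Finset.range 12 ∪ Hc := by decide
  rw [this, Finset.image_union, sg_img12 hGcard hWcard hWG, sg_imgH]

omit hGcard hWG in
lemma sg_imgS7 (i : Fin n) : S7.image (sg G W i) = insert (mM G) (W i) := by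
  rw [S7eq, Finset.image_insert, sg_img6 hWcard, sg_x (by norm_num)]
  simp

end Build
/-! ### Transported designs and their properties -/

def D2T {n : ℕ} (G W : Fin n → Finset ℕ) (i : Fin n) : Finset (Finset ℕ) := tB G W i d2blocks
def fullT {n : ℕ} (G W : Fin n → Finset ℕ) (i : Fin n) (k : ℕ) : Finset (Finset ℕ) :=
  tB G W i (clsList.getD k ∅)
def a7T {n : ℕ} (G W : Fin n → Finset ℕ) (i : Fin n) : Finset (Finset ℕ) := tB G W i a7
def VV {n : ℕ} (G : Fin n → Finset ℕ) : Finset ℕ := Finset.univ.biUnion G ∪ XB G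
def BB {n : ℕ} (G W : Fin n → Finset ℕ) (B : Finset (Finset ℕ)) : Finset (Finset ℕ) :=
  (B ∪ Finset.univ.biUnion (fun i => D2T G W i)) ∪ {XB G}
def SStar {n : ℕ} (G W : Fin n → Finset ℕ) : Finset (Finset ℕ) :=
  insert (XB G) (Finset.univ.biUnion (fun i => fullT G W i 6))
open Classical in
noncomputable def mgrp {n : ℕ} (G : Fin n → Finset ℕ) (i0 : Fin n) (P : Finset (Finset ℕ)) :
    Fin n :=
  if h : ∃ i, IsParallelClassOn (Finset.univ.biUnion G \ G i) P then h.choose else i0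
noncomputable def mrgd {n : ℕ} (G W : Fin n → Finset ℕ) (R : Finset (Finset (Finset ℕ)))
    (i0 : Fin n) (P : Finset (Finset ℕ)) : Finset (Finset ℕ) :=
  P ∪ fullT G W (mgrp G i0 P) ((Rset G R (mgrp G i0 P)).toList.idxOf P)
noncomputable def RR {n : ℕ} (G W : Fin n → Finset ℕ) (R : Finset (Finset (Finset ℕ)))
    (i0 : Fin n) : Finset (Finset (Finset ℕ)) :=
  R.image (mrgd G W R i0) ∪ {SStar G W}
def UU {n : ℕ} (G W : Fin n → Finset ℕ) : Finset ℕ := insert (mM G) (Finset.univ.biUnion W)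
def AAd {n : ℕ} (G W : Fin n → Finset ℕ) (A : Finset (Finset ℕ)) : Finset (Finset ℕ) :=
  A ∪ Finset.univ.biUnion (fun i => a7T G W i)

section Build2
variable {n : ℕ} {G W : Fin n → Finset ℕ}
  (hGcard : ∀ i, (G i).card = 12) (hWcard : ∀ i, (W i).card = 6) (hWG : ∀ i, W i ⊆ G i)

include hGcard hWcard hWG

lemma timg_inter {i : Fin n} {b s : Finset ℕ} (hb : b ⊆ Finset.range 15)
    (hs : s ⊆ Finset.range 15) :
    (b.image (sg G W i)) ∩ (s.image (sg G W i)) = (b ∩ s).image (sg G W i) :=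
  (Finset.image_inter_of_injOn _ _ ((sg_inj hGcard hWcard hWG i).mono
    (by exact_mod_cast Finset.union_subset hb hs))).symm

lemma hD2blk {i : Fin n} {c : Finset ℕ} (hc : c ∈ D2T G W i) :
    c ⊆ G i ∪ XB G ∧ c.card = 3 ∧ (c ∩ XB G).card ≤ 1 ∧ 2 ≤ (c ∩ G i).card := by
  obtain ⟨b, hb, rfl⟩ := Finset.mem_image.1 hc
  obtain ⟨hb15, hb3, hbH, hb12⟩ := F1 b hb
  have hHsub : Hc ⊆ Finset.range 15 := by decide
  have h12sub : Finset.range 12 ⊆ Finset.range 15 := by decide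
  refine ⟨?_, ?_, ?_, ?_⟩
  · rw [← sg_img15 hGcard hWcard hWG]
    exact Finset.image_subset_image hb15
  · rw [tcard (sg_inj hGcard hWcard hWG i) hb15, hb3]
  · rw [← sg_imgH i, timg_inter hGcard hWcard hWG hb15 hHsub,
      tcard (sg_inj hGcard hWcard hWG i) ((Finset.inter_subset_left).trans hb15)]
    exact hbH
  · rw [← sg_img12 hGcard hWcard hWG, timg_inter hGcard hWcard hWG hb15 h12sub,
      tcard (sg_inj hGcard hWcard hWG i) ((Finset.inter_subset_left).trans hb15)]
    exact hb12

lemma hD2pair (i : Fin n) : ∀ x ∈ G i ∪ XB G, ∀ y ∈ G i ∪ XB G, x ≠ y →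
    ¬(x ∈ XB G ∧ y ∈ XB G) → ∃! c, c ∈ D2T G W i ∧ x ∈ c ∧ y ∈ c := by
  intro x hx y hy hxy hXX
  rw [← sg_img15 hGcard hWcard hWG] at hx hy
  obtain ⟨u, hu, rfl⟩ := Finset.mem_image.1 hx
  obtain ⟨v, hv, rfl⟩ := Finset.mem_image.1 hy
  have huv : u ≠ v := fun h => hxy (h ▸ rfl)
  have hH : ¬(u ∈ Hc ∧ v ∈ Hc) := by
    rintro ⟨hu', hv'⟩
    exact hXX ⟨sg_imgH i ▸ Finset.mem_image_of_mem _ hu', sg_imgH i ▸ Finset.mem_image_of_mem _ hv'⟩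
  exact transportPair (sg_inj hGcard hWcard hWG i) d2blocks (fun b hb => (F1 b hb).1) hu hv
    (euOfFilter (F2 u hu v hv huv hH))

lemma hfullPC {i : Fin n} {k : ℕ} (hk : k < 6) :
    IsParallelClassOn (G i ∪ XB G) (fullT G W i k) := by
  have h := transportPC (sg_inj hGcard hWcard hWG i) (Finset.Subset.refl _) (F3full k hk).toPC
  rwa [sg_img15 hGcard hWcard hWG] at h

lemma hpcPC (i : Fin n) : IsParallelClassOn (G i) (fullT G W i 6) := by
  have h := transportPC (sg_inj hGcard hWcard hWG i)
    (by decide : Finset.range 12 ⊆ Finset.range 15) F3pc.toPC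
  rwa [sg_img12 hGcard hWcard hWG] at h

omit hGcard hWcard hWG in
lemma hclsSub {i : Fin n} {k : ℕ} (hk : k < 7) : fullT G W i k ⊆ D2T G W i :=
  Finset.image_subset_image (F5sub k hk)

lemma hclsDisj {i : Fin n} {k k' : ℕ} (hk : k < 7) (hk' : k' < 7) (hne : k ≠ k')
    {c : Finset ℕ} (h1 : c ∈ fullT G W i k) (h2 : c ∈ fullT G W i k') : False := by
  obtain ⟨b, hb, rfl⟩ := Finset.mem_image.1 h1
  obtain ⟨b', hb', heq⟩ := Finset.mem_image.1 h2
  have hb15 : b ⊆ Finset.range 15 := (F1 b (F5sub k hk hb)).1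
  have hb15' : b' ⊆ Finset.range 15 := (F1 b' (F5sub k' hk' hb')).1
  rw [timg_inj (sg_inj hGcard hWcard hWG i) hb15' hb15 heq] at hb'
  have hlen : clsList.length = 7 := by decide
  have hpw := List.pairwise_iff_getElem.1 F5disj
  rcases Nat.lt_or_ge k k' with h | h
  · exact hpw k k' (by omega) (by omega) h b
      (by rwa [List.getD_eq_getElem _ _ (by omega)] at hb)
      (by rwa [List.getD_eq_getElem _ _ (by omega)] at hb')
  · exact hpw k' k (by omega) (by omega) (by omega) b
      (by rwa [List.getD_eq_getElem _ _ (by omega)] at hb')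
      (by rwa [List.getD_eq_getElem _ _ (by omega)] at hb)

omit hGcard hWcard hWG in
lemma hclsCov {i : Fin n} {c : Finset ℕ} (hc : c ∈ D2T G W i) :
    ∃ k < 7, c ∈ fullT G W i k := by
  obtain ⟨b, hb, rfl⟩ := Finset.mem_image.1 hc
  obtain ⟨k, hk, hbk⟩ := F4 b hb
  exact ⟨k, hk, Finset.mem_image_of_mem _ hbk⟩

lemma ha7blk {i : Fin n} {c : Finset ℕ} (hc : c ∈ a7T G W i) :
    c ⊆ insert (mM G) (W i) ∧ c.card = 3 ∧ 2 ≤ (c ∩ W i).card := by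
  obtain ⟨b, hb, rfl⟩ := Finset.mem_image.1 hc
  obtain ⟨hbS, hb3, hb6⟩ := F6blk b hb
  have hS15 : S7 ⊆ Finset.range 15 := by decide
  have h615 : Finset.range 6 ⊆ Finset.range 15 := by decide
  have hb15 : b ⊆ Finset.range 15 := hbS.trans hS15
  refine ⟨?_, ?_, ?_⟩
  · rw [← sg_imgS7 hWcard i]
    exact Finset.image_subset_image hbS
  · rw [tcard (sg_inj hGcard hWcard hWG i) hb15, hb3]
  · rw [← sg_img6 hWcard i, timg_inter hGcard hWcard hWG hb15 h615,
      tcard (sg_inj hGcard hWcard hWG i) ((Finset.inter_subset_left).trans hb15)]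
    exact hb6

lemma ha7pair (i : Fin n) : ∀ x ∈ insert (mM G) (W i), ∀ y ∈ insert (mM G) (W i), x ≠ y →
    ∃! c, c ∈ a7T G W i ∧ x ∈ c ∧ y ∈ c := by
  intro x hx y hy hxy
  rw [← sg_imgS7 hWcard i] at hx hy
  obtain ⟨u, hu, rfl⟩ := Finset.mem_image.1 hx
  obtain ⟨v, hv, rfl⟩ := Finset.mem_image.1 hy
  have hS15 : S7 ⊆ Finset.range 15 := by decide
  have huv : u ≠ v := fun h => hxy (h ▸ rfl)
  exact transportPair (sg_inj hGcard hWcard hWG i) a7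
    (fun b hb => ((F6blk b hb).1).trans hS15) (hS15 hu) (hS15 hv)
    (euOfFilter (F6pair u hu v hv huv))

omit hGcard hWcard hWG in
lemma ha7sub (i : Fin n) : a7T G W i ⊆ D2T G W i := Finset.image_subset_image F6sub

end Build2

/-- merging two parallel classes on disjoint point sets -/
lemma PCunion {S1 S2 : Finset ℕ} {P1 P2 : Finset (Finset ℕ)}
    (h1 : IsParallelClassOn S1 P1) (h2 : IsParallelClassOn S2 P2)
    (hd : ∀ x ∈ S1, x ∉ S2) : IsParallelClassOn (S1 ∪ S2) (P1 ∪ P2) := by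
  constructor
  · intro b hb
    rcases Finset.mem_union.1 hb with h | h
    · exact (h1.1 b h).trans Finset.subset_union_left
    · exact (h2.1 b h).trans Finset.subset_union_right
  · intro x hx
    rcases Finset.mem_union.1 hx with h | h
    · obtain ⟨b, ⟨hbP, hxb⟩, huniq⟩ := h1.2 x h
      refine ⟨b, ⟨Finset.mem_union_left _ hbP, hxb⟩, ?_⟩
      rintro c ⟨hcP, hxc⟩
      rcases Finset.mem_union.1 hcP with h' | h'
      · exact huniq c ⟨h', hxc⟩
      · exact absurd (h2.1 c h' hxc) (hd x h)
    · obtain ⟨b, ⟨hbP, hxb⟩, huniq⟩ := h2.2 x h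
      refine ⟨b, ⟨Finset.mem_union_right _ hbP, hxb⟩, ?_⟩
      rintro c ⟨hcP, hxc⟩
      rcases Finset.mem_union.1 hcP with h' | h'
      · exact absurd h (hd x (h1.1 c h' hxc))
      · exact huniq c ⟨h', hxc⟩

lemma two_le_card {s : Finset ℕ} {x y : ℕ} (hx : x ∈ s) (hy : y ∈ s) (hxy : x ≠ y) :
    2 ≤ s.card := Finset.one_lt_card.2 ⟨x, hx, y, hy, hxy⟩

lemma exists_pair_of_card {s : Finset ℕ} (h : 2 ≤ s.card) : ∃ x ∈ s, ∃ y ∈ s, x ≠ y :=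
  Finset.one_lt_card.1 h
/-! ### The main construction for n ≥ 2 -/

set_option maxHeartbeats 2000000 in
theorem main2 {n : ℕ} (hn2 : 2 ≤ n) (G W : Fin n → Finset ℕ) (B A : Finset (Finset ℕ))
    (R : Finset (Finset (Finset ℕ)))
    (hGcard : ∀ i, (G i).card = 12)
    (hGdisj : ∀ i j, i ≠ j → Disjoint (G i) (G j))
    (hBblk : ∀ b ∈ B, b ⊆ Finset.univ.biUnion G ∧ b.card = 3 ∧ ∀ i, (b ∩ G i).card ≤ 1)
    (hBpair : ∀ x y : ℕ, (∃ i j, i ≠ j ∧ x ∈ G i ∧ y ∈ G j) → ∃! b, b ∈ B ∧ x ∈ b ∧ y ∈ b)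
    (hR1 : ∀ P ∈ R, P ⊆ B ∧ ∃ i, IsParallelClassOn (Finset.univ.biUnion G \ G i) P)
    (hR2 : ∀ b ∈ B, ∃! P, P ∈ R ∧ b ∈ P)
    (hWcard : ∀ i, (W i).card = 6)
    (hWdisj : ∀ i j, i ≠ j → Disjoint (W i) (W j))
    (hAblk : ∀ b ∈ A, b ⊆ Finset.univ.biUnion W ∧ b.card = 3 ∧ ∀ i, (b ∩ W i).card ≤ 1)
    (hApair : ∀ x y : ℕ, (∃ i j, i ≠ j ∧ x ∈ W i ∧ y ∈ W j) → ∃! b, b ∈ A ∧ x ∈ b ∧ y ∈ b)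
    (hWG : ∀ i, W i ⊆ G i) (hAB : A ⊆ B) :
    ExistsKTSSubSTS (12 * n + 3) (6 * n + 1) := by
  classical
  have i0 : Fin n := ⟨0, by omega⟩
  have hGsub : ∀ i : Fin n, G i ⊆ Finset.univ.biUnion G :=
    fun i => Finset.subset_biUnion_of_mem G (Finset.mem_univ i)
  have hWsubG : ∀ i : Fin n, W i ⊆ Finset.univ.biUnion G := fun i => (hWG i).trans (hGsub i)
  have hWsub : ∀ i : Fin n, W i ⊆ Finset.univ.biUnion W :=
    fun i => Finset.subset_biUnion_of_mem W (Finset.mem_univ i)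
  have hmemVG : ∀ {x : ℕ}, x ∈ Finset.univ.biUnion G ↔ ∃ i, x ∈ G i := by
    intro x; simp [Finset.mem_biUnion]
  have hmemVW : ∀ {x : ℕ}, x ∈ Finset.univ.biUnion W ↔ ∃ i, x ∈ W i := by
    intro x; simp [Finset.mem_biUnion]
  have hXV : ∀ {x : ℕ}, x ∈ XB G → x ∉ Finset.univ.biUnion G := fun hx hv => X_disj_VG hv hx
  have hmX : mM G ∈ XB G := Finset.mem_insert_self _ _
  have hBBmem : ∀ {c : Finset ℕ},
      c ∈ BB G W B ↔ (c ∈ B ∨ (∃ i, c ∈ D2T G W i) ∨ c = XB G) := by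
    intro c
    constructor
    · intro hc
      rcases Finset.mem_union.1 hc with hc | hc
      · rcases Finset.mem_union.1 hc with hc | hc
        · exact Or.inl hc
        · obtain ⟨i, _, hci⟩ := Finset.mem_biUnion.1 hc
          exact Or.inr (Or.inl ⟨i, hci⟩)
      · exact Or.inr (Or.inr (Finset.mem_singleton.1 hc))
    · rintro (hc | ⟨i, hci⟩ | rfl)
      · exact Finset.mem_union_left _ (Finset.mem_union_left _ hc)
      · exact Finset.mem_union_left _ (Finset.mem_union_right _
          (Finset.mem_biUnion.2 ⟨i, Finset.mem_univ i, hci⟩))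
      · exact Finset.mem_union_right _ (Finset.mem_singleton_self _)
  have hXnotB : XB G ∉ B := fun h => absurd ((hBblk _ h).1 hmX) mM_notVG
  have hD2notB : ∀ {i : Fin n} {c : Finset ℕ}, c ∈ D2T G W i → c ∉ B := by
    intro i c hc hcB
    obtain ⟨_, _, _, h2⟩ := hD2blk hGcard hWcard hWG hc
    obtain ⟨x, hx, y, hy, hxy⟩ := exists_pair_of_card h2
    exact blk_not_two hBblk hcB (Finset.mem_inter.1 hx).1 (Finset.mem_inter.1 hy).1 hxy
      (Finset.mem_inter.1 hx).2 (Finset.mem_inter.1 hy).2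
  have hXnotD2 : ∀ i : Fin n, XB G ∉ D2T G W i := by
    intro i h
    obtain ⟨_, _, hX1, _⟩ := hD2blk hGcard hWcard hWG h
    rw [Finset.inter_self, hXcard] at hX1
    omega
  have hD2disj : ∀ {i j : Fin n} {c : Finset ℕ}, i ≠ j → c ∈ D2T G W i → c ∈ D2T G W j →
      False := by
    intro i j c hij hci hcj
    obtain ⟨hsubj, _, _, _⟩ := hD2blk hGcard hWcard hWG hcj
    obtain ⟨_, _, _, h2⟩ := hD2blk hGcard hWcard hWG hci
    obtain ⟨x, hx, _, _, _⟩ := exists_pair_of_card h2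
    have hxG := (Finset.mem_inter.1 hx).2
    have hxc := (Finset.mem_inter.1 hx).1
    rcases Finset.mem_union.1 (hsubj hxc) with h | h
    · exact hij (group_unique hGdisj hxG h)
    · exact hXV h (hGsub i hxG)
  have hclass : ∀ {z : ℕ}, z ∈ VV G → (∃ i, z ∈ G i) ∨ z ∈ XB G := by
    intro z hz
    rcases Finset.mem_union.1 hz with h | h
    · exact Or.inl (hmemVG.1 h)
    · exact Or.inr h
  -- the Steiner triple system
  have hSTS : IsSTS (VV G) (BB G W B) := by
    constructor
    · intro b hb
      rcases hBBmem.1 hb with h | ⟨i, h⟩ | rfl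
      · exact ⟨((hBblk b h).1).trans Finset.subset_union_left, (hBblk b h).2.1⟩
      · exact ⟨((hD2blk hGcard hWcard hWG h).1).trans
          (Finset.union_subset_union_left (hGsub i)), (hD2blk hGcard hWcard hWG h).2.1⟩
      · exact ⟨Finset.subset_union_right, hXcard⟩
    · intro x hx y hy hxy
      rcases hclass hx with ⟨i, hxi⟩ | hxX <;> rcases hclass hy with ⟨j, hyj⟩ | hyX
      · -- both in groups
        by_cases hij : i = j
        · subst hij
          have hxX' : x ∉ XB G := fun h => hXV h (hGsub i hxi)
          obtain ⟨c0, ⟨hc0D, hc0x, hc0y⟩, hc0u⟩ := hD2pair hGcard hWcard hWG i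
            x (Finset.mem_union_left _ hxi) y (Finset.mem_union_left _ hyj) hxy
            (fun h => hxX' h.1)
          refine ⟨c0, ⟨hBBmem.2 (Or.inr (Or.inl ⟨i, hc0D⟩)), hc0x, hc0y⟩, ?_⟩
          rintro c ⟨hcBB, hcx, hcy⟩
          rcases hBBmem.1 hcBB with h | ⟨k, h⟩ | rfl
          · exact (blk_not_two hBblk h hcx hcy hxy hxi hyj).elim
          · have hki : k = i := by
              rcases Finset.mem_union.1 ((hD2blk hGcard hWcard hWG h).1 hcx) with h' | h'
              · exact group_unique hGdisj h' hxi
              · exact absurd h' hxX'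
            subst hki
            exact hc0u c ⟨h, hcx, hcy⟩
          · exact absurd hcx hxX'
        · obtain ⟨b0, ⟨hb0B, hb0x, hb0y⟩, hb0u⟩ := hBpair x y ⟨i, j, hij, hxi, hyj⟩
          refine ⟨b0, ⟨hBBmem.2 (Or.inl hb0B), hb0x, hb0y⟩, ?_⟩
          rintro c ⟨hcBB, hcx, hcy⟩
          rcases hBBmem.1 hcBB with h | ⟨k, h⟩ | rfl
          · exact hb0u c ⟨h, hcx, hcy⟩
          · exfalso
            have hsub := (hD2blk hGcard hWcard hWG h).1
            have hki : k = i := by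
              rcases Finset.mem_union.1 (hsub hcx) with h' | h'
              · exact group_unique hGdisj h' hxi
              · exact absurd h' (fun hh => hXV hh (hGsub i hxi))
            have hkj : k = j := by
              rcases Finset.mem_union.1 (hsub hcy) with h' | h'
              · exact group_unique hGdisj h' hyj
              · exact absurd h' (fun hh => hXV hh (hGsub j hyj))
            exact hij (hki ▸ hkj)
          · exact absurd hcx (fun hh => hXV hh (hGsub i hxi))
      · -- x in group, y in X
        have hxX' : x ∉ XB G := fun h => hXV h (hGsub i hxi)
        obtain ⟨c0, ⟨hc0D, hc0x, hc0y⟩, hc0u⟩ := hD2pair hGcard hWcard hWG i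
          x (Finset.mem_union_left _ hxi) y (Finset.mem_union_right _ hyX) hxy
          (fun h => hxX' h.1)
        refine ⟨c0, ⟨hBBmem.2 (Or.inr (Or.inl ⟨i, hc0D⟩)), hc0x, hc0y⟩, ?_⟩
        rintro c ⟨hcBB, hcx, hcy⟩
        rcases hBBmem.1 hcBB with h | ⟨k, h⟩ | rfl
        · exact absurd ((hBblk c h).1 hcy) (hXV hyX)
        · have hki : k = i := by
            rcases Finset.mem_union.1 ((hD2blk hGcard hWcard hWG h).1 hcx) with h' | h'
            · exact group_unique hGdisj h' hxi
            · exact absurd h' hxX'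
          subst hki
          exact hc0u c ⟨h, hcx, hcy⟩
        · exact absurd hcx hxX'
      · -- x in X, y in group
        have hyX' : y ∉ XB G := fun h => hXV h (hGsub j hyj)
        obtain ⟨c0, ⟨hc0D, hc0y, hc0x⟩, hc0u⟩ := hD2pair hGcard hWcard hWG j
          y (Finset.mem_union_left _ hyj) x (Finset.mem_union_right _ hxX) (Ne.symm hxy)
          (fun h => hyX' h.1)
        refine ⟨c0, ⟨hBBmem.2 (Or.inr (Or.inl ⟨j, hc0D⟩)), hc0x, hc0y⟩, ?_⟩
        rintro c ⟨hcBB, hcx, hcy⟩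
        rcases hBBmem.1 hcBB with h | ⟨k, h⟩ | rfl
        · exact absurd ((hBblk c h).1 hcx) (hXV hxX)
        · have hkj : k = j := by
            rcases Finset.mem_union.1 ((hD2blk hGcard hWcard hWG h).1 hcy) with h' | h'
            · exact group_unique hGdisj h' hyj
            · exact absurd h' hyX'
          subst hkj
          exact hc0u c ⟨h, hcy, hcx⟩
        · exact absurd hcy hyX'
      · -- both in X
        refine ⟨XB G, ⟨hBBmem.2 (Or.inr (Or.inr rfl)), hxX, hyX⟩, ?_⟩
        rintro c ⟨hcBB, hcx, hcy⟩
        rcases hBBmem.1 hcBB with h | ⟨k, h⟩ | rfl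
        · exact absurd ((hBblk c h).1 hcx) (hXV hxX)
        · exfalso
          have := (hD2blk hGcard hWcard hWG h).2.2.1
          have h2 : 2 ≤ (c ∩ XB G).card := two_le_card
            (Finset.mem_inter.2 ⟨hcx, hxX⟩) (Finset.mem_inter.2 ⟨hcy, hyX⟩) hxy
          omega
        · rfl
  -- merged-class machinery
  have hRic : ∀ i, (Rset G R i).card = 6 :=
    classes_card hGcard hGdisj hBblk hBpair hR1 hR2 hn2
  have hmg1 : ∀ P ∈ R, IsParallelClassOn (Finset.univ.biUnion G \ G (mgrp G i0 P)) P := by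
    intro P hP
    obtain ⟨i, hi⟩ := (hR1 P hP).2
    have he : ∃ i, IsParallelClassOn (Finset.univ.biUnion G \ G i) P := ⟨i, hi⟩
    rw [mgrp, dif_pos he]
    exact he.choose_spec
  have hmg2 : ∀ P ∈ R, ∀ j, IsParallelClassOn (Finset.univ.biUnion G \ G j) P →
      j = mgrp G i0 P := fun P hP j hj =>
    miss_unique hGcard hGdisj hj (hmg1 P hP)
  have hmgR : ∀ P ∈ R, P ∈ Rset G R (mgrp G i0 P) := fun P hP => mem_Rset.2 ⟨hP, hmg1 P hP⟩
  have hLlen : ∀ i, (Rset G R i).toList.length = 6 := fun i => by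
    rw [Finset.length_toList, hRic]
  have hidx_lt : ∀ (i : Fin n) (P : Finset (Finset ℕ)), P ∈ Rset G R i →
      (Rset G R i).toList.idxOf P < 6 := by
    intro i P hP
    rw [← hLlen i]
    exact List.idxOf_lt_length_iff.2 ((Finset.mem_toList).2 hP)
  have hidx_inj : ∀ (i : Fin n) (P P' : Finset (Finset ℕ)), P ∈ Rset G R i → P' ∈ Rset G R i →
      (Rset G R i).toList.idxOf P = (Rset G R i).toList.idxOf P' → P = P' := by
    intro i P P' hP hP' h
    have h1 : (Rset G R i).toList.idxOf P < (Rset G R i).toList.length :=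
      List.idxOf_lt_length_iff.2 ((Finset.mem_toList).2 hP)
    have h2 : (Rset G R i).toList.idxOf P' < (Rset G R i).toList.length :=
      List.idxOf_lt_length_iff.2 ((Finset.mem_toList).2 hP')
    have e1 : (Rset G R i).toList.getD ((Rset G R i).toList.idxOf P) ∅ = P := by
      rw [List.getD_eq_getElem _ _ h1]; exact List.getElem_idxOf h1
    have e2 : (Rset G R i).toList.getD ((Rset G R i).toList.idxOf P') ∅ = P' := by
      rw [List.getD_eq_getElem _ _ h2]; exact List.getElem_idxOf h2
    rw [← e1, ← e2, h]
  have hidx_surj : ∀ (i : Fin n) (k : ℕ), k < 6 → ∃ P ∈ Rset G R i,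
      (Rset G R i).toList.idxOf P = k := by
    intro i k hk
    have hk' : k < (Rset G R i).toList.length := by rw [hLlen]; exact hk
    refine ⟨(Rset G R i).toList[k], (Finset.mem_toList).1 (List.getElem_mem hk'), ?_⟩
    have h1 : (Rset G R i).toList.idxOf ((Rset G R i).toList[k]) <
        (Rset G R i).toList.length :=
      List.idxOf_lt_length_iff.2 (List.getElem_mem hk')
    have := List.getElem_idxOf h1
    exact (List.Nodup.getElem_inj_iff (Finset.nodup_toList _)).1 this
  -- merged classes are parallel classes
  have hVVeq : ∀ i : Fin n,
      (Finset.univ.biUnion G \ G i) ∪ (G i ∪ XB G) = VV G := by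
    intro i
    rw [← Finset.union_assoc, Finset.sdiff_union_self_eq_union,
      Finset.union_eq_left.2 (hGsub i)]
    rfl
  have hmrgdPC : ∀ P ∈ R, IsParallelClassOn (VV G) (mrgd G W R i0 P) := by
    intro P hP
    have hk := hidx_lt _ P (hmgR P hP)
    have hu := PCunion (hmg1 P hP) (hfullPC hGcard hWcard hWG hk) (by
      intro z hz
      obtain ⟨hzV, hzG⟩ := Finset.mem_sdiff.1 hz
      intro hzc
      rcases Finset.mem_union.1 hzc with h | h
      · exact hzG h
      · exact hXV h hzV)
    rw [hVVeq] at hu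
    exact hu
  have hmrgd_sub : ∀ P ∈ R, mrgd G W R i0 P ⊆ BB G W B := by
    intro P hP c hc
    rcases Finset.mem_union.1 hc with h | h
    · exact hBBmem.2 (Or.inl ((hR1 P hP).1 h))
    · exact hBBmem.2 (Or.inr (Or.inl ⟨mgrp G i0 P, hclsSub (by
        have := hidx_lt _ P (hmgR P hP); omega) h⟩))
  have hSstarPC : IsParallelClassOn (VV G) (SStar G W) := by
    constructor
    · intro b hb
      rcases Finset.mem_insert.1 hb with rfl | hb
      · exact Finset.subset_union_right
      · obtain ⟨i, _, hbi⟩ := Finset.mem_biUnion.1 hb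
        exact ((hpcPC hGcard hWcard hWG i).1 b hbi).trans
          ((hGsub i).trans Finset.subset_union_left)
    · intro z hz
      rcases hclass hz with ⟨i, hzi⟩ | hzX
      · obtain ⟨c, ⟨hcP, hzc⟩, hcu⟩ := (hpcPC hGcard hWcard hWG i).2 z hzi
        refine ⟨c, ⟨Finset.mem_insert_of_mem
          (Finset.mem_biUnion.2 ⟨i, Finset.mem_univ i, hcP⟩), hzc⟩, ?_⟩
        rintro c' ⟨hc', hzc'⟩
        rcases Finset.mem_insert.1 hc' with rfl | hc'
        · exact (hXV hzc' (hGsub i hzi)).elim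
        · obtain ⟨j, _, hcj⟩ := Finset.mem_biUnion.1 hc'
          have hji : j = i := group_unique hGdisj ((hpcPC hGcard hWcard hWG j).1 c' hcj hzc') hzi
          subst hji
          exact hcu c' ⟨hcj, hzc'⟩
      · refine ⟨XB G, ⟨Finset.mem_insert_self _ _, hzX⟩, ?_⟩
        rintro c' ⟨hc', hzc'⟩
        rcases Finset.mem_insert.1 hc' with rfl | hc'
        · rfl
        · obtain ⟨j, _, hcj⟩ := Finset.mem_biUnion.1 hc'
          exact absurd ((hpcPC hGcard hWcard hWG j).1 c' hcj hzc')
            (fun hh => hXV hzX (hGsub j hh))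
  have hSstar_sub : SStar G W ⊆ BB G W B := by
    intro c hc
    rcases Finset.mem_insert.1 hc with rfl | hc
    · exact hBBmem.2 (Or.inr (Or.inr rfl))
    · obtain ⟨i, _, hci⟩ := Finset.mem_biUnion.1 hc
      exact hBBmem.2 (Or.inr (Or.inl ⟨i, hclsSub (by omega) hci⟩))
  have hRRmem : ∀ {Q : Finset (Finset ℕ)},
      Q ∈ RR G W R i0 ↔ (∃ P ∈ R, mrgd G W R i0 P = Q) ∨ Q = SStar G W := by
    intro Q
    simp only [RR, Finset.mem_union, Finset.mem_image, Finset.mem_singleton]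
  -- every block is in exactly one class
  have hmrgd_cases : ∀ P ∈ R, ∀ {c : Finset ℕ}, c ∈ mrgd G W R i0 P →
      c ∈ P ∨ c ∈ fullT G W (mgrp G i0 P) ((Rset G R (mgrp G i0 P)).toList.idxOf P) := by
    intro P hP c hc
    exact Finset.mem_union.1 hc
  have hfullD2 : ∀ (i : Fin n) (k : ℕ), k < 7 → ∀ {c : Finset ℕ}, c ∈ fullT G W i k →
      c ∈ D2T G W i := by
    intro i k hk c hc
    exact hclsSub hk hc
  have hRes2 : ∀ b ∈ BB G W B, ∃! Q, Q ∈ RR G W R i0 ∧ b ∈ Q := by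
    intro b hb
    rcases hBBmem.1 hb with hbB | ⟨i, hbD⟩ | rfl
    · -- frame block
      obtain ⟨P0, ⟨hP0R, hbP0⟩, hP0u⟩ := hR2 b hbB
      refine ⟨mrgd G W R i0 P0, ⟨hRRmem.2 (Or.inl ⟨P0, hP0R, rfl⟩),
        Finset.mem_union_left _ hbP0⟩, ?_⟩
      rintro Q ⟨hQ, hbQ⟩
      rcases hRRmem.1 hQ with ⟨P', hP'R, rfl⟩ | rfl
      · rcases hmrgd_cases P' hP'R hbQ with h | h
        · rw [hP0u P' ⟨hP'R, h⟩]
        · exact absurd hbB (hD2notB (hfullD2 _ _ (by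
            have := hidx_lt _ P' (hmgR P' hP'R); omega) h))
      · rcases Finset.mem_insert.1 hbQ with rfl | h
        · exact absurd hbB hXnotB
        · obtain ⟨j, _, hcj⟩ := Finset.mem_biUnion.1 h
          exact absurd hbB (hD2notB (hfullD2 _ 6 (by omega) hcj))
    · -- filling block
      obtain ⟨k, hk7, hbk⟩ := hclsCov hbD
      rcases Nat.lt_or_ge k 6 with hk6 | hk6
      · -- in a full class: belongs to the matching merged class
        obtain ⟨P0, hP0i, hP0idx⟩ := hidx_surj i k hk6
        have hP0R : P0 ∈ R := (mem_Rset.1 hP0i).1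
        have hmgP0 : mgrp G i0 P0 = i := (hmg2 P0 hP0R i (mem_Rset.1 hP0i).2).symm
        refine ⟨mrgd G W R i0 P0, ⟨hRRmem.2 (Or.inl ⟨P0, hP0R, rfl⟩),
          Finset.mem_union_right _ (by rw [hmgP0, hP0idx]; exact hbk)⟩, ?_⟩
        rintro Q ⟨hQ, hbQ⟩
        rcases hRRmem.1 hQ with ⟨P', hP'R, rfl⟩ | rfl
        · rcases hmrgd_cases P' hP'R hbQ with h | h
          · exact absurd ((hR1 P' hP'R).1 h) (hD2notB hbD)
          · have hmgP' : mgrp G i0 P' = i := by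
              by_contra hne
              exact hD2disj hne (hfullD2 _ _ (by
                have := hidx_lt _ P' (hmgR P' hP'R); omega) h) hbD
            have hidxP' := hidx_lt _ P' (hmgR P' hP'R)
            rw [hmgP'] at h
            have hkk : (Rset G R i).toList.idxOf P' = k := by
              by_contra hne
              exact hclsDisj hGcard hWcard hWG (by rw [← hmgP']; omega) (by omega) hne h hbk
            have : P' = P0 := hidx_inj i P' P0 (by rw [← hmgP']; exact hmgR P' hP'R) hP0i
              (by rw [hkk, hP0idx])
            rw [this]
        · exfalso
          rcases Finset.mem_insert.1 hbQ with rfl | h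
          · exact hXnotD2 i hbD
          · obtain ⟨j, _, hcj⟩ := Finset.mem_biUnion.1 h
            have hji : j = i := by
              by_contra hne
              exact hD2disj hne (hfullD2 _ 6 (by omega) hcj) hbD
            subst hji
            exact hclsDisj hGcard hWcard hWG (by omega) (by omega)
              (by omega : k ≠ 6) hbk hcj
      · -- in the partial class: belongs to SStar
        have hk6' : k = 6 := by omega
        subst hk6'
        refine ⟨SStar G W, ⟨hRRmem.2 (Or.inr rfl), Finset.mem_insert_of_mem
          (Finset.mem_biUnion.2 ⟨i, Finset.mem_univ i, hbk⟩)⟩, ?_⟩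
        rintro Q ⟨hQ, hbQ⟩
        rcases hRRmem.1 hQ with ⟨P', hP'R, rfl⟩ | rfl
        · exfalso
          rcases hmrgd_cases P' hP'R hbQ with h | h
          · exact absurd ((hR1 P' hP'R).1 h) (hD2notB hbD)
          · have hmgP' : mgrp G i0 P' = i := by
              by_contra hne
              exact hD2disj hne (hfullD2 _ _ (by
                have := hidx_lt _ P' (hmgR P' hP'R); omega) h) hbD
            have hidxP' := hidx_lt _ P' (hmgR P' hP'R)
            rw [hmgP'] at h hidxP'
            exact hclsDisj hGcard hWcard hWG (by omega) (by omega)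
              (by omega : (Rset G R i).toList.idxOf P' ≠ 6) h hbk
        · rfl
    · -- the block X
      refine ⟨SStar G W, ⟨hRRmem.2 (Or.inr rfl), Finset.mem_insert_self _ _⟩, ?_⟩
      rintro Q ⟨hQ, hbQ⟩
      rcases hRRmem.1 hQ with ⟨P', hP'R, rfl⟩ | rfl
      · exfalso
        rcases hmrgd_cases P' hP'R hbQ with h | h
        · exact hXnotB ((hR1 P' hP'R).1 h)
        · exact hXnotD2 _ (hfullD2 _ _ (by
            have := hidx_lt _ P' (hmgR P' hP'R); omega) h)
      · rfl
  have hRes : IsResolution (VV G) (BB G W B) (RR G W R i0) := by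
    refine ⟨?_, hRes2⟩
    intro Q hQ
    rcases hRRmem.1 hQ with ⟨P, hPR, rfl⟩ | rfl
    · exact ⟨hmrgd_sub P hPR, hmrgdPC P hPR⟩
    · exact ⟨hSstar_sub, hSstarPC⟩
  -- the subdesign
  have hmnotW : mM G ∉ Finset.univ.biUnion W := by
    intro h
    obtain ⟨i, hi⟩ := hmemVW.1 h
    exact mM_notVG (hWsubG i hi)
  have hUclass : ∀ {z : ℕ}, z ∈ UU G W → (∃ i, z ∈ W i) ∨ z = mM G := by
    intro z hz
    rcases Finset.mem_insert.1 hz with h | h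
    · exact Or.inr h
    · exact Or.inl (hmemVW.1 h)
  have hAAmem : ∀ {c : Finset ℕ},
      c ∈ AAd G W A ↔ (c ∈ A ∨ ∃ i, c ∈ a7T G W i) := by
    intro c
    simp only [AAd, Finset.mem_union, Finset.mem_biUnion, Finset.mem_univ, true_and]
  have ha7notA : ∀ {i : Fin n} {c : Finset ℕ}, c ∈ a7T G W i → c ∉ A := by
    intro i c hc hcA
    obtain ⟨_, _, h2⟩ := ha7blk hGcard hWcard hWG hc
    obtain ⟨x, hx, y, hy, hxy⟩ := exists_pair_of_card h2
    exact blk_not_two hAblk hcA (Finset.mem_inter.1 hx).1 (Finset.mem_inter.1 hy).1 hxy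
      (Finset.mem_inter.1 hx).2 (Finset.mem_inter.1 hy).2
  have hWnotm : ∀ {i : Fin n} {x : ℕ}, x ∈ W i → x ≠ mM G :=
    fun {i x} hx h => mM_notVG (hWsubG i (h ▸ hx))
  have ha7disj : ∀ {i j : Fin n} {c : Finset ℕ}, i ≠ j → c ∈ a7T G W i → c ∈ a7T G W j →
      False := by
    intro i j c hij hci hcj
    obtain ⟨hsubj, _, _⟩ := ha7blk hGcard hWcard hWG hcj
    obtain ⟨_, _, h2⟩ := ha7blk hGcard hWcard hWG hci
    obtain ⟨x, hx, _, _, _⟩ := exists_pair_of_card h2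
    have hxW := (Finset.mem_inter.1 hx).2
    have hxc := (Finset.mem_inter.1 hx).1
    rcases Finset.mem_insert.1 (hsubj hxc) with h | h
    · exact hWnotm hxW h
    · exact absurd (group_unique hWdisj hxW h) hij
  have hSTS7 : IsSTS (UU G W) (AAd G W A) := by
    constructor
    · intro b hb
      rcases hAAmem.1 hb with h | ⟨i, h⟩
      · refine ⟨((hAblk b h).1).trans (Finset.subset_insert _ _), (hAblk b h).2.1⟩
      · refine ⟨((ha7blk hGcard hWcard hWG h).1).trans ?_, (ha7blk hGcard hWcard hWG h).2.1⟩
        exact Finset.insert_subset_insert _ (hWsub i)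
    · intro x hx y hy hxy
      rcases hUclass hx with ⟨i, hxi⟩ | rfl <;> rcases hUclass hy with ⟨j, hyj⟩ | hy'
      · by_cases hij : i = j
        · subst hij
          obtain ⟨c0, ⟨hc0D, hc0x, hc0y⟩, hc0u⟩ := ha7pair hGcard hWcard hWG i
            x (Finset.mem_insert_of_mem hxi) y (Finset.mem_insert_of_mem hyj) hxy
          refine ⟨c0, ⟨hAAmem.2 (Or.inr ⟨i, hc0D⟩), hc0x, hc0y⟩, ?_⟩
          rintro c ⟨hcAA, hcx, hcy⟩
          rcases hAAmem.1 hcAA with h | ⟨k, h⟩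
          · exact (blk_not_two hAblk h hcx hcy hxy hxi hyj).elim
          · have hki : k = i := by
              rcases Finset.mem_insert.1 ((ha7blk hGcard hWcard hWG h).1 hcx) with h' | h'
              · exact absurd h' (hWnotm hxi)
              · exact group_unique hWdisj h' hxi
            subst hki
            exact hc0u c ⟨h, hcx, hcy⟩
        · obtain ⟨b0, ⟨hb0A, hb0x, hb0y⟩, hb0u⟩ := hApair x y ⟨i, j, hij, hxi, hyj⟩
          refine ⟨b0, ⟨hAAmem.2 (Or.inl hb0A), hb0x, hb0y⟩, ?_⟩
          rintro c ⟨hcAA, hcx, hcy⟩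
          rcases hAAmem.1 hcAA with h | ⟨k, h⟩
          · exact hb0u c ⟨h, hcx, hcy⟩
          · exfalso
            have hsub := (ha7blk hGcard hWcard hWG h).1
            have hki : k = i := by
              rcases Finset.mem_insert.1 (hsub hcx) with h' | h'
              · exact absurd h' (hWnotm hxi)
              · exact group_unique hWdisj h' hxi
            have hkj : k = j := by
              rcases Finset.mem_insert.1 (hsub hcy) with h' | h'
              · exact absurd h' (hWnotm hyj)
              · exact group_unique hWdisj h' hyj
            exact hij (hki ▸ hkj)
      · -- y = mM G
        subst hy'
        obtain ⟨c0, ⟨hc0D, hc0x, hc0y⟩, hc0u⟩ := ha7pair hGcard hWcard hWG i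
          x (Finset.mem_insert_of_mem hxi) (mM G) (Finset.mem_insert_self _ _) hxy
        refine ⟨c0, ⟨hAAmem.2 (Or.inr ⟨i, hc0D⟩), hc0x, hc0y⟩, ?_⟩
        rintro c ⟨hcAA, hcx, hcy⟩
        rcases hAAmem.1 hcAA with h | ⟨k, h⟩
        · exact (hmnotW ((hAblk c h).1 hcy)).elim
        · have hki : k = i := by
            rcases Finset.mem_insert.1 ((ha7blk hGcard hWcard hWG h).1 hcx) with h' | h'
            · exact absurd h' (hWnotm hxi)
            · exact group_unique hWdisj h' hxi
          subst hki
          exact hc0u c ⟨h, hcx, hcy⟩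
      · -- x = mM G
        obtain ⟨c0, ⟨hc0D, hc0y, hc0x⟩, hc0u⟩ := ha7pair hGcard hWcard hWG j
          y (Finset.mem_insert_of_mem hyj) (mM G) (Finset.mem_insert_self _ _) (Ne.symm hxy)
        refine ⟨c0, ⟨hAAmem.2 (Or.inr ⟨j, hc0D⟩), hc0x, hc0y⟩, ?_⟩
        rintro c ⟨hcAA, hcx, hcy⟩
        rcases hAAmem.1 hcAA with h | ⟨k, h⟩
        · exact (hmnotW ((hAblk c h).1 hcx)).elim
        · have hkj : k = j := by
            rcases Finset.mem_insert.1 ((ha7blk hGcard hWcard hWG h).1 hcy) with h' | h'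
            · exact absurd h' (hWnotm hyj)
            · exact group_unique hWdisj h' hyj
          subst hkj
          exact hc0u c ⟨h, hcy, hcx⟩
      · exact absurd hy'.symm hxy
  -- inclusions and cardinalities
  have hUsub : UU G W ⊆ VV G := by
    intro z hz
    rcases hUclass hz with ⟨i, hzi⟩ | rfl
    · exact Finset.mem_union_left _ (hWsubG i hzi)
    · exact Finset.mem_union_right _ hmX
  have hAAsub : AAd G W A ⊆ BB G W B := by
    intro c hc
    rcases hAAmem.1 hc with h | ⟨i, h⟩
    · exact hBBmem.2 (Or.inl (hAB h))
    · exact hBBmem.2 (Or.inr (Or.inl ⟨i, ha7sub i h⟩))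
  have hVcard : (VV G).card = 12 * n + 3 := by
    simp only [VV]
    rw [Finset.card_union_of_disjoint (Finset.disjoint_left.2 (fun x hx => X_disj_VG hx)),
      cardVG hGcard hGdisj, hXcard]
  have hUcard : (UU G W).card = 6 * n + 1 := by
    simp only [UU]
    rw [Finset.card_insert_of_notMem hmnotW,
      Finset.card_biUnion (fun i _ j _ hij => hWdisj i j hij)]
    simp [hWcard, Finset.sum_const, mul_comm]
  exact ⟨VV G, UU G W, BB G W B, AAd G W A, ⟨hSTS, RR G W R i0, hRes⟩, hSTS7,
    hUsub, hAAsub, hVcard, hUcard⟩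
/-- If there exists a Kirkman frame of type (6;12)^n, then there exists a
KTS(12n+3) containing an STS(6n+1) as a subdesign. -/
theorem stmt10 (n : ℕ) (hn : 0 < n) (h : ExistsFrameSubGDD 6 12 n) :
    ExistsKTSSubSTS (12 * n + 3) (6 * n + 1) := by
  obtain ⟨G, W, B, A, ⟨⟨hGcard, hGdisj, hBblk, hBpair⟩, R, hR1, hR2⟩,
    ⟨hWcard, hWdisj, hAblk, hApair⟩, hWG, hAB⟩ := h
  rcases Nat.lt_or_ge n 2 with h1 | h2
  · have hone : n = 1 := by omega
    subst hone
    simpa using n1case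
  · exact main2 h2 G W B A R hGcard hGdisj hBblk hBpair hR1 hR2 hWcard hWdisj hAblk
      hApair hWG hAB
end

section
/- If there exists a Kirkman frame of type (12;24)^n, then there exists a KTS(24n+3) which contains as a subdesign an STS(12n+1). -/
set_option maxHeartbeats 10000000
set_option maxRecDepth 1000000


/-! ### Template KTS(27) with sub-STS(13) -/

def tblocks : List (List ℕ) := [
[0,1,4],[0,2,8],[0,3,24],[0,5,7],[0,6,11],[0,9,10],[0,12,26],[0,13,25],[0,14,23],[0,15,22],[0,16,21],[0,17,20],[0,18,19],[1,2,5],[1,3,9],[1,6,8],[1,7,24],[1,10,11],[1,12,14],[1,13,26],[1,15,25],[1,16,23],[1,17,22],[1,18,21],[1,19,20],[2,3,6],[2,4,10],[2,7,9],[2,11,24],[2,12,16],[2,13,15],[2,14,26],[2,17,25],[2,18,23],[2,19,22],[2,20,21],[3,4,7],[3,5,11],[3,8,10],[3,12,18],[3,13,17],[3,14,16],[3,15,26],[3,19,25],[3,20,23],[3,21,22],[4,5,8],[4,6,24],[4,9,11],[4,12,20],[4,13,19],[4,14,18],[4,15,17],[4,16,26],[4,21,25],[4,22,23],[5,6,9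],[5,10,24],[5,12,22],[5,13,21],[5,14,20],[5,15,19],[5,16,18],[5,17,26],[5,23,25],[6,7,10],[6,12,25],[6,13,23],[6,14,22],[6,15,21],[6,16,20],[6,17,19],[6,18,26],[7,8,11],[7,12,13],[7,14,25],[7,15,23],[7,16,22],[7,17,21],[7,18,20],[7,19,26],[8,9,24],[8,12,15],[8,13,14],[8,16,25],[8,17,23],[8,18,22],[8,19,21],[8,20,26],[9,12,17],[9,13,16],[9,14,15],[9,18,25],[9,19,23],[9,20,22],[9,21,26],[10,12,19],[10,13,18],[10,14,17],[10,15,16],[10,20,25],[10,21,23],[10,22,26],[11,12,21],[11,13,20],[11,14,19],[11,15,18],[11,16,17],[11,22,25],[11,23,26],[12,23,24],[13,22,24],[14,21,24],[15,20,24],[16,19,24],[17,18,24],[24,25,26]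
]
def tclasses : List (List (List ℕ)) := [
[[0,2,8],[1,18,21],[3,14,16],[4,22,23],[5,15,19],[6,7,10],[9,12,17],[11,13,20],[24,25,26]],
[[0,1,4],[2,7,9],[3,19,25],[5,14,20],[6,18,26],[8,12,15],[10,21,23],[11,16,17],[13,22,24]],
[[0,14,23],[1,2,5],[3,8,10],[4,12,20],[6,15,21],[7,19,26],[9,13,16],[11,22,25],[17,18,24]],
[[0,18,19],[1,15,25],[2,3,6],[4,9,11],[5,13,21],[7,16,22],[8,20,26],[10,14,17],[12,23,24]],
[[0,13,25],[1,19,20],[2,12,16],[3,4,7],[5,10,24],[6,14,22],[8,17,23],[9,21,26],[11,15,18]],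
[[0,6,11],[1,12,14],[2,20,21],[3,13,17],[4,5,8],[7,15,23],[9,18,25],[10,22,26],[16,19,24]],
[[0,17,20],[1,7,24],[2,13,15],[3,21,22],[4,14,18],[5,6,9],[8,16,25],[10,12,19],[11,23,26]],
[[0,12,26],[1,3,9],[2,19,22],[4,15,17],[5,23,25],[6,16,20],[7,8,11],[10,13,18],[14,21,24]],
[[0,15,22],[1,13,26],[2,4,10],[3,20,23],[5,16,18],[6,12,25],[7,17,21],[8,9,24],[11,14,19]],
[[0,9,10],[1,16,23],[2,14,26],[3,5,11],[4,21,25],[6,17,19],[7,12,13],[8,18,22],[15,20,24]],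
[[0,16,21],[1,10,11],[2,17,25],[3,15,26],[4,6,24],[5,12,22],[7,18,20],[8,13,14],[9,19,23]],
[[0,5,7],[1,17,22],[2,11,24],[3,12,18],[4,16,26],[6,13,23],[8,19,21],[9,14,15],[10,20,25]],
[[0,3,24],[1,6,8],[2,18,23],[4,13,19],[5,17,26],[7,14,25],[9,20,22],[10,15,16],[11,12,21]]
]
def tV : Finset ℕ := Finset.range 27
def tU : Finset ℕ := insert 24 (Finset.range 12)
def tb : Finset (Finset ℕ) := (tblocks.map List.toFinset).toFinset
def tR : Finset (Finset (Finset ℕ)) := (tclasses.map (fun c => (c.map List.toFinset).toFinset)).toFinset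
def tP0 : Finset (Finset ℕ) := (tclasses.headI.map List.toFinset).toFinset
def tA : Finset (Finset ℕ) := tb.filter (· ⊆ tU)

theorem tT1 : ∀ b ∈ tb, b ⊆ tV ∧ b.card = 3 := by decide
theorem tT2 : ∀ x ∈ tV, ∀ y ∈ tV, x ≠ y →
    (tb.filter (fun b => x ∈ b ∧ y ∈ b)).card = 1 := by decide
theorem tT3 : ∀ P ∈ tR, P ⊆ tb ∧ (∀ b ∈ P, b ⊆ tV) ∧
    ∀ x ∈ tV, (P.filter (fun b => x ∈ b)).card = 1 := by decide
theorem tT4 : ∀ b ∈ tb, (tR.filter (fun P => b ∈ P)).card = 1 := by decide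
theorem tT5 : tR.card = 13 ∧ tP0 ∈ tR ∧ ({24,25,26} : Finset ℕ) ∈ tP0 ∧
    ({24,25,26} : Finset ℕ) ∈ tb := by decide
theorem tT6 : (∀ b ∈ tA, b ⊆ tU ∧ b.card = 3) ∧ ∀ x ∈ tU, ∀ y ∈ tU, x ≠ y →
    (tA.filter (fun b => x ∈ b ∧ y ∈ b)).card = 1 := by decide

/-! ### Generic helpers -/

lemma exun_of_filter {α : Type*} [DecidableEq α] {s : Finset α} {q : α → Prop}
    [DecidablePred q] (h : (s.filter q).card = 1) : ∃! b, b ∈ s ∧ q b := by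
  obtain ⟨a, ha⟩ := Finset.card_eq_one.mp h
  have hmem : a ∈ s.filter q := ha ▸ Finset.mem_singleton_self a
  rw [Finset.mem_filter] at hmem
  refine ⟨a, hmem, fun b hb => ?_⟩
  have hb' : b ∈ s.filter q := Finset.mem_filter.mpr hb
  rw [ha, Finset.mem_singleton] at hb'
  exact hb'

lemma filter_card_of_exun {α : Type*} [DecidableEq α] {s : Finset α} {q : α → Prop}
    [DecidablePred q] (h : ∃! b, b ∈ s ∧ q b) : (s.filter q).card = 1 := by
  obtain ⟨a, ⟨has, hqa⟩, hu⟩ := h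
  rw [Finset.card_eq_one]
  refine ⟨a, Finset.ext fun b => ?_⟩
  simp only [Finset.mem_filter, Finset.mem_singleton]
  exact ⟨fun ⟨h1, h2⟩ => hu b ⟨h1, h2⟩, fun hb => hb ▸ ⟨has, hqa⟩⟩

/-! ### Transfer of the template along an injection -/

lemma transfer {f : ℕ → ℕ} (hf : Set.InjOn f ↑(Finset.range 27)) :
    IsSTS ((Finset.range 27).image f) (tb.image (Finset.image f)) ∧
    IsResolution ((Finset.range 27).image f) (tb.image (Finset.image f))
      (tR.image (Finset.image (Finset.image f))) ∧
    IsSTS (tU.image f) (tA.image (Finset.image f)) ∧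
    tA.image (Finset.image f) ⊆ tb.image (Finset.image f) ∧
    tP0.image (Finset.image f) ∈ tR.image (Finset.image (Finset.image f)) ∧
    (({24,25,26} : Finset ℕ).image f) ∈ tP0.image (Finset.image f) ∧
    (({24,25,26} : Finset ℕ).image f) ∈ tb.image (Finset.image f) ∧
    (tR.image (Finset.image (Finset.image f))).card = 13 := by
  have memiff : ∀ b : Finset ℕ, b ⊆ Finset.range 27 → ∀ x ∈ Finset.range 27,
      (f x ∈ b.image f ↔ x ∈ b) := by
    intro b hb x hx
    constructor
    · intro hxb
      obtain ⟨z, hz, hfz⟩ := Finset.mem_image.mp hxb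
      exact hf (Finset.mem_coe.mpr (hb hz)) (Finset.mem_coe.mpr hx) hfz ▸ hz
    · exact fun hxb => Finset.mem_image_of_mem f hxb
  have imgcard : ∀ b : Finset ℕ, b ⊆ Finset.range 27 → (b.image f).card = b.card :=
    fun b hb => Finset.card_image_of_injOn (hf.mono (Finset.coe_subset.mpr hb))
  have imgsub : ∀ b c : Finset ℕ, b ⊆ Finset.range 27 → c ⊆ Finset.range 27 →
      b.image f = c.image f → b ⊆ c := by
    intro b c hb hc heq x hxb
    have : f x ∈ c.image f := heq ▸ Finset.mem_image_of_mem f hxb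
    exact (memiff c hc x (hb hxb)).mp this
  have imginj : ∀ b c : Finset ℕ, b ⊆ Finset.range 27 → c ⊆ Finset.range 27 →
      b.image f = c.image f → b = c := fun b c hb hc heq =>
    Finset.Subset.antisymm (imgsub b c hb hc heq) (imgsub c b hc hb heq.symm)
  have hUV : tU ⊆ Finset.range 27 := by decide
  have hSTS : IsSTS ((Finset.range 27).image f) (tb.image (Finset.image f)) := by
    constructor
    · rintro b' hb'
      obtain ⟨b, hb, rfl⟩ := Finset.mem_image.mp hb'
      obtain ⟨hbV, hb3⟩ := tT1 b hb
      exact ⟨Finset.image_subset_image hbV, by rw [imgcard b hbV, hb3]⟩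
    · intro x hx y hy hxy
      obtain ⟨x0, hx0, rfl⟩ := Finset.mem_image.mp hx
      obtain ⟨y0, hy0, rfl⟩ := Finset.mem_image.mp hy
      have hxy0 : x0 ≠ y0 := fun hh => hxy (by rw [hh])
      obtain ⟨b0, ⟨hb0, hxb0, hyb0⟩, hbu⟩ := exun_of_filter (tT2 x0 hx0 y0 hy0 hxy0)
      refine ⟨b0.image f, ⟨Finset.mem_image_of_mem _ hb0, Finset.mem_image_of_mem f hxb0,
        Finset.mem_image_of_mem f hyb0⟩, ?_⟩
      rintro b' ⟨hb', hxb', hyb'⟩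
      obtain ⟨b1, hb1, rfl⟩ := Finset.mem_image.mp hb'
      have hb1V := (tT1 b1 hb1).1
      rw [hbu b1 ⟨hb1, (memiff b1 hb1V x0 hx0).mp hxb', (memiff b1 hb1V y0 hy0).mp hyb'⟩]
  refine ⟨hSTS, ⟨?_, ?_⟩, ⟨?_, ?_⟩, Finset.image_subset_image (Finset.filter_subset _ _),
    Finset.mem_image_of_mem _ tT5.2.1, Finset.mem_image_of_mem _ tT5.2.2.1,
    Finset.mem_image_of_mem _ tT5.2.2.2, ?_⟩
  · rintro P' hP'
    obtain ⟨P, hP, rfl⟩ := Finset.mem_image.mp hP'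
    obtain ⟨hPb, hPV, hPx⟩ := tT3 P hP
    refine ⟨Finset.image_subset_image hPb, ?_, ?_⟩
    · rintro b' hb'
      obtain ⟨b, hb, rfl⟩ := Finset.mem_image.mp hb'
      exact Finset.image_subset_image (hPV b hb)
    · intro x hx
      obtain ⟨x0, hx0, rfl⟩ := Finset.mem_image.mp hx
      obtain ⟨b0, ⟨hb0, hxb0⟩, hbu⟩ := exun_of_filter (hPx x0 hx0)
      refine ⟨b0.image f, ⟨Finset.mem_image_of_mem _ hb0, Finset.mem_image_of_mem f hxb0⟩, ?_⟩
      rintro b' ⟨hb', hxb'⟩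
      obtain ⟨b1, hb1, rfl⟩ := Finset.mem_image.mp hb'
      rw [hbu b1 ⟨hb1, (memiff b1 (hPV b1 hb1) x0 hx0).mp hxb'⟩]
  · rintro b' hb'
    obtain ⟨b, hb, rfl⟩ := Finset.mem_image.mp hb'
    obtain ⟨P0', ⟨hP0', hbP0'⟩, hPu⟩ := exun_of_filter (tT4 b hb)
    refine ⟨P0'.image (Finset.image f), ⟨Finset.mem_image_of_mem _ hP0',
      Finset.mem_image_of_mem _ hbP0'⟩, ?_⟩
    rintro P' ⟨hP', hbP'⟩
    obtain ⟨Q, hQ, rfl⟩ := Finset.mem_image.mp hP'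
    obtain ⟨cb, hcb, hcbeq⟩ := Finset.mem_image.mp hbP'
    have hcbV := (tT1 cb ((tT3 Q hQ).1 hcb)).1
    have hbV := (tT1 b hb).1
    have : cb = b := imginj cb b hcbV hbV hcbeq
    rw [hPu Q ⟨hQ, this ▸ hcb⟩]
  · rintro b' hb'
    obtain ⟨b, hb, rfl⟩ := Finset.mem_image.mp hb'
    obtain ⟨hbU, hb3⟩ := tT6.1 b hb
    exact ⟨Finset.image_subset_image hbU, by rw [imgcard b (hbU.trans hUV), hb3]⟩
  · intro x hx y hy hxy
    obtain ⟨x0, hx0, rfl⟩ := Finset.mem_image.mp hx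
    obtain ⟨y0, hy0, rfl⟩ := Finset.mem_image.mp hy
    have hxy0 : x0 ≠ y0 := fun hh => hxy (by rw [hh])
    obtain ⟨b0, ⟨hb0, hxb0, hyb0⟩, hbu⟩ := exun_of_filter (tT6.2 x0 hx0 y0 hy0 hxy0)
    refine ⟨b0.image f, ⟨Finset.mem_image_of_mem _ hb0, Finset.mem_image_of_mem f hxb0,
      Finset.mem_image_of_mem f hyb0⟩, ?_⟩
    rintro b' ⟨hb', hxb', hyb'⟩
    obtain ⟨b1, hb1, rfl⟩ := Finset.mem_image.mp hb'
    have hb1U : b1 ⊆ Finset.range 27 := (tT6.1 b1 hb1).1.trans hUV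
    rw [hbu b1 ⟨hb1, (memiff b1 hb1U x0 (hUV hx0)).mp hxb',
      (memiff b1 hb1U y0 (hUV hy0)).mp hyb'⟩]
  · rw [Finset.card_image_of_injOn, tT5.1]
    intro P hP Q hQ heq
    have hPV := (tT3 P (Finset.mem_coe.mp hP)).2.1
    have hQV := (tT3 Q (Finset.mem_coe.mp hQ)).2.1
    have hsub : ∀ P Q : Finset (Finset ℕ), (∀ b ∈ P, b ⊆ Finset.range 27) →
        (∀ b ∈ Q, b ⊆ Finset.range 27) →
        P.image (Finset.image f) = Q.image (Finset.image f) → P ⊆ Q := by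
      intro P Q hPV hQV heq b hb
      have : b.image f ∈ Q.image (Finset.image f) := heq ▸ Finset.mem_image_of_mem _ hb
      obtain ⟨cb, hcb, hcbeq⟩ := Finset.mem_image.mp this
      exact imginj cb b (hQV cb hcb) (hPV b hb) hcbeq ▸ hcb
    exact Finset.Subset.antisymm (hsub P Q hPV hQV heq) (hsub Q P hQV hPV heq.symm)

/-! ### The relabeling map for each group -/

noncomputable def fmap (W G' : Finset ℕ) (hW : W.card = 12) (hG' : G'.card = 12)
    (a b c : ℕ) : ℕ → ℕ :=
  fun k => if h : k < 12 then W.orderEmbOfFin hW ⟨k, h⟩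
    else if h2 : k - 12 < 12 then G'.orderEmbOfFin hG' ⟨k - 12, h2⟩
    else if k = 24 then a else if k = 25 then b else c

lemma fmap_spec (W G' : Finset ℕ) (hW : W.card = 12) (hG' : G'.card = 12) (a b c : ℕ)
    (hd : Disjoint W G') (haW : a ∉ W) (haG : a ∉ G') (hbW : b ∉ W) (hbG : b ∉ G')
    (hcW : c ∉ W) (hcG : c ∉ G') (hab : a ≠ b) (hac : a ≠ c) (hbc : b ≠ c) :
    Set.InjOn (fmap W G' hW hG' a b c) ↑(Finset.range 27) ∧
    (Finset.range 27).image (fmap W G' hW hG' a b c) = (W ∪ G') ∪ {a, b, c} ∧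
    tU.image (fmap W G' hW hG' a b c) = insert a W ∧
    ({24,25,26} : Finset ℕ).image (fmap W G' hW hG' a b c) = {a, b, c} := by
  set f := fmap W G' hW hG' a b c with hfdef
  have hv1 : ∀ k, (hk : k < 12) → f k = W.orderEmbOfFin hW ⟨k, hk⟩ := by
    intro k hk; simp only [hfdef, fmap, dif_pos hk]
  have hv2 : ∀ k, 12 ≤ k → (hk : k - 12 < 12) → f k = G'.orderEmbOfFin hG' ⟨k - 12, hk⟩ := by
    intro k hk1 hk2; simp only [hfdef, fmap, dif_neg (by omega : ¬ k < 12), dif_pos hk2]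
  have h24 : f 24 = a := by simp [hfdef, fmap]
  have h25 : f 25 = b := by simp [hfdef, fmap]
  have h26 : f 26 = c := by simp [hfdef, fmap]
  have hm1 : ∀ k, (hk : k < 12) → f k ∈ W := fun k hk => by
    rw [hv1 k hk]; exact Finset.orderEmbOfFin_mem W hW _
  have hm2 : ∀ k, 12 ≤ k → k < 24 → f k ∈ G' := fun k hk1 hk2 => by
    rw [hv2 k hk1 (by omega)]; exact Finset.orderEmbOfFin_mem G' hG' _
  have habcW : ∀ k, 24 ≤ k → k < 27 → f k ∉ W ∧ f k ∉ G' ∧ f k ∈ ({a,b,c} : Finset ℕ) := by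
    intro k hk1 hk2
    have : k = 24 ∨ k = 25 ∨ k = 26 := by omega
    rcases this with rfl | rfl | rfl
    · rw [h24]; exact ⟨haW, haG, by simp⟩
    · rw [h25]; exact ⟨hbW, hbG, by simp⟩
    · rw [h26]; exact ⟨hcW, hcG, by simp⟩
  have hinj : Set.InjOn f ↑(Finset.range 27) := by
    intro j hj k hk heq
    have hj27 : j < 27 := by simpa using hj
    have hk27 : k < 27 := by simpa using hk
    rcases (by omega : j < 12 ∨ (12 ≤ j ∧ j < 24) ∨ 24 ≤ j) with hj1 | ⟨hj1, hj2⟩ | hj1 <;>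
      rcases (by omega : k < 12 ∨ (12 ≤ k ∧ k < 24) ∨ 24 ≤ k) with hk1 | ⟨hk1, hk2⟩ | hk1
    · rw [hv1 j hj1, hv1 k hk1] at heq
      have := (W.orderEmbOfFin hW).injective heq
      simpa using congrArg Fin.val this
    · exact absurd (heq ▸ hm1 j hj1) (fun hh => Finset.disjoint_left.mp hd hh (hm2 k hk1 hk2))
    · exact absurd (heq ▸ hm1 j hj1) (habcW k hk1 hk27).1
    · exact absurd (heq.symm ▸ hm1 k hk1)
        (fun hh => Finset.disjoint_left.mp hd hh (hm2 j hj1 hj2))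
    · rw [hv2 j hj1 (by omega), hv2 k hk1 (by omega)] at heq
      have := (G'.orderEmbOfFin hG').injective heq
      have := congrArg Fin.val this
      simp only at this
      omega
    · exact absurd (heq ▸ hm2 j hj1 hj2) (habcW k hk1 hk27).2.1
    · exact absurd (heq.symm ▸ hm1 k hk1) (habcW j hj1 hj27).1
    · exact absurd (heq.symm ▸ hm2 k hk1 hk2) (habcW j hj1 hj27).2.1
    · rcases (by omega : j = 24 ∨ j = 25 ∨ j = 26) with rfl | rfl | rfl <;>
        rcases (by omega : k = 24 ∨ k = 25 ∨ k = 26) with rfl | rfl | rfl <;>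
        simp_all [h24, h25, h26]
  have habc_card : ({a, b, c} : Finset ℕ).card = 3 := by
    rw [Finset.card_insert_of_notMem (by simp [hab, hac]),
      Finset.card_insert_of_notMem (by simp [hbc]), Finset.card_singleton]
  have hWG'card : (W ∪ G').card = 24 := by
    rw [Finset.card_union_of_disjoint hd, hW, hG']
  have htot_card : ((W ∪ G') ∪ {a, b, c}).card = 27 := by
    rw [Finset.card_union_of_disjoint, hWG'card, habc_card]
    rw [Finset.disjoint_right]
    intro x hx
    simp only [Finset.mem_insert, Finset.mem_singleton] at hx
    rcases hx with rfl | rfl | rfl <;> simp_all [Finset.mem_union]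
  refine ⟨hinj, ?_, ?_, ?_⟩
  · apply Finset.eq_of_subset_of_card_le
    · intro y hy
      obtain ⟨k, hk, rfl⟩ := Finset.mem_image.mp hy
      have hk27 : k < 27 := Finset.mem_range.mp hk
      rcases (by omega : k < 12 ∨ (12 ≤ k ∧ k < 24) ∨ 24 ≤ k) with h1 | ⟨h1, h2⟩ | h1
      · exact Finset.mem_union_left _ (Finset.mem_union_left _ (hm1 k h1))
      · exact Finset.mem_union_left _ (Finset.mem_union_right _ (hm2 k h1 h2))
      · exact Finset.mem_union_right _ (habcW k h1 hk27).2.2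
    · rw [htot_card, Finset.card_image_of_injOn hinj, Finset.card_range]
  · apply Finset.eq_of_subset_of_card_le
    · intro y hy
      obtain ⟨k, hk, rfl⟩ := Finset.mem_image.mp hy
      simp only [tU, Finset.mem_insert, Finset.mem_range] at hk
      rcases hk with rfl | hk
      · rw [h24]; exact Finset.mem_insert_self a W
      · exact Finset.mem_insert_of_mem (hm1 k hk)
    · have htU27 : tU ⊆ Finset.range 27 := by decide
      rw [Finset.card_image_of_injOn (hinj.mono (Finset.coe_subset.mpr htU27)),
        Finset.card_insert_of_notMem haW, hW]
      decide
  · have : ({24, 25, 26} : Finset ℕ) = insert 24 (insert 25 {26}) := rfl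
    rw [this, Finset.image_insert, Finset.image_insert, Finset.image_singleton, h24, h25, h26]

/-! ### Base case n = 1 -/

lemma base_case : ExistsKTSSubSTS 27 13 := by
  refine ⟨tV, tU, tb, tA,
    ⟨⟨tT1, fun x hx y hy hxy => exun_of_filter (tT2 x hx y hy hxy)⟩,
      tR, ⟨fun P hP => ⟨(tT3 P hP).1, (tT3 P hP).2.1,
        fun x hx => exun_of_filter ((tT3 P hP).2.2 x hx)⟩,
      fun b hb => exun_of_filter (tT4 b hb)⟩⟩,
    ⟨tT6.1, fun x hx y hy hxy => exun_of_filter (tT6.2 x hx y hy hxy)⟩,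
    by decide, Finset.filter_subset _ _, by decide, by decide⟩

/-! ### Counting partial parallel classes of a Kirkman frame -/

open Classical in
lemma frame_class_count_s11 {n : ℕ} (hn2 : 2 ≤ n) (G : Fin n → Finset ℕ)
    (BF : Finset (Finset ℕ)) (RF : Finset (Finset (Finset ℕ)))
    (hGcard : ∀ i, (G i).card = 24)
    (hGdisj : ∀ i j, i ≠ j → Disjoint (G i) (G j))
    (hGblocks : ∀ b ∈ BF, b ⊆ Finset.univ.biUnion G ∧ b.card = 3 ∧ ∀ i, (b ∩ G i).card ≤ 1)
    (hGpairs : ∀ x y : ℕ, (∃ i j, i ≠ j ∧ x ∈ G i ∧ y ∈ G j) → ∃! b, b ∈ BF ∧ x ∈ b ∧ y ∈ b)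
    (hRF1 : ∀ P ∈ RF, P ⊆ BF ∧ ∃ i, IsParallelClassOn (Finset.univ.biUnion G \ G i) P)
    (hRF2 : ∀ b ∈ BF, ∃! P, P ∈ RF ∧ b ∈ P) :
    ∀ j, (RF.filter (fun P =>
      IsParallelClassOn (Finset.univ.biUnion G \ G j) P)).card = 12 := by
  classical
  set GU := Finset.univ.biUnion G with hGUdef
  have hGsub : ∀ i, G i ⊆ GU := fun i => Finset.subset_biUnion_of_mem G (Finset.mem_univ i)
  have hmissu : ∀ P ∈ RF, ∀ i j, IsParallelClassOn (GU \ G i) P →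
      IsParallelClassOn (GU \ G j) P → i = j := by
    intro P _ i j hi hj
    have hXY : ∀ i j, IsParallelClassOn (GU \ G i) P → IsParallelClassOn (GU \ G j) P →
        GU \ G i ⊆ GU \ G j := by
      intro i j hi hj x hx
      obtain ⟨bb, ⟨hbb, hxbb⟩, -⟩ := hi.2 x hx
      exact hj.1 bb hbb hxbb
    have heq : GU \ G i = GU \ G j := Finset.Subset.antisymm (hXY i j hi hj) (hXY j i hj hi)
    have hGij : G i = G j := by
      have h1 := Finset.sdiff_sdiff_eq_self (hGsub i)
      have h2 := Finset.sdiff_sdiff_eq_self (hGsub j)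
      rw [← h1, ← h2, heq]
    by_contra hne
    obtain ⟨z, hz⟩ := Finset.card_pos.mp (show 0 < (G j).card by rw [hGcard j]; omega)
    exact Finset.disjoint_left.mp (hGdisj i j hne) (hGij ▸ hz) hz
  have hGUcard : GU.card = 24 * n := by
    rw [hGUdef, Finset.card_biUnion (fun i _ k _ hik => hGdisj i k hik),
      Finset.sum_congr rfl (fun i _ => hGcard i), Finset.sum_const, Finset.card_univ,
      Fintype.card_fin, smul_eq_mul, Nat.mul_comm]
  have key : ∀ j', (RF.filter (fun P => IsParallelClassOn (GU \ G j') P)).card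
      + 12 * (n - 1) = RF.card := by
    intro j'
    obtain ⟨x, hx⟩ := Finset.card_pos.mp (by rw [hGcard j']; omega : 0 < (G j').card)
    have hxGU : x ∈ GU := hGsub j' hx
    set Bx := BF.filter (fun bb => x ∈ bb) with hBxdef
    have hY : (GU \ G j').card = 24 * n - 24 := by
      rw [Finset.card_sdiff_of_subset (hGsub j'), hGUcard, hGcard]
    have hYpair : ∀ y ∈ GU \ G j', ∃ i k, i ≠ k ∧ x ∈ G i ∧ y ∈ G k := by
      intro y hy
      rw [Finset.mem_sdiff] at hy
      obtain ⟨hyGU, hyGj⟩ := hy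
      obtain ⟨k, -, hyk⟩ := Finset.mem_biUnion.mp hyGU
      exact ⟨j', k, fun hjk => hyGj (hjk ▸ hyk), hx, hyk⟩
    have hfib : (GU \ G j').card = 2 * Bx.card := by
      set φ : ℕ → Finset ℕ :=
        fun y => if hh : ∃ bb, bb ∈ BF ∧ x ∈ bb ∧ y ∈ bb then hh.choose else ∅ with hφ
      have hφspec : ∀ y ∈ GU \ G j', φ y ∈ BF ∧ x ∈ φ y ∧ y ∈ φ y := by
        intro y hy
        have hex := (hGpairs x y (hYpair y hy)).exists
        rw [hφ]
        simp only [dif_pos hex]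
        exact hex.choose_spec
      have hmap : ∀ y ∈ GU \ G j', φ y ∈ Bx := fun y hy =>
        Finset.mem_filter.mpr ⟨(hφspec y hy).1, (hφspec y hy).2.1⟩
      rw [Finset.card_eq_sum_card_fiberwise hmap]
      have hfiber : ∀ bb ∈ Bx, ((GU \ G j').filter (fun y => φ y = bb)) = bb.erase x := by
        intro bb hbb
        rw [hBxdef, Finset.mem_filter] at hbb
        obtain ⟨hbbBF, hxbb⟩ := hbb
        ext y
        simp only [Finset.mem_filter, Finset.mem_erase]
        constructor
        · rintro ⟨hy, rfl⟩
          exact ⟨fun hyx => (Finset.mem_sdiff.mp hy).2 (hyx ▸ hx), (hφspec y hy).2.2⟩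
        · rintro ⟨hyx, hybb⟩
          have hyY : y ∈ GU \ G j' := by
            rw [Finset.mem_sdiff]
            refine ⟨(hGblocks bb hbbBF).1 hybb, fun hyGj' => ?_⟩
            have hcard := (hGblocks bb hbbBF).2.2 j'
            have hsub2 : ({x, y} : Finset ℕ) ⊆ bb ∩ G j' := by
              intro z hz
              simp only [Finset.mem_insert, Finset.mem_singleton] at hz
              rcases hz with rfl | rfl
              · exact Finset.mem_inter.mpr ⟨hxbb, hx⟩
              · exact Finset.mem_inter.mpr ⟨hybb, hyGj'⟩
            have h2 : ({x, y} : Finset ℕ).card = 2 := Finset.card_pair (fun hh => hyx hh.symm)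
            have := Finset.card_le_card hsub2
            omega
          refine ⟨hyY, ?_⟩
          obtain ⟨b0, -, hu⟩ := hGpairs x y (hYpair y hyY)
          exact (hu (φ y) ⟨(hφspec y hyY).1, (hφspec y hyY).2.1,
            (hφspec y hyY).2.2⟩).trans (hu bb ⟨hbbBF, hxbb, hybb⟩).symm
      rw [Finset.sum_congr rfl (fun bb hbb => by rw [hfiber bb hbb])]
      have hc2 : ∀ bb ∈ Bx, (bb.erase x).card = 2 := by
        intro bb hbb
        rw [hBxdef, Finset.mem_filter] at hbb
        rw [Finset.card_erase_of_mem hbb.2, (hGblocks bb hbb.1).2.1]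
      rw [Finset.sum_congr rfl hc2, Finset.sum_const, smul_eq_mul, Nat.mul_comm]
    have hBx12 : Bx.card = 12 * (n - 1) := by omega
    have hBxbi : Bx = RF.biUnion (fun P => P.filter (fun bb => x ∈ bb)) := by
      ext bb
      simp only [hBxdef, Finset.mem_filter, Finset.mem_biUnion]
      constructor
      · rintro ⟨hbbBF, hxbb⟩
        obtain ⟨P, ⟨hP, hbbP⟩, -⟩ := hRF2 bb hbbBF
        exact ⟨P, hP, hbbP, hxbb⟩
      · rintro ⟨P, hP, hbbP, hxbb⟩
        exact ⟨(hRF1 P hP).1 hbbP, hxbb⟩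
    have hdisjcl : ∀ P ∈ RF, ∀ Q ∈ RF, P ≠ Q →
        Disjoint (P.filter (fun bb => x ∈ bb)) (Q.filter (fun bb => x ∈ bb)) := by
      intro P hP Q hQ hne
      rw [Finset.disjoint_left]
      intro bb h1 h2
      rw [Finset.mem_filter] at h1 h2
      obtain ⟨P0, -, hu⟩ := hRF2 bb ((hRF1 P hP).1 h1.1)
      exact hne ((hu P ⟨hP, h1.1⟩).trans (hu Q ⟨hQ, h2.1⟩).symm)
    have hBxsum : Bx.card = ∑ P ∈ RF, (P.filter (fun bb => x ∈ bb)).card := by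
      rw [hBxbi]
      exact Finset.card_biUnion hdisjcl
    have hper : ∀ P ∈ RF, (P.filter (fun bb => x ∈ bb)).card =
        if IsParallelClassOn (GU \ G j') P then 0 else 1 := by
      intro P hP
      by_cases hmiss : IsParallelClassOn (GU \ G j') P
      · rw [if_pos hmiss, Finset.card_eq_zero, Finset.filter_eq_empty_iff]
        intro bb hbb hxbb
        exact (Finset.mem_sdiff.mp (hmiss.1 bb hbb hxbb)).2 hx
      · rw [if_neg hmiss]
        obtain ⟨i, hi⟩ := (hRF1 P hP).2
        have hij : i ≠ j' := fun hh => hmiss (hh ▸ hi)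
        have hxY : x ∈ GU \ G i := Finset.mem_sdiff.mpr ⟨hxGU,
          fun hxGi => Finset.disjoint_left.mp (hGdisj i j' hij) hxGi hx⟩
        exact filter_card_of_exun (hi.2 x hxY)
    rw [Finset.sum_congr rfl hper, Finset.sum_ite, Finset.sum_const, Finset.sum_const,
      smul_eq_mul, smul_eq_mul] at hBxsum
    have hsplit := Finset.card_filter_add_card_filter_not
      (s := RF) (p := fun P => IsParallelClassOn (GU \ G j') P)
    omega
  have hRFbi : RF = Finset.univ.biUnion
      (fun i => RF.filter (fun P => IsParallelClassOn (GU \ G i) P)) := by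
    ext P
    simp only [Finset.mem_biUnion, Finset.mem_filter, Finset.mem_univ, true_and]
    constructor
    · intro hP
      obtain ⟨i, hi⟩ := (hRF1 P hP).2
      exact ⟨i, hP, hi⟩
    · rintro ⟨i, hP, -⟩
      exact hP
  have hsum : RF.card = ∑ i : Fin n,
      (RF.filter (fun P => IsParallelClassOn (GU \ G i) P)).card := by
    conv_lhs => rw [hRFbi]
    refine Finset.card_biUnion ?_
    intro i _ k _ hik
    rw [Function.onFun, Finset.disjoint_left]
    intro P h1 h2
    rw [Finset.mem_filter] at h1 h2
    exact hik (hmissu P h1.1 i k h1.2 h2.2)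
  have hterm : ∀ i, (RF.filter (fun P => IsParallelClassOn (GU \ G i) P)).card
      = RF.card - 12 * (n - 1) := fun i => by have := key i; omega
  rw [Finset.sum_congr rfl (fun i _ => hterm i), Finset.sum_const, Finset.card_univ,
    Fintype.card_fin, smul_eq_mul] at hsum
  have ht12 : RF.card - 12 * (n - 1) = 12 := by
    obtain ⟨m, rfl⟩ : ∃ m, n = m + 2 := ⟨n - 2, by omega⟩
    have h1 := key ⟨0, by omega⟩
    rw [hterm ⟨0, by omega⟩] at h1
    have h2 : (m + 2) * (RF.card - 12 * (m + 2 - 1)) =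
        (m + 1) * (RF.card - 12 * (m + 2 - 1)) + (RF.card - 12 * (m + 2 - 1)) := by ring
    rw [h2] at hsum
    set t := RF.card - 12 * (m + 2 - 1) with htdef
    set q := (m + 1) * t with hqdef
    have hq : q = 12 * (m + 1) := by omega
    have : (m + 1) * t = (m + 1) * 12 := by rw [← hqdef, hq]; ring
    have := Nat.eq_of_mul_eq_mul_left (by omega : 0 < m + 1) this
    omega
  intro j
  rw [hterm j, ht12]

/-! ### Main construction for n ≥ 2 -/

open Classical in
lemma main2_s11 {n : ℕ} (hn2 : 2 ≤ n) (h : ExistsFrameSubGDD 12 24 n) :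
    ExistsKTSSubSTS (24 * n + 3) (12 * n + 1) := by
  obtain ⟨G, W, BF, AF, ⟨hGDD, RF, hRF1, hRF2⟩, hsubGDD, hWG, hAB⟩ := h
  obtain ⟨hGcard, hGdisj, hGblocks, hGpairs⟩ := hGDD
  obtain ⟨hWcard, hWdisj, hWblocks, hWpairs⟩ := hsubGDD
  have hcount0 := frame_class_count_s11 hn2 G BF RF hGcard hGdisj hGblocks hGpairs hRF1 hRF2
  set GU := Finset.univ.biUnion G with hGUdef
  have hGsub : ∀ i, G i ⊆ GU := fun i => Finset.subset_biUnion_of_mem G (Finset.mem_univ i)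
  have hle : ∀ x ∈ GU, x ≤ GU.sup id := fun x hx => Finset.le_sup (f := id) hx
  set a := GU.sup id + 1 with hadef
  set b := GU.sup id + 2 with hbdef
  set c := GU.sup id + 3 with hcdef
  have haGU : a ∉ GU := fun hh => by have := hle a hh; omega
  have hbGU : b ∉ GU := fun hh => by have := hle b hh; omega
  have hcGU : c ∉ GU := fun hh => by have := hle c hh; omega
  have hab : a ≠ b := by omega
  have hac : a ≠ c := by omega
  have hbc : b ≠ c := by omega
  set abcF : Finset ℕ := {a, b, c} with habcdef
  have habc_mem : ∀ z, z ∈ abcF ↔ z = a ∨ z = b ∨ z = c := by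
    intro z; rw [habcdef]; simp
  have habc_card : abcF.card = 3 := by
    rw [habcdef, Finset.card_insert_of_notMem (by simp [hab, hac]),
      Finset.card_insert_of_notMem (by simp [hbc]), Finset.card_singleton]
  have haabc : a ∈ abcF := by rw [habcdef]; simp
  have habcGU : ∀ z ∈ abcF, z ∉ GU := by
    intro z hz
    rcases (habc_mem z).mp hz with rfl | rfl | rfl <;> assumption
  have hGnotabc : ∀ z ∈ GU, z ∉ abcF := fun z hz hzz => habcGU z hzz hz
  have hgroupu : ∀ z (i j : Fin n), z ∈ G i → z ∈ G j → i = j := by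
    intro z i j h1 h2
    by_contra hne
    exact Finset.disjoint_left.mp (hGdisj i j hne) h1 h2
  -- the relabeling maps
  have hG'card : ∀ i, ((G i) \ (W i)).card = 12 := fun i => by
    rw [Finset.card_sdiff_of_subset (hWG i), hGcard, hWcard]
  have hWsubGU : ∀ i, W i ⊆ GU := fun i => (hWG i).trans (hGsub i)
  let fm : Fin n → ℕ → ℕ := fun i => fmap (W i) (G i \ W i) (hWcard i) (hG'card i) a b c
  have hspec : ∀ i, Set.InjOn (fm i) ↑(Finset.range 27) ∧
      (Finset.range 27).image (fm i) = (W i ∪ (G i \ W i)) ∪ {a, b, c} ∧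
      tU.image (fm i) = insert a (W i) ∧
      ({24,25,26} : Finset ℕ).image (fm i) = {a, b, c} := by
    intro i
    have hsd : ∀ z, z ∈ G i \ W i → z ∈ GU := fun z hz => hGsub i (Finset.mem_sdiff.mp hz).1
    exact fmap_spec _ _ _ _ a b c
      (Finset.disjoint_left.mpr fun {z} hz h2 => (Finset.mem_sdiff.mp h2).2 hz)
      (fun hh => haGU (hWsubGU i hh)) (fun hh => haGU (hsd _ hh))
      (fun hh => hbGU (hWsubGU i hh)) (fun hh => hbGU (hsd _ hh))
      (fun hh => hcGU (hWsubGU i hh)) (fun hh => hcGU (hsd _ hh)) hab hac hbc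
  have hVti : ∀ i, (Finset.range 27).image (fm i) = G i ∪ abcF := by
    intro i
    rw [(hspec i).2.1, Finset.union_sdiff_of_subset (hWG i), habcdef]
  let Bt : Fin n → Finset (Finset ℕ) := fun i => tb.image (Finset.image (fm i))
  let At : Fin n → Finset (Finset ℕ) := fun i => tA.image (Finset.image (fm i))
  let Rt : Fin n → Finset (Finset (Finset ℕ)) :=
    fun i => tR.image (Finset.image (Finset.image (fm i)))
  let P0t : Fin n → Finset (Finset ℕ) := fun i => tP0.image (Finset.image (fm i))
  have htr : ∀ i, IsSTS (G i ∪ abcF) (Bt i) ∧ IsResolution (G i ∪ abcF) (Bt i) (Rt i) ∧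
      IsSTS (insert a (W i)) (At i) ∧ At i ⊆ Bt i ∧ P0t i ∈ Rt i ∧ abcF ∈ P0t i ∧
      abcF ∈ Bt i ∧ (Rt i).card = 13 := by
    intro i
    have h := transfer (hspec i).1
    rw [hVti i, (hspec i).2.2.1, (hspec i).2.2.2] at h
    exact h
  have hSTSi : ∀ i, IsSTS (G i ∪ abcF) (Bt i) := fun i => (htr i).1
  have hResi : ∀ i, IsResolution (G i ∪ abcF) (Bt i) (Rt i) := fun i => (htr i).2.1
  have hSTSA : ∀ i, IsSTS (insert a (W i)) (At i) := fun i => (htr i).2.2.1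
  have hAtBt : ∀ i, At i ⊆ Bt i := fun i => (htr i).2.2.2.1
  have hP0Rt : ∀ i, P0t i ∈ Rt i := fun i => (htr i).2.2.2.2.1
  have habcP0 : ∀ i, abcF ∈ P0t i := fun i => (htr i).2.2.2.2.2.1
  have habcBt : ∀ i, abcF ∈ Bt i := fun i => (htr i).2.2.2.2.2.2.1
  have hRtcard : ∀ i, (Rt i).card = 13 := fun i => (htr i).2.2.2.2.2.2.2
  have hBtsub : ∀ i, ∀ bb ∈ Bt i, bb ⊆ G i ∪ abcF := fun i bb hbb => ((hSTSi i).1 bb hbb).1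
  have hBt3 : ∀ i, ∀ bb ∈ Bt i, bb.card = 3 := fun i bb hbb => ((hSTSi i).1 bb hbb).2
  have hBtBF : ∀ i, ∀ bb ∈ Bt i, bb ∉ BF := by
    intro i bb hbb hbbBF
    have h3 := (hGblocks bb hbbBF).2.2 i
    have hsub : bb ⊆ G i := by
      intro z hz
      rcases Finset.mem_union.mp (hBtsub i bb hbb hz) with h1 | h1
      · exact h1
      · exact absurd ((hGblocks bb hbbBF).1 hz) (habcGU z h1)
    rw [Finset.inter_eq_left.mpr hsub, (hGblocks bb hbbBF).2.1] at h3
    omega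
  have hBtBt : ∀ i j, i ≠ j → ∀ bb ∈ Bt i, bb ∈ Bt j → bb = abcF := by
    intro i j hne bb hbi hbj
    have hsub : bb ⊆ abcF := by
      intro z hz
      rcases Finset.mem_union.mp (hBtsub i bb hbi hz) with h1 | h1
      · rcases Finset.mem_union.mp (hBtsub j bb hbj hz) with h2 | h2
        · exact absurd (hgroupu z i j h1 h2) hne
        · exact h2
      · exact h1
    exact Finset.eq_of_subset_of_card_le hsub
      (le_of_eq (by rw [hBt3 i bb hbi, habc_card]))
  -- the big objects
  let Vbig : Finset ℕ := GU ∪ abcF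
  let Bbig : Finset (Finset ℕ) := BF ∪ Finset.univ.biUnion Bt
  let Ubig : Finset ℕ := insert a (Finset.univ.biUnion W)
  let Abig : Finset (Finset ℕ) := AF ∪ Finset.univ.biUnion At
  have hmemB : ∀ bb, bb ∈ Bbig → bb ∈ BF ∨ ∃ i, bb ∈ Bt i := by
    intro bb hbb
    rcases Finset.mem_union.mp hbb with h1 | h1
    · exact Or.inl h1
    · obtain ⟨i, -, hi⟩ := Finset.mem_biUnion.mp h1
      exact Or.inr ⟨i, hi⟩
  have hBtBbig : ∀ i, ∀ bb ∈ Bt i, bb ∈ Bbig := fun i bb hbb =>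
    Finset.mem_union_right _ (Finset.mem_biUnion.mpr ⟨i, Finset.mem_univ i, hbb⟩)
  -- pair coverage for the big design
  have hpairs : ∀ x ∈ Vbig, ∀ y ∈ Vbig, x ≠ y → ∃! bb, bb ∈ Bbig ∧ x ∈ bb ∧ y ∈ bb := by
    intro x hx y hy hxy
    have sameCase : ∀ i, x ∈ G i ∪ abcF → y ∈ G i ∪ abcF →
        (∀ bb ∈ Bbig, x ∈ bb → y ∈ bb → bb ∈ Bt i) →
        ∃! bb, bb ∈ Bbig ∧ x ∈ bb ∧ y ∈ bb := by
      intro i hxi hyi hloc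
      obtain ⟨bb, ⟨hbb, hxb, hyb⟩, hu⟩ := (hSTSi i).2 x hxi y hyi hxy
      refine ⟨bb, ⟨hBtBbig i bb hbb, hxb, hyb⟩, ?_⟩
      rintro bb' ⟨hbb', hxb', hyb'⟩
      exact hu bb' ⟨hloc bb' hbb' hxb' hyb', hxb', hyb'⟩
    rcases Finset.mem_union.mp hx with hxGU | hxabc
    · obtain ⟨i, -, hxGi⟩ := Finset.mem_biUnion.mp hxGU
      rcases Finset.mem_union.mp hy with hyGU | hyabc
      · obtain ⟨j, -, hyGj⟩ := Finset.mem_biUnion.mp hyGU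
        by_cases hij : i = j
        · subst hij
          apply sameCase i (Finset.mem_union_left _ hxGi) (Finset.mem_union_left _ hyGj)
          intro bb hbb hxb hyb
          rcases hmemB bb hbb with hbbBF | ⟨k, hbbk⟩
          · exfalso
            have h3 := (hGblocks bb hbbBF).2.2 i
            have hsub2 : ({x, y} : Finset ℕ) ⊆ bb ∩ G i := by
              intro z hz
              rcases Finset.mem_insert.mp hz with rfl | hz
              · exact Finset.mem_inter.mpr ⟨hxb, hxGi⟩
              · rw [Finset.mem_singleton] at hz
                subst hz
                exact Finset.mem_inter.mpr ⟨hyb, hyGj⟩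
            have hle2 := Finset.card_le_card hsub2
            rw [Finset.card_pair hxy] at hle2
            omega
          · rcases Finset.mem_union.mp (hBtsub k bb hbbk hxb) with hh | hh
            · exact (hgroupu x k i hh hxGi) ▸ hbbk
            · exact absurd hh (hGnotabc x hxGU)
        · obtain ⟨bb, ⟨hbb, hxb, hyb⟩, hu⟩ := hGpairs x y ⟨i, j, hij, hxGi, hyGj⟩
          refine ⟨bb, ⟨Finset.mem_union_left _ hbb, hxb, hyb⟩, ?_⟩
          rintro bb' ⟨hbb', hxb', hyb'⟩
          rcases hmemB bb' hbb' with hbbBF | ⟨k, hbbk⟩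
          · exact hu bb' ⟨hbbBF, hxb', hyb'⟩
          · exfalso
            rcases Finset.mem_union.mp (hBtsub k bb' hbbk hxb') with hh | hh
            · rcases Finset.mem_union.mp (hBtsub k bb' hbbk hyb') with hh2 | hh2
              · exact hij ((hgroupu x k i hh hxGi).symm.trans (hgroupu y k j hh2 hyGj))
              · exact hGnotabc y hyGU hh2
            · exact hGnotabc x hxGU hh
      · apply sameCase i (Finset.mem_union_left _ hxGi) (Finset.mem_union_right _ hyabc)
        intro bb hbb hxb hyb
        rcases hmemB bb hbb with hbbBF | ⟨k, hbbk⟩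
        · exact absurd ((hGblocks bb hbbBF).1 hyb) (habcGU y hyabc)
        · rcases Finset.mem_union.mp (hBtsub k bb hbbk hxb) with hh | hh
          · exact (hgroupu x k i hh hxGi) ▸ hbbk
          · exact absurd hh (hGnotabc x hxGU)
    · rcases Finset.mem_union.mp hy with hyGU | hyabc
      · obtain ⟨j, -, hyGj⟩ := Finset.mem_biUnion.mp hyGU
        apply sameCase j (Finset.mem_union_right _ hxabc) (Finset.mem_union_left _ hyGj)
        intro bb hbb hxb hyb
        rcases hmemB bb hbb with hbbBF | ⟨k, hbbk⟩
        · exact absurd ((hGblocks bb hbbBF).1 hxb) (habcGU x hxabc)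
        · rcases Finset.mem_union.mp (hBtsub k bb hbbk hyb) with hh | hh
          · exact (hgroupu y k j hh hyGj) ▸ hbbk
          · exact absurd hh (hGnotabc y hyGU)
      · refine ⟨abcF, ⟨hBtBbig ⟨0, by omega⟩ abcF (habcBt ⟨0, by omega⟩), hxabc, hyabc⟩, ?_⟩
        rintro bb' ⟨hbb', hxb', hyb'⟩
        rcases hmemB bb' hbb' with hbbBF | ⟨k, hbbk⟩
        · exact absurd ((hGblocks bb' hbbBF).1 hxb') (habcGU x hxabc)
        · obtain ⟨bb0, -, hu⟩ := (hSTSi k).2 x (Finset.mem_union_right _ hxabc)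
            y (Finset.mem_union_right _ hyabc) hxy
          exact (hu bb' ⟨hbbk, hxb', hyb'⟩).trans (hu abcF ⟨habcBt k, hxabc, hyabc⟩).symm
  -- uniqueness of the missing group of a frame class
  have hmissu : ∀ P ∈ RF, ∀ i j, IsParallelClassOn (GU \ G i) P →
      IsParallelClassOn (GU \ G j) P → i = j := by
    intro P _ i j hi hj
    have hXY : ∀ i j, IsParallelClassOn (GU \ G i) P → IsParallelClassOn (GU \ G j) P →
        GU \ G i ⊆ GU \ G j := by
      intro i j hi hj x hx
      obtain ⟨bb, ⟨hbb, hxbb⟩, -⟩ := hi.2 x hx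
      exact hj.1 bb hbb hxbb
    have heq : GU \ G i = GU \ G j := Finset.Subset.antisymm (hXY i j hi hj) (hXY j i hj hi)
    have hGij : G i = G j := by
      have h1 := Finset.sdiff_sdiff_eq_self (hGsub i)
      have h2 := Finset.sdiff_sdiff_eq_self (hGsub j)
      rw [← h1, ← h2, heq]
    by_contra hne
    obtain ⟨z, hz⟩ := Finset.card_pos.mp (show 0 < (G j).card by rw [hGcard j]; omega)
    exact Finset.disjoint_left.mp (hGdisj i j hne) (hGij ▸ hz) hz
  -- the partial class / template class matching
  let Scl : Fin n → Finset (Finset (Finset ℕ)) :=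
    fun i => RF.filter (fun P => IsParallelClassOn (GU \ G i) P)
  let Tcl : Fin n → Finset (Finset (Finset ℕ)) := fun i => (Rt i).erase (P0t i)
  have hcards : ∀ i, (Scl i).card = (Tcl i).card := by
    intro i
    have h1 : (Scl i).card = 12 := hcount0 i
    have h2 : (Tcl i).card = 12 := by
      show ((Rt i).erase (P0t i)).card = 12
      rw [Finset.card_erase_of_mem (hP0Rt i), hRtcard i]
    rw [h1, h2]
  let eqv : ∀ i, {P // P ∈ Scl i} ≃ {Q // Q ∈ Tcl i} := fun i => Finset.equivOfCardEq (hcards i)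
  have hSclRF : ∀ i, ∀ P ∈ Scl i, P ∈ RF ∧ IsParallelClassOn (GU \ G i) P := fun i P hP =>
    Finset.mem_filter.mp hP
  have hTcl : ∀ i P (hP : P ∈ Scl i),
      (eqv i ⟨P, hP⟩).1 ∈ Rt i ∧ (eqv i ⟨P, hP⟩).1 ≠ P0t i := by
    intro i P hP
    have h := (eqv i ⟨P, hP⟩).2
    exact ⟨Finset.mem_of_mem_erase h, Finset.ne_of_mem_erase h⟩
  let Cstar : Finset (Finset ℕ) :=
    insert abcF (Finset.univ.biUnion (fun i => (P0t i).erase abcF))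
  let Rbig : Finset (Finset (Finset ℕ)) := insert Cstar
    (Finset.univ.biUnion (fun i => (Scl i).attach.image (fun P => P.1 ∪ (eqv i P).1)))
  have hRbig_mem : ∀ C, C ∈ Rbig ↔ C = Cstar ∨
      ∃ i, ∃ P, ∃ hP : P ∈ Scl i, C = P ∪ (eqv i ⟨P, hP⟩).1 := by
    intro C
    show C ∈ insert Cstar _ ↔ _
    rw [Finset.mem_insert]
    apply or_congr Iff.rfl
    rw [Finset.mem_biUnion]
    constructor
    · rintro ⟨i, -, hC⟩
      obtain ⟨⟨P, hP⟩, -, rfl⟩ := Finset.mem_image.mp hC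
      exact ⟨i, P, hP, rfl⟩
    · rintro ⟨i, P, hP, rfl⟩
      exact ⟨i, Finset.mem_univ i, Finset.mem_image.mpr ⟨⟨P, hP⟩, Finset.mem_attach _ _, rfl⟩⟩
  have habc_class_unique : ∀ i, ∀ Q ∈ Rt i, abcF ∈ Q → Q = P0t i := by
    intro i Q hQ habq
    obtain ⟨Q0, -, hu⟩ := (hResi i).2 abcF (habcBt i)
    exact (hu Q ⟨hQ, habq⟩).trans (hu (P0t i) ⟨hP0Rt i, habcP0 i⟩).symm
  -- parallel class property of extended classes
  have hext_par : ∀ i P (hP : P ∈ Scl i), (P ∪ (eqv i ⟨P, hP⟩).1) ⊆ Bbig ∧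
      IsParallelClassOn Vbig (P ∪ (eqv i ⟨P, hP⟩).1) := by
    intro i P hP
    obtain ⟨hPRF, hPpar⟩ := hSclRF i P hP
    have hQRt := (hTcl i P hP).1
    obtain ⟨hQBt, hQpar⟩ := (hResi i).1 _ hQRt
    have hPsubBF : P ⊆ BF := (hRF1 P hPRF).1
    refine ⟨Finset.union_subset (hPsubBF.trans Finset.subset_union_left) (hQBt.trans
      (fun bb hbb => hBtBbig i bb hbb)), ?_, ?_⟩
    · intro bb hbb
      rcases Finset.mem_union.mp hbb with h1 | h1
      · exact (hPpar.1 bb h1).trans ((Finset.sdiff_subset).trans Finset.subset_union_left)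
      · exact (hQpar.1 bb h1).trans (Finset.union_subset_union (hGsub i) (Finset.Subset.refl _))
    · intro x hx
      have hxsplit : x ∈ GU \ G i ∨ x ∈ G i ∪ abcF := by
        rcases Finset.mem_union.mp hx with h1 | h1
        · by_cases hxi : x ∈ G i
          · exact Or.inr (Finset.mem_union_left _ hxi)
          · exact Or.inl (Finset.mem_sdiff.mpr ⟨h1, hxi⟩)
        · exact Or.inr (Finset.mem_union_right _ h1)
      rcases hxsplit with hx1 | hx1
      · obtain ⟨bb, ⟨hbb, hxbb⟩, hu⟩ := hPpar.2 x hx1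
        refine ⟨bb, ⟨Finset.mem_union_left _ hbb, hxbb⟩, ?_⟩
        rintro bb' ⟨hbb', hxbb'⟩
        rcases Finset.mem_union.mp hbb' with h1 | h1
        · exact hu bb' ⟨h1, hxbb'⟩
        · exfalso
          rcases Finset.mem_union.mp (hQpar.1 bb' h1 hxbb') with h2 | h2
          · exact (Finset.mem_sdiff.mp hx1).2 h2
          · exact hGnotabc x (Finset.mem_sdiff.mp hx1).1 h2
      · obtain ⟨bb, ⟨hbb, hxbb⟩, hu⟩ := hQpar.2 x hx1
        refine ⟨bb, ⟨Finset.mem_union_right _ hbb, hxbb⟩, ?_⟩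
        rintro bb' ⟨hbb', hxbb'⟩
        rcases Finset.mem_union.mp hbb' with h1 | h1
        · exfalso
          have hx2 := hPpar.1 bb' h1 hxbb'
          rcases Finset.mem_union.mp hx1 with h3 | h3
          · exact (Finset.mem_sdiff.mp hx2).2 h3
          · exact habcGU x h3 (Finset.mem_sdiff.mp hx2).1
        · exact hu bb' ⟨h1, hxbb'⟩
  -- parallel class property of Cstar
  have hCstar_par : Cstar ⊆ Bbig ∧ IsParallelClassOn Vbig Cstar := by
    refine ⟨?_, ?_, ?_⟩
    · intro bb hbb
      rcases Finset.mem_insert.mp hbb with rfl | hbb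
      · exact hBtBbig ⟨0, by omega⟩ _ (habcBt _)
      · obtain ⟨i, -, hbi⟩ := Finset.mem_biUnion.mp hbb
        exact hBtBbig i bb (((hResi i).1 _ (hP0Rt i)).1 (Finset.mem_of_mem_erase hbi))
    · intro bb hbb
      rcases Finset.mem_insert.mp hbb with rfl | hbb
      · exact fun z hz => Finset.mem_union_right _ hz
      · obtain ⟨i, -, hbi⟩ := Finset.mem_biUnion.mp hbb
        exact (((hResi i).1 _ (hP0Rt i)).2.1 bb (Finset.mem_of_mem_erase hbi)).trans
          (Finset.union_subset_union (hGsub i) (Finset.Subset.refl _))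
    · intro x hx
      rcases Finset.mem_union.mp hx with hxGU | hxabc
      · obtain ⟨i, -, hxGi⟩ := Finset.mem_biUnion.mp hxGU
        obtain ⟨bb, ⟨hbb, hxbb⟩, hu⟩ :=
          (((hResi i).1 _ (hP0Rt i)).2).2 x (Finset.mem_union_left _ hxGi)
        have hbbne : bb ≠ abcF := fun hh => hGnotabc x hxGU (hh ▸ hxbb)
        refine ⟨bb, ⟨Finset.mem_insert_of_mem (Finset.mem_biUnion.mpr
          ⟨i, Finset.mem_univ i, Finset.mem_erase.mpr ⟨hbbne, hbb⟩⟩), hxbb⟩, ?_⟩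
        rintro bb' ⟨hbb', hxbb'⟩
        rcases Finset.mem_insert.mp hbb' with rfl | hbb'
        · exact absurd hxbb' (hGnotabc x hxGU)
        · obtain ⟨j, -, hbj⟩ := Finset.mem_biUnion.mp hbb'
          have hbj' := Finset.mem_of_mem_erase hbj
          have hji : j = i := by
            have hsub := ((hResi j).1 _ (hP0Rt j)).2.1 bb' hbj'
            rcases Finset.mem_union.mp (hsub hxbb') with h2 | h2
            · exact hgroupu x j i h2 hxGi
            · exact absurd h2 (hGnotabc x hxGU)
          subst hji
          exact hu bb' ⟨hbj', hxbb'⟩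
      · refine ⟨abcF, ⟨Finset.mem_insert_self _ _, hxabc⟩, ?_⟩
        rintro bb' ⟨hbb', hxbb'⟩
        rcases Finset.mem_insert.mp hbb' with rfl | hbb'
        · rfl
        · exfalso
          obtain ⟨j, -, hbj⟩ := Finset.mem_biUnion.mp hbb'
          obtain ⟨bb0, -, hu⟩ :=
            (((hResi j).1 _ (hP0Rt j)).2).2 x (Finset.mem_union_right _ hxabc)
          have h1 := hu bb' ⟨Finset.mem_of_mem_erase hbj, hxbb'⟩
          have h2 := hu abcF ⟨habcP0 j, hxabc⟩
          exact Finset.ne_of_mem_erase hbj (h1.trans h2.symm)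
  -- every block lies in a unique class of Rbig
  have hRes2 : ∀ bb ∈ Bbig, ∃! C, C ∈ Rbig ∧ bb ∈ C := by
    intro bb hbb
    rcases hmemB bb hbb with hbbBF | ⟨i, hbbi⟩
    · obtain ⟨P, ⟨hPRF, hbbP⟩, hu⟩ := hRF2 bb hbbBF
      obtain ⟨i, hPi⟩ := (hRF1 P hPRF).2
      have hPScl : P ∈ Scl i := Finset.mem_filter.mpr ⟨hPRF, hPi⟩
      refine ⟨P ∪ (eqv i ⟨P, hPScl⟩).1, ⟨(hRbig_mem _).mpr (Or.inr ⟨i, P, hPScl, rfl⟩),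
        Finset.mem_union_left _ hbbP⟩, ?_⟩
      rintro C ⟨hC, hbbC⟩
      rcases (hRbig_mem C).mp hC with rfl | ⟨j, P', hP', rfl⟩
      · exfalso
        rcases Finset.mem_insert.mp hbbC with rfl | hmem2
        · exact haGU ((hGblocks _ hbbBF).1 haabc)
        · obtain ⟨j, -, hbj⟩ := Finset.mem_biUnion.mp hmem2
          exact hBtBF j bb (((hResi j).1 _ (hP0Rt j)).1 (Finset.mem_of_mem_erase hbj)) hbbBF
      · rcases Finset.mem_union.mp hbbC with h1 | h1
        · have hP'f := Finset.mem_filter.mp hP'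
          have hPP : P' = P := hu P' ⟨hP'f.1, h1⟩
          subst hPP
          have hji : j = i := hmissu P' hP'f.1 j i hP'f.2 hPi
          subst hji
          exact congrArg (fun s : {P // P ∈ Scl j} => s.1 ∪ (eqv j s).1)
            (Subtype.ext rfl)
        · exact absurd hbbBF
            (hBtBF j bb (((hResi j).1 _ (hTcl j P' hP').1).1 h1))
    · by_cases habq : bb = abcF
      · subst habq
        refine ⟨Cstar, ⟨(hRbig_mem Cstar).mpr (Or.inl rfl), Finset.mem_insert_self _ _⟩, ?_⟩
        rintro C ⟨hC, hbbC⟩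
        rcases (hRbig_mem C).mp hC with rfl | ⟨j, P', hP', rfl⟩
        · rfl
        · exfalso
          rcases Finset.mem_union.mp hbbC with h1 | h1
          · exact haGU ((hGblocks _ ((hRF1 P' (Finset.mem_filter.mp hP').1).1 h1)).1 haabc)
          · have hQ := hTcl j P' hP'
            exact hQ.2 (habc_class_unique j _ hQ.1 h1)
      · obtain ⟨Q, ⟨hQRt, hbbQ⟩, huQ⟩ := (hResi i).2 bb hbbi
        have hhome : ∀ j, bb ∈ Bt j → j = i := by
          intro j hbj
          by_contra hne
          exact habq (hBtBt j i hne bb hbj hbbi)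
        by_cases hQP0 : Q = P0t i
        · refine ⟨Cstar, ⟨(hRbig_mem Cstar).mpr (Or.inl rfl),
            Finset.mem_insert_of_mem (Finset.mem_biUnion.mpr ⟨i, Finset.mem_univ i,
              Finset.mem_erase.mpr ⟨habq, hQP0 ▸ hbbQ⟩⟩)⟩, ?_⟩
          rintro C ⟨hC, hbbC⟩
          rcases (hRbig_mem C).mp hC with rfl | ⟨j, P', hP', rfl⟩
          · rfl
          · exfalso
            rcases Finset.mem_union.mp hbbC with h1 | h1
            · exact hBtBF i bb hbbi ((hRF1 P' (Finset.mem_filter.mp hP').1).1 h1)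
            · have hQ2 := hTcl j P' hP'
              have hji : j = i := hhome j (((hResi j).1 _ hQ2.1).1 h1)
              subst hji
              exact hQ2.2 ((huQ _ ⟨hQ2.1, h1⟩).trans hQP0)
        · have hQT : Q ∈ Tcl i := Finset.mem_erase.mpr ⟨hQP0, hQRt⟩
          have hPval : (eqv i ((eqv i).symm ⟨Q, hQT⟩)).1 = Q := by
            rw [Equiv.apply_symm_apply]
          refine ⟨((eqv i).symm ⟨Q, hQT⟩).1 ∪
              (eqv i ⟨((eqv i).symm ⟨Q, hQT⟩).1, ((eqv i).symm ⟨Q, hQT⟩).2⟩).1,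
            ⟨(hRbig_mem _).mpr (Or.inr ⟨i, _, ((eqv i).symm ⟨Q, hQT⟩).2, rfl⟩),
              Finset.mem_union_right _ (by
                have : (eqv i ⟨((eqv i).symm ⟨Q, hQT⟩).1,
                    ((eqv i).symm ⟨Q, hQT⟩).2⟩).1 = Q := hPval
                rw [this]
                exact hbbQ)⟩, ?_⟩
          rintro C ⟨hC, hbbC⟩
          rcases (hRbig_mem C).mp hC with rfl | ⟨j, P', hP', rfl⟩
          · exfalso
            rcases Finset.mem_insert.mp hbbC with h1 | h1
            · exact habq h1
            · obtain ⟨j, -, hbj⟩ := Finset.mem_biUnion.mp h1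
              have hji : j = i :=
                hhome j (((hResi j).1 _ (hP0Rt j)).1 (Finset.mem_of_mem_erase hbj))
              subst hji
              exact hQP0 ((huQ _ ⟨hP0Rt j, Finset.mem_of_mem_erase hbj⟩).symm)
          · rcases Finset.mem_union.mp hbbC with h1 | h1
            · exact absurd ((hRF1 P' (Finset.mem_filter.mp hP').1).1 h1)
                (hBtBF i bb hbbi)
            · have hQ2 := hTcl j P' hP'
              have hji : j = i := hhome j (((hResi j).1 _ hQ2.1).1 h1)
              subst hji
              have hQeq : (eqv j ⟨P', hP'⟩).1 = Q := huQ _ ⟨hQ2.1, h1⟩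
              have hsubeq : (⟨P', hP'⟩ : {P // P ∈ Scl j}) = (eqv j).symm ⟨Q, hQT⟩ :=
                (eqv j).injective (Subtype.ext (hQeq.trans hPval.symm))
              exact congrArg (fun s : {P // P ∈ Scl j} => s.1 ∪ (eqv j s).1) hsubeq
  -- sub-design facts
  have hWgroupu : ∀ z (i j : Fin n), z ∈ W i → z ∈ W j → i = j := by
    intro z i j h1 h2
    by_contra hne
    exact Finset.disjoint_left.mp (hWdisj i j hne) h1 h2
  have hWUsub : Finset.univ.biUnion W ⊆ GU := by
    intro z hz
    obtain ⟨i, -, hzi⟩ := Finset.mem_biUnion.mp hz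
    exact hWsubGU i hzi
  have haWU : a ∉ Finset.univ.biUnion W := fun hh => haGU (hWUsub hh)
  have hAtsub : ∀ i, ∀ bb ∈ At i, bb ⊆ insert a (W i) := fun i bb hbb => ((hSTSA i).1 bb hbb).1
  have hAt3 : ∀ i, ∀ bb ∈ At i, bb.card = 3 := fun i bb hbb => ((hSTSA i).1 bb hbb).2
  have hmemA : ∀ bb, bb ∈ Abig → bb ∈ AF ∨ ∃ i, bb ∈ At i := by
    intro bb hbb
    rcases Finset.mem_union.mp hbb with h1 | h1
    · exact Or.inl h1
    · obtain ⟨i, -, hi⟩ := Finset.mem_biUnion.mp h1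
      exact Or.inr ⟨i, hi⟩
  have hAtAbig : ∀ i, ∀ bb ∈ At i, bb ∈ Abig := fun i bb hbb =>
    Finset.mem_union_right _ (Finset.mem_biUnion.mpr ⟨i, Finset.mem_univ i, hbb⟩)
  have hAFnota : ∀ bb ∈ AF, a ∉ bb := fun bb hbb hh => haGU (hWUsub ((hWblocks bb hbb).1 hh))
  have hWnota : ∀ (i : Fin n) z, z ∈ W i → z ≠ a := fun i z hz hh =>
    haGU (hWsubGU i (hh ▸ hz))
  have hApairs : ∀ x ∈ Ubig, ∀ y ∈ Ubig, x ≠ y → ∃! bb, bb ∈ Abig ∧ x ∈ bb ∧ y ∈ bb := by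
    intro x hx y hy hxy
    have hUmem : ∀ z, z ∈ Ubig → z = a ∨ ∃ i, z ∈ W i := by
      intro z hz
      rcases Finset.mem_insert.mp hz with rfl | hz
      · exact Or.inl rfl
      · obtain ⟨i, -, hzi⟩ := Finset.mem_biUnion.mp hz
        exact Or.inr ⟨i, hzi⟩
    have sameCase : ∀ i, x ∈ insert a (W i) → y ∈ insert a (W i) →
        (∀ bb ∈ Abig, x ∈ bb → y ∈ bb → bb ∈ At i) →
        ∃! bb, bb ∈ Abig ∧ x ∈ bb ∧ y ∈ bb := by
      intro i hxi hyi hloc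
      obtain ⟨bb, ⟨hbb, hxb, hyb⟩, hu⟩ := (hSTSA i).2 x hxi y hyi hxy
      refine ⟨bb, ⟨hAtAbig i bb hbb, hxb, hyb⟩, ?_⟩
      rintro bb' ⟨hbb', hxb', hyb'⟩
      exact hu bb' ⟨hloc bb' hbb' hxb' hyb', hxb', hyb'⟩
    have hatk : ∀ (k : Fin n) (z : ℕ) bb, z ∈ bb → bb ∈ At k → z ≠ a → z ∈ W k := by
      intro k z bb hz hbb hza
      rcases Finset.mem_insert.mp (hAtsub k bb hbb hz) with h1 | h1
      · exact absurd h1 hza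
      · exact h1
    rcases hUmem x hx with rfl | ⟨i, hxi⟩
    · rcases hUmem y hy with rfl | ⟨j, hyj⟩
      · exact absurd rfl hxy
      · apply sameCase j (Finset.mem_insert_self _ _) (Finset.mem_insert_of_mem hyj)
        intro bb hbb hxb hyb
        rcases hmemA bb hbb with h1 | ⟨k, h1⟩
        · exact absurd hxb (hAFnota bb h1)
        · exact (hWgroupu y k j (hatk k y bb hyb h1 (hWnota j y hyj)) hyj) ▸ h1
    · rcases hUmem y hy with rfl | ⟨j, hyj⟩
      · apply sameCase i (Finset.mem_insert_of_mem hxi) (Finset.mem_insert_self _ _)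
        intro bb hbb hxb hyb
        rcases hmemA bb hbb with h1 | ⟨k, h1⟩
        · exact absurd hyb (hAFnota bb h1)
        · exact (hWgroupu x k i (hatk k x bb hxb h1 (hWnota i x hxi)) hxi) ▸ h1
      · by_cases hij : i = j
        · subst hij
          apply sameCase i (Finset.mem_insert_of_mem hxi) (Finset.mem_insert_of_mem hyj)
          intro bb hbb hxb hyb
          rcases hmemA bb hbb with h1 | ⟨k, h1⟩
          · exfalso
            have h3 := (hWblocks bb h1).2.2 i
            have hsub2 : ({x, y} : Finset ℕ) ⊆ bb ∩ W i := by
              intro z hz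
              rcases Finset.mem_insert.mp hz with rfl | hz
              · exact Finset.mem_inter.mpr ⟨hxb, hxi⟩
              · rw [Finset.mem_singleton] at hz
                subst hz
                exact Finset.mem_inter.mpr ⟨hyb, hyj⟩
            have hle2 := Finset.card_le_card hsub2
            rw [Finset.card_pair hxy] at hle2
            omega
          · exact (hWgroupu x k i (hatk k x bb hxb h1 (hWnota i x hxi)) hxi) ▸ h1
        · obtain ⟨bb, ⟨hbb, hxb, hyb⟩, hu⟩ := hWpairs x y ⟨i, j, hij, hxi, hyj⟩
          refine ⟨bb, ⟨Finset.mem_union_left _ hbb, hxb, hyb⟩, ?_⟩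
          rintro bb' ⟨hbb', hxb', hyb'⟩
          rcases hmemA bb' hbb' with h1 | ⟨k, h1⟩
          · exact hu bb' ⟨h1, hxb', hyb'⟩
          · exfalso
            exact hij ((hWgroupu x k i (hatk k x bb' hxb' h1 (hWnota i x hxi)) hxi).symm.trans
              (hWgroupu y k j (hatk k y bb' hyb' h1 (hWnota j y hyj)) hyj))
  -- cardinalities
  have hGUcard : GU.card = 24 * n := by
    rw [hGUdef, Finset.card_biUnion (fun i _ k _ hik => hGdisj i k hik),
      Finset.sum_congr rfl (fun i _ => hGcard i), Finset.sum_const, Finset.card_univ,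
      Fintype.card_fin, smul_eq_mul, Nat.mul_comm]
  have hWUcard : (Finset.univ.biUnion W).card = 12 * n := by
    rw [Finset.card_biUnion (fun i _ k _ hik => hWdisj i k hik),
      Finset.sum_congr rfl (fun i _ => hWcard i), Finset.sum_const, Finset.card_univ,
      Fintype.card_fin, smul_eq_mul, Nat.mul_comm]
  have hVcard : Vbig.card = 24 * n + 3 := by
    show (GU ∪ abcF).card = 24 * n + 3
    rw [Finset.card_union_of_disjoint
      (Finset.disjoint_left.mpr fun {z} hz hzz => habcGU z hzz hz), hGUcard, habc_card]
  have hUcard : Ubig.card = 12 * n + 1 := by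
    show (insert a (Finset.univ.biUnion W)).card = 12 * n + 1
    rw [Finset.card_insert_of_notMem haWU, hWUcard]
  -- final assembly
  refine ⟨Vbig, Ubig, Bbig, Abig, ⟨⟨?_, hpairs⟩, Rbig, ?_, hRes2⟩, ⟨?_, hApairs⟩,
    ?_, ?_, hVcard, hUcard⟩
  · intro bb hbb
    rcases hmemB bb hbb with h1 | ⟨i, h1⟩
    · exact ⟨((hGblocks bb h1).1).trans Finset.subset_union_left, (hGblocks bb h1).2.1⟩
    · exact ⟨(hBtsub i bb h1).trans
        (Finset.union_subset_union (hGsub i) (Finset.Subset.refl _)), hBt3 i bb h1⟩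
  · intro C hC
    rcases (hRbig_mem C).mp hC with rfl | ⟨i, P, hP, rfl⟩
    · exact hCstar_par
    · exact hext_par i P hP
  · intro bb hbb
    rcases hmemA bb hbb with h1 | ⟨i, h1⟩
    · exact ⟨((hWblocks bb h1).1).trans (Finset.subset_insert _ _), (hWblocks bb h1).2.1⟩
    · exact ⟨(hAtsub i bb h1).trans (Finset.insert_subset_insert _
        (Finset.subset_biUnion_of_mem W (Finset.mem_univ i))), hAt3 i bb h1⟩
  · intro z hz
    rcases Finset.mem_insert.mp hz with rfl | hz
    · exact Finset.mem_union_right _ haabc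
    · exact Finset.mem_union_left _ (hWUsub hz)
  · intro bb hbb
    rcases Finset.mem_union.mp hbb with h1 | h1
    · exact Finset.mem_union_left _ (hAB h1)
    · obtain ⟨i, -, hi⟩ := Finset.mem_biUnion.mp h1
      exact hBtBbig i bb (hAtBt i hi)

/-- If there exists a Kirkman frame of type (12;24)^n, then there exists a
KTS(24n+3) containing an STS(12n+1) as a subdesign. -/
theorem stmt11 (n : ℕ) (hn : 0 < n) (h : ExistsFrameSubGDD 12 24 n) :
    ExistsKTSSubSTS (24 * n + 3) (12 * n + 1) := by
  rcases Nat.lt_or_ge n 2 with h1 | h2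
  · have hn1 : n = 1 := by omega
    subst hn1
    have e1 : 24 * 1 + 3 = 27 := by norm_num
    have e2 : 12 * 1 + 1 = 13 := by norm_num
    rw [e1, e2]
    exact base_case
  · exact main2_s11 h2 h
end
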